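/- arXiv:1610.03709 — 11 statements merged into one kernel-verified Lean document; each statement's English description precedes it below -/
import Mathlib

section
/- Let E be a finite subgroup of the additive group (F, +) with |E| = p^r. Then the polynomial ∏_{c ∈ E} (X − c) ∈ F[X] has the form X^{p^r} + Σ_{i=0}^{r-1} e_i X^{p^i} for some e_0, …, e_{r-1} ∈ F; equivalently, for every k, if the coefficient of X^k in ∏_{c ∈ E} (X − c) is nonzero then k = p^i for some 0 ≤ i ≤ r. -/
/-!
Let `f = ∏_{c ∈ E} (X - c)`. Since `E` is a group, `f (X + c) = f X` for every `c ∈ E`. Hence the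
bivariate polynomial `f (Y + X) - f Y - f X`, viewed in `Y` over `F[X]`, has degree `< |E|` (the
leading terms cancel) and vanishes at the `|E|` points `Y = c ∈ E`; so it is zero and `f` is
additive. Comparing coefficients of `Y^i X^(k-i)` gives `C(k, i) f_k = 0` for `0 < i < k`, and
`f_0 = 0`; in characteristic `p`, an exponent `k > 0` with all these binomials divisible by `p` is
a power of `p` (Lucas).
-/

open Polynomial

namespace Polynomial

theorem hasseDeriv_map {R S : Type*} [Semiring R] [Semiring S] (g : R →+* S) (k : ℕ)
    (f : R[X]) : hasseDeriv k (f.map g) = (hasseDeriv k f).map g := by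
  ext n
  simp only [hasseDeriv_coeff, coeff_map, map_mul, map_natCast]

theorem coeff_taylor_X_map_C {R : Type*} [CommSemiring R] (f : R[X]) (k : ℕ) :
    (taylor X (f.map C)).coeff k = hasseDeriv k f := by
  rw [taylor_coeff, hasseDeriv_map, eval_map, eval₂_C_X]

/-- `f (Y + X) = f Y + f X` in `R[X][Y]`, where the inner variable `X` is the constant `C X`. -/
def IsAdditive {R : Type*} [CommSemiring R] (f : R[X]) : Prop :=
  taylor X (f.map C) = f.map C + C f

namespace IsAdditive

theorem hasseDeriv_eq {R : Type*} [CommSemiring R] {f : R[X]} (hf : f.IsAdditive) {i : ℕ}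
    (hi : i ≠ 0) : hasseDeriv i f = C (f.coeff i) := by
  rw [← coeff_taylor_X_map_C, hf, coeff_add, coeff_map, coeff_C, if_neg hi, add_zero]

theorem choose_mul_coeff_eq_zero {R : Type*} [CommSemiring R] {f : R[X]} (hf : f.IsAdditive)
    {i k : ℕ} (hi : 0 < i) (hik : i < k) : (k.choose i : R) * f.coeff k = 0 := by
  have h := congrArg (coeff · (k - i)) (hf.hasseDeriv_eq hi.ne')
  simpa only [hasseDeriv_coeff, Nat.sub_add_cancel hik.le, coeff_C,
    if_neg (Nat.sub_ne_zero_of_lt hik)] using h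

theorem coeff_zero {R : Type*} [CommRing R] {f : R[X]} (hf : f.IsAdditive) : f.coeff 0 = 0 := by
  have h := congrArg (coeff · 0) hf
  simpa only [coeff_taylor_X_map_C, hasseDeriv_zero, LinearMap.id_apply, coeff_add, coeff_map,
    coeff_C_zero, right_eq_add, C_eq_zero] using h

theorem exists_eq_pow_of_coeff_ne_zero {R : Type*} [CommRing R] [NoZeroDivisors R] {p : ℕ}
    [Fact p.Prime] [CharP R p] {f : R[X]} (hf : f.IsAdditive) {k : ℕ} (hk : f.coeff k ≠ 0) :
    ∃ t, k = p ^ t := by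
  have hk0 : 0 < k := Nat.pos_of_ne_zero fun h ↦ hk (h ▸ hf.coeff_zero)
  refine ⟨_, Choose.eq_pow_multiplicity_of_choose_modEq_zero_nat hk0 fun i hi ↦ ?_⟩
  rw [Finset.mem_Icc] at hi
  rw [← CharP.natCast_eq_natCast R, Nat.cast_zero]
  exact (mul_eq_zero.mp (hf.choose_mul_coeff_eq_zero (by omega) (by omega))).resolve_right hk

end IsAdditive

theorem eq_X_pow_add_sum_of_coeff_ne_zero {R : Type*} [Semiring R] {f : R[X]} {p r : ℕ}
    (hp : 1 < p) (htop : f.coeff (p ^ r) = 1) (h : ∀ k, f.coeff k ≠ 0 → ∃ i ≤ r, k = p ^ i) :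
    f = X ^ p ^ r + ∑ i ∈ Finset.range r, C (f.coeff (p ^ i)) * X ^ p ^ i := by
  have hsupp : f.support ⊆ (Finset.range (r + 1)).image (p ^ ·) := by
    intro k hk
    obtain ⟨i, hi, rfl⟩ := h k (mem_support_iff.mp hk)
    exact Finset.mem_image_of_mem _ (Finset.mem_range.mpr (Nat.lt_succ_of_le hi))
  conv_lhs => rw [as_sum_support_C_mul_X_pow f, Finset.sum_subset hsupp fun k _ hk ↦ by
    rw [notMem_support_iff.mp hk, C_0, zero_mul]]
  rw [Finset.sum_image fun a _ b _ h ↦ Nat.pow_right_injective hp h, Finset.sum_range_succ,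
    htop, C_1, one_mul, add_comm]

end Polynomial

namespace AddSubgroup

variable {R : Type*} [CommRing R] (E : AddSubgroup R) [Fintype E]

theorem taylor_nodal (c : E) :
    taylor (c : R) (Lagrange.nodal Finset.univ ((↑) : E → R)) =
      Lagrange.nodal Finset.univ ((↑) : E → R) := by
  rw [Lagrange.nodal_eq, taylor_apply, prod_comp]
  refine Fintype.prod_equiv (Equiv.subRight c) _ _ fun e ↦ ?_
  simp only [sub_comp, X_comp, C_comp, Equiv.subRight_apply, coe_sub, C_sub]
  ring

theorem isAdditive_nodal [IsDomain R] :
    (Lagrange.nodal Finset.univ ((↑) : E → R)).IsAdditive := by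
  set f := Lagrange.nodal Finset.univ ((↑) : E → R)
  have hcard : Fintype.card E ≠ 0 := Fintype.card_ne_zero
  have hf : IsMonicOfDegree f (Fintype.card E) :=
    ⟨Lagrange.natDegree_nodal, Lagrange.nodal_monic⟩
  have hfC : IsMonicOfDegree (f.map C) (Fintype.card E) :=
    ⟨by rw [natDegree_map_eq_of_injective C_injective, hf.natDegree_eq], hf.monic.map C⟩
  have hlhs : IsMonicOfDegree (taylor X (f.map C)) (Fintype.card E) := by
    simpa only [mul_one, taylor_apply] using hfC.comp one_ne_zero (isMonicOfDegree_X_add_one X)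
  have hrhs : IsMonicOfDegree (f.map C + C f) (Fintype.card E) :=
    hfC.add_right (by rw [natDegree_C]; omega)
  refine eq_of_degree_sub_lt_of_eval_index_eq (v := fun c : E ↦ C (c : R)) Finset.univ
    (fun a _ b _ h ↦ Subtype.ext (C_injective h)) ?_ fun c _ ↦ ?_
  · rw [Finset.card_univ]
    exact degree_le_natDegree.trans_lt (by exact_mod_cast hlhs.natDegree_sub_lt hcard hrhs)
  · rw [taylor_eval, eval_add, eval_map, eval_map, eval₂_hom, eval_C,
      Lagrange.eval_nodal_at_node (Finset.mem_univ c), C_0, zero_add, ← comp, add_comm,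
      ← taylor_apply, taylor_nodal]

end AddSubgroup

/-- If `E` is a finite subgroup of `(F, +)` with `|E| = p ^ r`, then
`∏_{c ∈ E} (X - c)` has the form `X^{p^r} + Σ_{i<r} e_i X^{p^i}`; equivalently every
index of a nonzero coefficient is a power `p ^ i` with `i ≤ r`. -/
theorem statement0 {F : Type*} [Field F] {p : ℕ} [Fact p.Prime] [CharP F p]
    (E : AddSubgroup F) [Fintype E] (r : ℕ) (hcard : Fintype.card E = p ^ r) :
    (∃ e : ℕ → F,
      ∏ c : E, (X - C (c : F)) =
        X ^ p ^ r + ∑ i ∈ Finset.range r, C (e i) * X ^ p ^ i) ∧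
    (∀ k : ℕ, (∏ c : E, (X - C (c : F))).coeff k ≠ 0 → ∃ i ≤ r, k = p ^ i) := by
  have hp : p.Prime := Fact.out
  simp only [← Lagrange.nodal_eq]
  set f := Lagrange.nodal Finset.univ ((↑) : E → F)
  have hf : IsMonicOfDegree f (p ^ r) :=
    hcard ▸ ⟨Lagrange.natDegree_nodal, Lagrange.nodal_monic⟩
  have hpow : ∀ k, f.coeff k ≠ 0 → ∃ i ≤ r, k = p ^ i := by
    intro k hk
    obtain ⟨i, rfl⟩ := E.isAdditive_nodal.exists_eq_pow_of_coeff_ne_zero hk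
    have hle : p ^ i ≤ p ^ r := hf.natDegree_eq ▸ le_natDegree_of_ne_zero hk
    exact ⟨i, (Nat.pow_le_pow_iff_right hp.one_lt).mp hle, rfl⟩
  have htop : f.coeff (p ^ r) = 1 := hf.natDegree_eq ▸ hf.monic.coeff_natDegree
  exact ⟨⟨_, eq_X_pow_add_sum_of_coeff_ne_zero hp.one_lt htop hpow⟩, hpow⟩
end

section
/- Let E be a nonzero finite subgroup of the additive group (F, +). Set L := {α ∈ F^× : α•E = E} ∪ {0}. Then: (1) L is a subfield of F; (2) |L| ≤ |E| (in particular L is finite); (3) E is closed under multiplication by elements of L, so E is an L-vector space; and (4) for every subfield K of F, E is closed under multiplication by elements of K if and only if K ⊆ L. -/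
open Pointwise

/-- For a nonzero finite subgroup `E` of `(F,+)`, the set
`L = {α ∈ Fˣ | α • E = E} ∪ {0}` is a subfield of `F`, `|L| ≤ |E|`,
`E` is closed under multiplication by `L` (so is an `L`-vector space), and
a subfield `K` satisfies `K • E ⊆ E` iff `K ⊆ L`. -/
theorem statement1 {F : Type*} [Field F] {p : ℕ} [Fact p.Prime] [CharP F p]
    (E : AddSubgroup F) [Fintype E] (hE : E ≠ ⊥)
    (L : Set F)
    (hL : L = {α : F | α ≠ 0 ∧ α • (E : Set F) = (E : Set F)} ∪ {0}) :
    (∃ K : Subfield F, (K : Set F) = L) ∧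
    L.Finite ∧
    Nat.card L ≤ Nat.card E ∧
    (∀ α ∈ L, ∀ c ∈ E, α * c ∈ E) ∧
    (∀ K : Subfield F, (∀ k ∈ K, ∀ c ∈ E, k * c ∈ E) ↔ (K : Set F) ⊆ L) := by
  classical
  have hEfin : (E : Set F).Finite := Set.toFinite _
  -- key characterization of L as the full multiplicative stabilizer
  have key : ∀ α : F, α ∈ L ↔ ∀ c ∈ E, α * c ∈ E := by
    intro α
    constructor
    · intro hα c hc
      rw [hL] at hα
      rcases hα with h | h
      · have hm : α * c ∈ α • (E : Set F) := by
          simpa [smul_eq_mul] using Set.smul_mem_smul_set (a := α) hc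
        rw [h.2] at hm
        exact hm
      · simp only [Set.mem_singleton_iff] at h
        subst h
        simpa using E.zero_mem
    · intro h
      rw [hL]
      by_cases h0 : α = 0
      · right; simp [h0]
      · left
        refine ⟨h0, ?_⟩
        have hsub : α • (E : Set F) ⊆ (E : Set F) := by
          rintro x ⟨c, hc, rfl⟩
          simpa [smul_eq_mul] using h c hc
        have himg : α • (E : Set F) = (fun x => α * x) '' (E : Set F) := by
          ext x
          simp [Set.mem_smul_set, smul_eq_mul]
        have hcard : (E : Set F).ncard ≤ (α • (E : Set F)).ncard := by
          rw [himg, Set.ncard_image_of_injective _ (mul_right_injective₀ h0)]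
        exact Set.eq_of_subset_of_ncard_le hsub hcard hEfin
  -- the stabilizer subfield
  have hinv : ∀ x : F, (∀ c ∈ E, x * c ∈ E) → ∀ c ∈ E, x⁻¹ * c ∈ E := by
    intro x hx c hc
    by_cases h0 : x = 0
    · subst h0
      simpa using E.zero_mem
    · have hxL : x ∈ L := (key x).mpr hx
      rw [hL] at hxL
      rcases hxL with h | h
      · have : c ∈ x • (E : Set F) := by rw [h.2]; exact hc
        rcases this with ⟨d, hd, hdc⟩
        have : x⁻¹ * c = d := by
          simp only [← hdc, smul_eq_mul]
          rw [← mul_assoc, inv_mul_cancel₀ h0, one_mul]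
        rw [this]; exact hd
      · simp only [Set.mem_singleton_iff] at h; exact absurd h h0
  set K₀ : Subfield F :=
    { carrier := {α : F | ∀ c ∈ E, α * c ∈ E}
      mul_mem' := fun {a b} ha hb c hc => by
        rw [mul_assoc]; exact ha _ (hb c hc)
      one_mem' := fun c hc => by simpa using hc
      add_mem' := fun {a b} ha hb c hc => by
        rw [add_mul]; exact E.add_mem (ha c hc) (hb c hc)
      zero_mem' := fun c hc => by simpa using E.zero_mem
      neg_mem' := fun {a} ha c hc => by
        rw [neg_mul]; exact E.neg_mem (ha c hc)
      inv_mem' := fun x hx => hinv x hx } with hK₀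
  have hLset : (K₀ : Set F) = L := by
    ext α
    simpa [hK₀] using (key α).symm
  -- a nonzero element of E
  obtain ⟨e, he⟩ := AddSubgroup.ne_bot_iff_exists_ne_zero.mp hE
  -- injection L → E
  let f : L → E := fun α => ⟨(α : F) * (e : F), (key α).mp α.2 e e.2⟩
  have hf : Function.Injective f := by
    intro a b hab
    have hab' : (a : F) * (e : F) = (b : F) * (e : F) := congrArg Subtype.val hab
    have hene : (e : F) ≠ 0 := fun h => he (Subtype.ext h)
    exact Subtype.ext (mul_right_cancel₀ hene hab')
  have hfinL : Finite L := Finite.of_injective f hf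
  refine ⟨⟨K₀, hLset⟩, L.toFinite, Nat.card_le_card_of_injective f hf,
    fun α hα => (key α).mp hα, fun K => ⟨?_, ?_⟩⟩
  · intro h x hx
    exact (key x).mpr (h x hx)
  · intro h k hk c hc
    exact (key k).mp (h hk) c hc
end

section
/- Suppose K ⊆ F is a subfield with q = p^s elements and E is a finite subgroup of (F, +) of rank r = ms for some positive integer m. Then E is a K-subspace of F (i.e., kc ∈ E for all k ∈ K and c ∈ E) if and only if d_{i,r}(E) = 0 for every i with 1 ≤ i ≤ r − 1 that is not divisible by s. -/
open Polynomial

/-- `dCoef p r i E` is the Dickson-type coefficient `d_{i,r}(E)`: the coefficient of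
`X ^ (p ^ (r - i))` in `∏_{c ∈ E} (X - c)`. -/
noncomputable def dCoef {F : Type*} [Field F] (p r i : ℕ)
    (E : AddSubgroup F) [Fintype E] : F :=
  (∏ c : E, (X - C (c : F))).coeff (p ^ (r - i))

section Aux

variable {F : Type*} [Field F]


lemma evalMem (E : AddSubgroup F) [Fintype E] (x : F) :
    (∏ c : E, (X - C (c : F))).eval x = 0 ↔ x ∈ E := by
  rw [eval_prod]; simp only [eval_sub, eval_X, eval_C]
  rw [Finset.prod_eq_zero_iff]
  constructor
  · rintro ⟨c, -, hc⟩
    have : x = (c : F) := by linear_combination hc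
    exact this ▸ c.2
  · intro hx; exact ⟨⟨x, hx⟩, Finset.mem_univ _, by simp⟩

lemma monicE (E : AddSubgroup F) [Fintype E] : (∏ c : E, (X - C (c : F))).Monic :=
  monic_prod_of_monic _ _ fun _ _ => monic_X_sub_C _

lemma natDegE (E : AddSubgroup F) [Fintype E] :
    (∏ c : E, (X - C (c : F))).natDegree = Fintype.card E := by
  rw [natDegree_prod _ _ (fun c _ => X_sub_C_ne_zero _)]
  simp [Finset.card_univ]

lemma transE (E : AddSubgroup F) [Fintype E] {a : F} (ha : a ∈ E) :
    (∏ c : E, (X - C (c : F))).comp (X + C a) = ∏ c : E, (X - C (c : F)) := by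
  rw [prod_comp]
  have h1 : ∀ c : E, (X - C (c : F)).comp (X + C a) = X - C (((c - ⟨a, ha⟩ : E) : F)) := by
    intro c
    simp only [sub_comp, X_comp, C_comp, AddSubgroup.coe_sub]
    rw [C_sub]; ring
  calc (∏ c : E, (X - C (c : F)).comp (X + C a))
      = ∏ c : E, (X - C (((c - ⟨a, ha⟩ : E) : F))) := Finset.prod_congr rfl fun c _ => h1 c
    _ = ∏ c : E, (X - C (c : F)) :=
        Fintype.prod_equiv (Equiv.subRight (⟨a, ha⟩ : E)) _ _ (fun c => rfl)

lemma addIdent (E : AddSubgroup F) [Fintype E] :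
    ((∏ c : E, (X - C (c : F))).map (C : F →+* F[X])).comp (X + C (X : F[X]))
      = (∏ c : E, (X - C (c : F))).map (C : F →+* F[X])
        + C (∏ c : E, (X - C (c : F))) := by
  set f : F[X] := ∏ c : E, (X - C (c : F)) with hf
  set N := Fintype.card E with hN
  have hNpos : 0 < N := Fintype.card_pos
  have hfm : f.Monic := monicE E
  have hfd : f.natDegree = N := natDegE E
  set fm : (F[X])[X] := f.map (C : F →+* F[X]) with hfm'
  have hfmm : fm.Monic := hfm.map _
  have hfmd : fm.natDegree = N := by
    rw [hfm', natDegree_map_eq_of_injective (C_injective) f, hfd]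
  set P : (F[X])[X] := fm.comp (X + C (X : F[X])) with hP
  have hPm : P.Monic := hfmm.comp_X_add_C _
  have hPd : P.natDegree = N := by
    rw [hP, natDegree_comp, natDegree_X_add_C, mul_one, hfmd]
  set h : (F[X])[X] := P - fm - C f with hh
  suffices hz : h = 0 by
    have h2 : P - fm - C f = 0 := hz
    linear_combination (norm := ring_nf) h2
  have hdeg : h.natDegree < N := by
    by_cases h0 : h = 0
    · rw [h0]; simpa using hNpos
    rw [natDegree_lt_iff_degree_lt h0]
    have hdP : P.degree = (N : WithBot ℕ) := by rw [degree_eq_natDegree hPm.ne_zero, hPd]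
    have hdfm : fm.degree = (N : WithBot ℕ) := by rw [degree_eq_natDegree hfmm.ne_zero, hfmd]
    have hsub : (P - fm).degree < (N : WithBot ℕ) := by
      have := degree_sub_lt (p := P) (q := fm) (by rw [hdP, hdfm]) hPm.ne_zero
        (by rw [Monic.leadingCoeff hPm, Monic.leadingCoeff hfmm])
      rwa [hdP] at this
    have hCf : (C f : (F[X])[X]).degree < (N : WithBot ℕ) :=
      lt_of_le_of_lt (degree_C_le) (by exact_mod_cast WithBot.coe_lt_coe.mpr hNpos)
    calc h.degree = ((P - fm) - C f).degree := rfl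
      _ ≤ max (P - fm).degree (C f).degree := degree_sub_le _ _
      _ < (N : WithBot ℕ) := max_lt hsub hCf
  apply eq_zero_of_natDegree_lt_card_of_eval_eq_zero h
    (f := fun a : E => (C (a : F) : F[X]))
    (fun a b hab => Subtype.ext (C_injective hab))
  · intro a
    have h1 : P.eval (C (a : F)) = f := by
      rw [hP, eval_comp]
      simp only [eval_add, eval_X, eval_C]
      have : fm.eval (C (a : F) + X) = f.comp (X + C (a : F)) := by
        rw [hfm', eval_map, comp, add_comm]
      rw [this, transE E a.2]
    have h2 : fm.eval (C (a : F)) = 0 := by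
      rw [hfm', eval_map, eval₂_at_apply, (evalMem E (a : F)).mpr a.2, map_zero]
    rw [hh, eval_sub, eval_sub, h1, h2, eval_C, sub_zero, sub_self]
  · exact hdeg


lemma coeff_mul_choose (E : AddSubgroup F) [Fintype E] {n j : ℕ} (hj : 0 < j) (hjn : j < n) :
    (∏ c : E, (X - C (c : F))).coeff n * (n.choose j : F) = 0 := by
  set f : F[X] := ∏ c : E, (X - C (c : F)) with hf
  by_cases hns : f.coeff n = 0
  · rw [hns, zero_mul]
  have hmem : n ∈ (f.map (C : F →+* F[X])).support := by
    rw [mem_support_iff, coeff_map]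
    simpa using fun h => hns (C_injective (by simpa using h))
  have key := addIdent E
  have h2 := congrArg (fun q : (F[X])[X] => (q.coeff j).coeff (n - j)) key
  simp only [← hf] at h2
  have hR : (((f.map (C : F →+* F[X])) + C f).coeff j).coeff (n - j) = 0 := by
    rw [coeff_add, coeff_map, coeff_C, if_neg hj.ne', add_zero, coeff_C,
      if_neg (Nat.sub_ne_zero_of_lt hjn)]
  have hL : ((((f.map (C : F →+* F[X]))).comp (X + C (X : F[X]))).coeff j).coeff (n - j)
      = f.coeff n * (n.choose j : F) := by
    rw [comp_eq_sum_left, Polynomial.sum_def, finset_sum_coeff, finset_sum_coeff]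
    rw [Finset.sum_eq_single n]
    · rw [coeff_map, coeff_C_mul, coeff_X_add_C_pow, coeff_C_mul, ← C_eq_natCast,
        mul_comm ((X : F[X]) ^ (n - j)), coeff_C_mul, coeff_X_pow, if_pos rfl, mul_one]
    · intro e _ hen
      rw [coeff_map, coeff_C_mul, coeff_X_add_C_pow, coeff_C_mul, ← C_eq_natCast,
        mul_comm ((X : F[X]) ^ (e - j)), coeff_C_mul, coeff_X_pow]
      rcases lt_or_ge e j with h | h
      · rw [Nat.choose_eq_zero_of_lt h]
        simp
      · rw [if_neg, mul_zero, mul_zero]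
        intro hEq
        exact hen (by omega)
    · intro hns'
      exact absurd hmem hns'
  rw [hL, hR] at h2
  exact h2


lemma coeff_ppow {p : ℕ} [Fact p.Prime] [CharP F p] (E : AddSubgroup F) [Fintype E] {n : ℕ}
    (hn0 : n ≠ 0) (h : (∏ c : E, (X - C (c : F))).coeff n ≠ 0) : ∃ k, n = p ^ k := by
  have hp : p.Prime := Fact.out
  obtain ⟨k, a, hna, hpa⟩ : ∃ k a, p ^ k * a = n ∧ ¬ p ∣ a :=
    ⟨n.factorization p, n / p ^ n.factorization p,
      Nat.ordProj_mul_ordCompl_eq_self n p, Nat.not_dvd_ordCompl hp hn0⟩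
  have hane : a ≠ 0 := by rintro rfl; rw [mul_zero] at hna; exact hn0 hna.symm
  rcases eq_or_lt_of_le (Nat.one_le_iff_ne_zero.mpr hane) with h1 | h2
  · exact ⟨k, by rw [← hna, ← h1, mul_one]⟩
  exfalso
  have hjpos : 0 < p ^ k := pow_pos hp.pos k
  have hjn : p ^ k < n := by
    have : p ^ k * 2 ≤ p ^ k * a := Nat.mul_le_mul_left _ h2
    omega
  have hcast : (n.choose (p ^ k) : F) = (a : F) := by
    have h3 : ((X + 1 : F[X]) ^ n).coeff (p ^ k) = (n.choose (p ^ k) : F) :=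
      coeff_X_add_one_pow F n (p ^ k)
    have h4 : ((X + 1 : F[X]) ^ n) = ((X : F[X]) ^ (p ^ k) + 1) ^ a := by
      rw [← hna, pow_mul, add_pow_char_pow, one_pow]
    have h5 : ((X : F[X]) ^ (p ^ k) + 1) ^ a = expand F (p ^ k) ((X + 1) ^ a) := by
      rw [map_pow, map_add, expand_X, map_one]
    rw [h4, h5, coeff_expand hjpos, if_pos dvd_rfl, Nat.div_self hjpos,
      coeff_X_add_one_pow] at h3
    rw [← h3, Nat.choose_one_right]
  have h6 := coeff_mul_choose E hjpos hjn
  rw [hcast] at h6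
  have hane' : (a : F) ≠ 0 := fun hc => hpa ((CharP.cast_eq_zero_iff F p a).mp hc)
  exact h ((mul_eq_zero.mp h6).resolve_right hane')

lemma coeff_zero_E (E : AddSubgroup F) [Fintype E] : (∏ c : E, (X - C (c : F))).coeff 0 = 0 := by
  rw [coeff_zero_eq_eval_zero, eval_prod, Finset.prod_eq_zero (Finset.mem_univ (⟨0, E.zero_mem⟩ : E))]
  simp


lemma coeff_comp_C_mul_X (f : F[X]) (k : F) (n : ℕ) :
    (f.comp (C k * X)).coeff n = k ^ n * f.coeff n := by
  rw [comp_eq_sum_left, Polynomial.sum_def, finset_sum_coeff]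
  by_cases hn : n ∈ f.support
  · rw [Finset.sum_eq_single n]
    · rw [mul_pow, ← C_pow, ← mul_assoc, ← C_mul, coeff_C_mul, coeff_X_pow, if_pos rfl,
        mul_one, mul_comm]
    · intro e _ hen
      rw [mul_pow, ← C_pow, ← mul_assoc, ← C_mul, coeff_C_mul, coeff_X_pow,
        if_neg (fun hc => hen hc.symm), mul_zero]
    · intro h; exact absurd hn h
  · rw [notMem_support_iff.mp hn, mul_zero]
    apply Finset.sum_eq_zero
    intro e he
    rw [mul_pow, ← C_pow, ← mul_assoc, ← C_mul, coeff_C_mul, coeff_X_pow]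
    rcases eq_or_ne n e with rfl | hne
    · exact absurd he hn
    · rw [if_neg hne, mul_zero]

lemma scaleIdent (E : AddSubgroup F) [Fintype E] {k : F} (hk : k ≠ 0)
    (hstab : ∀ c ∈ E, k * c ∈ E) :
    (∏ c : E, (X - C (c : F))).comp (C k * X)
      = C (k ^ Fintype.card E) * ∏ c : E, (X - C (c : F)) := by
  classical
  set e : E → E := fun c => ⟨k * c, hstab c c.2⟩ with he
  have hinj : Function.Injective e := by
    intro a b hab
    have : k * (a : F) = k * b := congrArg Subtype.val hab
    exact Subtype.ext (mul_left_cancel₀ hk this)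
  have hbij : Function.Bijective e := Finite.injective_iff_bijective.mp hinj
  let eq : E ≃ E := Equiv.ofBijective e hbij
  rw [prod_comp]
  have h1 : ∀ c : E, (X - C (c : F)).comp (C k * X) = C k * X - C (c : F) := by
    intro c; rw [sub_comp, X_comp, C_comp]
  calc (∏ c : E, (X - C (c : F)).comp (C k * X))
      = ∏ c : E, (C k * X - C (c : F)) := Finset.prod_congr rfl fun c _ => h1 c
    _ = ∏ c : E, (C k * X - C ((eq c : F))) :=
        (Fintype.prod_equiv eq _ _ (fun c => rfl)).symm
    _ = ∏ c : E, (C k * (X - C (c : F))) := by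
        refine Finset.prod_congr rfl fun c _ => ?_
        show C k * X - C (k * (c : F)) = _
        rw [C_mul]; ring
    _ = C (k ^ Fintype.card E) * ∏ c : E, (X - C (c : F)) := by
        rw [Finset.prod_mul_distrib, Finset.prod_const, Finset.card_univ, C_pow]

lemma pow_card_of_mem {p s : ℕ} [Fact p.Prime] (K : Subfield F) (hK : Nat.card K = p ^ s)
    {k : F} (hk : k ∈ K) : k ^ p ^ s = k := by
  have hp : p.Prime := Fact.out
  have hfin : Finite K := Nat.finite_of_card_ne_zero (by
    rw [hK]; exact pow_ne_zero _ hp.pos.ne')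
  have : Fintype K := Fintype.ofFinite K
  have hc : Fintype.card K = p ^ s := by rw [← Nat.card_eq_fintype_card, hK]
  have h1 := FiniteField.pow_card (⟨k, hk⟩ : K)
  rw [hc] at h1
  have := congrArg (Subtype.val) h1
  push_cast at this
  exact this

lemma pow_card_of_mem' {p s : ℕ} [Fact p.Prime] (K : Subfield F) (hK : Nat.card K = p ^ s)
    {k : F} (hk : k ∈ K) (a : ℕ) : k ^ p ^ (a * s) = k := by
  induction a with
  | zero => simp
  | succ a ih =>
    rw [Nat.succ_mul, pow_add, pow_mul, ih]
    exact pow_card_of_mem K hK hk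



lemma exists_not_fixed {p s t : ℕ} [Fact p.Prime] (K : Subfield F)
    (hK : Nat.card K = p ^ s) (ht : 0 < t) (hts : t < s) :
    ∃ k ∈ K, k ^ p ^ t ≠ k := by
  have hp : p.Prime := Fact.out
  by_contra hcon
  push_neg at hcon
  classical
  set g : F[X] := X ^ p ^ t - X with hg
  have h1 : 1 < p ^ t := Nat.one_lt_pow ht.ne' hp.one_lt
  have hdeg : g.natDegree = p ^ t := by
    rw [hg, natDegree_sub_eq_left_of_natDegree_lt (by rw [natDegree_X_pow, natDegree_X]; omega),
      natDegree_X_pow]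
  have hgne : g ≠ 0 := by
    intro h0
    rw [h0, natDegree_zero] at hdeg
    omega
  have hfin : Finite K := Nat.finite_of_card_ne_zero (by
    rw [hK]; exact pow_ne_zero _ hp.pos.ne')
  have : Fintype K := Fintype.ofFinite K
  have hc : Fintype.card K = p ^ s := by rw [← Nat.card_eq_fintype_card, hK]
  have hroot : ∀ k : K, g.eval (k : F) = 0 := by
    intro k
    rw [hg, eval_sub, eval_pow, eval_X, hcon (k : F) k.2, sub_self]
  set T := g.roots.toFinset with hT
  have hmem : ∀ k : K, (k : F) ∈ T := fun k =>
    Multiset.mem_toFinset.mpr (mem_roots'.mpr ⟨hgne, hroot k⟩)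
  have hinj : Function.Injective (fun k : K => (⟨(k : F), hmem k⟩ : T)) := by
    intro a b hab
    exact Subtype.ext (by simpa [Subtype.mk.injEq] using hab)
  have hle := Fintype.card_le_of_injective _ hinj
  rw [hc, Fintype.card_coe] at hle
  have h2 : T.card ≤ p ^ t := by
    calc T.card ≤ Multiset.card g.roots := Multiset.toFinset_card_le _
      _ ≤ g.natDegree := card_roots' g
      _ = p ^ t := hdeg
  have := pow_lt_pow_right₀ hp.one_lt hts
  omega

end Aux

/-- If `K ⊆ F` is a subfield with `p ^ s` elements and `E` is a finite
subgroup of rank `r = m * s`, then `E` is a `K`-subspace of `F` iff `d_{i,r}(E) = 0`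
for every `1 ≤ i ≤ r - 1` not divisible by `s`. -/
theorem statement2 {F : Type*} [Field F] {p : ℕ} [Fact p.Prime] [CharP F p]
    (K : Subfield F) (s : ℕ) (hK : Nat.card K = p ^ s)
    (E : AddSubgroup F) [Fintype E] (m r : ℕ) (hm : 0 < m) (hr : r = m * s)
    (hE : Fintype.card E = p ^ r) :
    (∀ k ∈ K, ∀ c ∈ E, k * c ∈ E) ↔
      ∀ i, 1 ≤ i → i ≤ r - 1 → ¬ s ∣ i → dCoef p r i E = 0 := by
  have hp : p.Prime := Fact.out
  set f : F[X] := ∏ c : E, (X - C (c : F)) with hf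
  have hs : s ≠ 0 := by
    rintro rfl
    rw [pow_zero] at hK
    have := (Nat.card_eq_one_iff_unique.mp hK).1
    exact false_of_nontrivial_of_subsingleton K
  have hNd : f.natDegree = p ^ r := by rw [hf, natDegE, hE]
  constructor
  · intro hstab i hi1 hi2 hisd
    have hrpos : 0 < r := by
      rw [hr]; exact Nat.mul_pos hm (Nat.pos_of_ne_zero hs)
    have hir : i < r := lt_of_le_of_lt hi2 (Nat.pred_lt hrpos.ne')
    have hsr : s ∣ r := ⟨m, by rw [hr, mul_comm]⟩
    set t := (r - i) % s with hts
    have htpos : 0 < t := by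
      rcases Nat.eq_zero_or_pos t with h0 | h
      · exfalso
        apply hisd
        have h1 : s ∣ (r - i) := Nat.dvd_of_mod_eq_zero h0
        have h2 := Nat.dvd_sub hsr h1
        rwa [Nat.sub_sub_self hir.le] at h2
      · exact h
    have htlt : t < s := Nat.mod_lt _ (Nat.pos_of_ne_zero hs)
    obtain ⟨k, hkK, hkne⟩ := exists_not_fixed K hK htpos htlt
    have hk0 : k ≠ 0 := by
      rintro rfl
      exact hkne (zero_pow (pow_ne_zero _ hp.pos.ne'))
    have hsc := scaleIdent E hk0 (fun c hc => hstab k hkK c hc)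
    have hco := congrArg (fun q => q.coeff (p ^ (r - i))) hsc
    simp only [← hf] at hco
    rw [coeff_comp_C_mul_X, coeff_C_mul, hE] at hco
    have hkr : k ^ (p ^ r) = k := by
      rw [hr]
      exact pow_card_of_mem' K hK hkK m
    have hkn : k ^ (p ^ (r - i)) = k ^ (p ^ t) := by
      have hdm : s * ((r - i) / s) + t = r - i := Nat.div_add_mod (r - i) s
      have h3 : k ^ (p ^ (s * ((r - i) / s))) = k := by
        rw [mul_comm]; exact pow_card_of_mem' K hK hkK _
      calc k ^ (p ^ (r - i)) = k ^ (p ^ (s * ((r - i) / s)) * p ^ t) := by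
            rw [← pow_add, hdm]
        _ = (k ^ (p ^ (s * ((r - i) / s)))) ^ (p ^ t) := by rw [pow_mul]
        _ = k ^ (p ^ t) := by rw [h3]
    rw [hkn, hkr] at hco
    simp only [dCoef, ← hf]
    by_contra hne
    exact hkne (mul_right_cancel₀ hne hco)
  · intro H k hkK c hcE
    rcases eq_or_ne k 0 with rfl | hk0
    · rw [zero_mul]; exact E.zero_mem
    rw [← evalMem E, ← hf]
    have hevc : f.eval c = 0 := by rw [hf]; exact (evalMem E c).mpr hcE
    rw [eval_eq_sum, Polynomial.sum_def]
    have hterm : ∀ nn ∈ f.support, f.coeff nn * (k * c) ^ nn = k * (f.coeff nn * c ^ nn) := by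
      intro nn hnn
      have hcn : f.coeff nn ≠ 0 := mem_support_iff.mp hnn
      have hnn0 : nn ≠ 0 := by
        rintro rfl
        rw [hf] at hcn
        exact hcn (coeff_zero_E E)
      obtain ⟨j, rfl⟩ : ∃ j, nn = p ^ j := by
        apply coeff_ppow E hnn0
        rw [← hf]; exact hcn
      have hjr : j ≤ r := by
        have h1 : p ^ j ≤ p ^ r := hNd ▸ le_natDegree_of_ne_zero hcn
        exact (Nat.pow_le_pow_iff_right hp.one_lt).mp h1
      have hsj : s ∣ j := by
        rcases eq_or_lt_of_le hjr with rfl | hlt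
        · exact ⟨m, by rw [hr, mul_comm]⟩
        · by_contra hnd
          have hj1 : j ≠ 0 := fun h0 => hnd (h0 ▸ dvd_zero s)
          have hnsd : ¬ s ∣ (r - j) := by
            intro hdvd
            apply hnd
            have h2 := Nat.dvd_sub (⟨m, by rw [hr, mul_comm]⟩ : s ∣ r) hdvd
            rwa [Nat.sub_sub_self hjr] at h2
          have hz := H (r - j) (by omega) (by omega) hnsd
          simp only [dCoef, ← hf, Nat.sub_sub_self hjr] at hz
          exact hcn hz
      obtain ⟨a, rfl⟩ := hsj
      have hkpow : k ^ p ^ (s * a) = k := by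
        rw [mul_comm s a]
        exact pow_card_of_mem' K hK hkK a
      rw [mul_pow, hkpow]
      ring
    rw [Finset.sum_congr rfl hterm, ← Finset.mul_sum]
    have hsum : ∑ i ∈ f.support, f.coeff i * c ^ i = f.eval c := by
      rw [eval_eq_sum, Polynomial.sum_def]
    rw [hsum, hevc, mul_zero]
end

section
/- Let s > 1 be an integer and V a finite subgroup of (F, +) of rank s + 1. Then the following are equivalent: (a) there exist α ∈ F^× and a subfield K ⊆ F with p^s elements such that α•K ⊆ V (i.e., the partition of V is (s,1)); (b) d_{i,s+1}(V) = 0 for all i with 1 < i < s, and d_{1,s+1}(V)^p · d_{s,s+1}(V) = d_{s+1,s+1}(V)^p. -/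
/-
Write `F_E = ∏_{c ∈ E} (X - c)`. Each `F_E` is an `F`-combination of the monomials `X ^ p ^ k`
(induct on `|E|`), so it is additive, and for `W ≤ V` the map `F_W` sends `V` onto a subgroup
`V'` of order `|V| / |W|` with `F_V = F_{V'} ∘ F_W`.

If `α • K ≤ V` with `|K| = p ^ s`, then `F_{α • K} = X ^ p ^ s - A X` with `A = α ^ (p ^ s - 1)`
and `V'` has order `p`, so `F_V = (X ^ p + d X) ∘ (X ^ p ^ s - A X)`; expanding gives (b).
Conversely, under (b) the additive polynomial `F_V` has only the four monomials of this
composite, and it factors in this way with `A = -d_{s+1,s+1} / d_{1,s+1}`. Then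
`g = X ^ p ^ s - A X` maps `V` into the at most `p` roots of `X ^ p + d X`, so at least `p ^ s`
of the at most `p ^ s` roots of `g` lie in `V`. For a nonzero root `α`, these roots are `α • K`,
where `K` is the field of fixed points of the `s`-th power of Frobenius.
-/

open Polynomial

instance AddSubgroup.finite_map {G H : Type*} [AddGroup G] [AddGroup H] (V : AddSubgroup G)
    [Finite V] (φ : G →+ H) : Finite (V.map φ) := by
  rw [← SetLike.coe_sort_coe, AddSubgroup.coe_map]
  infer_instance

lemma AddSubgroup.card_ker_inf_mul_card_map {G H : Type*} [AddGroup G] [AddGroup H]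
    (φ : G →+ H) (V : AddSubgroup G) :
    Nat.card (φ.ker ⊓ V : AddSubgroup G) * Nat.card (V.map φ) = Nat.card V := by
  have := AddSubgroup.relIndex_mul_relIndex ⊥ (φ.ker ⊓ V) V bot_le inf_le_right
  rwa [AddSubgroup.relIndex_bot_left, AddSubgroup.relIndex_bot_left,
    AddSubgroup.inf_relIndex_right, AddSubgroup.relIndex_ker] at this

namespace Polynomial

variable {F : Type*} [Field F]

lemma isMonicOfDegree_X_pow_sub_C_mul_X {q : ℕ} (hq : 1 < q) (c : F) :
    IsMonicOfDegree (X ^ q - C c * X) q :=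
  (isMonicOfDegree_X_pow F q).sub ((natDegree_C_mul_le c X).trans_lt (by rwa [natDegree_X]))

lemma finite_and_card_le_natDegree {P : F[X]} (hP : P ≠ 0) {S : Set F}
    (hS : ∀ x ∈ S, P.eval x = 0) : S.Finite ∧ Nat.card S ≤ P.natDegree := by
  classical
  have hsub : S ⊆ P.roots.toFinset := fun x hx => by simp [hP, hS x hx]
  refine ⟨P.roots.toFinset.finite_toSet.subset hsub, ?_⟩
  calc Nat.card S ≤ Nat.card (P.roots.toFinset : Set F) :=
        Nat.card_mono P.roots.toFinset.finite_toSet hsub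
    _ = P.roots.toFinset.card := Nat.card_coe_set_eq _ |>.trans (Set.ncard_coe_finset _)
    _ ≤ Multiset.card P.roots := Multiset.toFinset_card_le _
    _ ≤ P.natDegree := card_roots' P

variable (p : ℕ)

noncomputable def additivePolynomials : Submodule F F[X] :=
  Submodule.span F (Set.range fun k : ℕ => (X ^ p ^ k : F[X]))

variable {p}

lemma X_pow_mem_additivePolynomials (k : ℕ) : (X ^ p ^ k : F[X]) ∈ additivePolynomials p :=
  Submodule.subset_span ⟨k, rfl⟩

lemma X_pow_sub_C_mul_X_mem_additivePolynomials (n : ℕ) (c : F) :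
    X ^ p ^ n - C c * X ∈ additivePolynomials p := by
  refine Submodule.sub_mem _ (X_pow_mem_additivePolynomials n) ?_
  rw [← smul_eq_C_mul, ← pow_one X, ← pow_zero p]
  exact Submodule.smul_mem _ c (X_pow_mem_additivePolynomials 0)

lemma coeff_eq_zero_of_mem_additivePolynomials {P : F[X]} (hP : P ∈ additivePolynomials p)
    {n : ℕ} (hn : ∀ k, n ≠ p ^ k) : P.coeff n = 0 := by
  refine (Submodule.span_le (p := LinearMap.ker (lcoeff F n))).mpr ?_ hP
  rintro _ ⟨k, rfl⟩
  simp [coeff_X_pow, hn k]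

lemma eq_sum_of_mem_additivePolynomials (hp : 1 < p) {P : F[X]}
    (hP : P ∈ additivePolynomials p) {r : ℕ} (hdeg : P.natDegree ≤ p ^ r) :
    P = ∑ k ∈ Finset.range (r + 1), C (P.coeff (p ^ k)) * X ^ p ^ k := by
  ext n
  simp only [finsetSum_coeff, coeff_C_mul, coeff_X_pow, mul_ite, mul_one, mul_zero]
  by_cases hn : ∃ k, n = p ^ k
  · obtain ⟨k, rfl⟩ := hn
    simp only [Nat.pow_right_inj hp, Finset.sum_ite_eq, Finset.mem_range]
    split_ifs with hk
    · rfl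
    · exact coeff_eq_zero_of_natDegree_lt (hdeg.trans_lt (Nat.pow_lt_pow_right hp (by omega)))
  · simp only [not_exists] at hn
    simp [hn, coeff_eq_zero_of_mem_additivePolynomials hP hn]

lemma eq_of_coeff_pow_eq_zero_of_mem_additivePolynomials (hp : 1 < p) {P : F[X]}
    (hP : P ∈ additivePolynomials p) {t : ℕ} (hdeg : IsMonicOfDegree P (p ^ (t + 3)))
    (hmid : ∀ k, 2 ≤ k → k ≤ t + 1 → P.coeff (p ^ k) = 0) :
    P = X ^ p ^ (t + 3) + C (P.coeff (p ^ (t + 2))) * X ^ p ^ (t + 2) + C (P.coeff p) * X ^ p +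
      C (P.coeff 1) * X := by
  have hlead : P.coeff (p ^ (t + 3)) = 1 := hdeg.natDegree_eq ▸ hdeg.monic.coeff_natDegree
  conv_lhs => rw [eq_sum_of_mem_additivePolynomials hp hP hdeg.natDegree_eq.le]
  rw [Finset.sum_range_succ, Finset.sum_range_succ, Finset.sum_range_succ',
    Finset.sum_range_succ', Finset.sum_eq_zero fun k hk => ?_, hlead]
  · simp only [zero_add, pow_zero, pow_one, map_one, one_mul]
    ring
  · rw [hmid (k + 1 + 1) (by omega) (by have := Finset.mem_range.mp hk; omega), map_zero, zero_mul]

variable [Fact p.Prime] [CharP F p]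

lemma pow_char_pow_mem_additivePolynomials {Q : F[X]} (hQ : Q ∈ additivePolynomials p)
    (m : ℕ) : Q ^ p ^ m ∈ additivePolynomials p := by
  induction hQ using Submodule.span_induction with
  | mem _ h =>
    obtain ⟨k, rfl⟩ := h
    rw [← pow_mul, ← pow_add]
    exact X_pow_mem_additivePolynomials _
  | zero => rw [zero_pow (pow_ne_zero _ (Fact.out : p.Prime).ne_zero)]; exact Submodule.zero_mem _
  | add x y _ _ hx hy => rw [add_pow_char_pow]; exact Submodule.add_mem _ hx hy
  | smul a x _ hx => rw [_root_.smul_pow]; exact Submodule.smul_mem _ _ hx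

lemma comp_mem_additivePolynomials {P Q : F[X]} (hP : P ∈ additivePolynomials p)
    (hQ : Q ∈ additivePolynomials p) : P.comp Q ∈ additivePolynomials p := by
  induction hP using Submodule.span_induction with
  | mem _ h =>
    obtain ⟨k, rfl⟩ := h
    rw [X_pow_comp]
    exact pow_char_pow_mem_additivePolynomials hQ k
  | zero => rw [zero_comp]; exact Submodule.zero_mem _
  | add x y _ _ hx hy => rw [add_comp]; exact Submodule.add_mem _ hx hy
  | smul a x _ hx => rw [smul_comp]; exact Submodule.smul_mem _ _ hx

lemma eval_add_of_mem_additivePolynomials {P : F[X]} (hP : P ∈ additivePolynomials p)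
    (x y : F) : P.eval (x + y) = P.eval x + P.eval y := by
  induction hP using Submodule.span_induction with
  | mem _ h =>
    obtain ⟨k, rfl⟩ := h
    simp [add_pow_char_pow]
  | zero => simp
  | add P Q _ _ hP hQ => simp only [eval_add, hP, hQ]; ring
  | smul a P _ hP => simp only [eval_smul, hP, smul_eq_mul]; ring

lemma X_pow_add_C_mul_X_comp (n : ℕ) (d A : F) :
    (X ^ p + C d * X).comp (X ^ p ^ n - C A * X) =
      X ^ p ^ (n + 1) + C d * X ^ p ^ n - C (A ^ p) * X ^ p - C (d * A) * X := by
  rw [add_comp, mul_comp, X_pow_comp, C_comp, X_comp, sub_pow_char, mul_pow, ← C_pow, ← pow_mul,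
    ← pow_succ, C_mul]
  ring

lemma exists_eq_X_pow_add_C_mul_X_comp {d e f : F} (hf : f ≠ 0) (hrel : d ^ p * e = f ^ p)
    (n : ℕ) : ∃ A : F, A ≠ 0 ∧ X ^ p ^ (n + 1) + C d * X ^ p ^ n + C e * X ^ p + C f * X =
      (X ^ p + C d * X).comp (X ^ p ^ n - C A * X) := by
  have hp := (Fact.out : p.Prime)
  have hd : d ≠ 0 := by
    rintro rfl
    rw [zero_pow hp.ne_zero, zero_mul, eq_comm, pow_eq_zero_iff hp.ne_zero] at hrel
    exact hf hrel
  refine ⟨-f / d, div_ne_zero (neg_ne_zero.mpr hf) hd, ?_⟩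
  have he : e = -((-f / d) ^ p) := by
    rw [div_pow, neg_pow, neg_one_pow_char, ← hrel]
    field_simp
  have hf' : f = -(d * (-f / d)) := by field_simp
  rw [X_pow_add_C_mul_X_comp, sub_eq_add_neg, sub_eq_add_neg, ← neg_mul, ← neg_mul, ← C_neg,
    ← C_neg, ← he, ← hf']

end Polynomial

section VanishingPoly

variable {F : Type*} [Field F]

/-- The polynomial `F_E` of the paper. -/
noncomputable def vanishingPoly (E : AddSubgroup F) [Fintype E] : F[X] :=
  ∏ c : E, (X - C (c : F))

lemma dCoef_eq_coeff_vanishingPoly (p r i : ℕ) (E : AddSubgroup F) [Fintype E] :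
    dCoef p r i E = (vanishingPoly E).coeff (p ^ (r - i)) :=
  rfl

variable (E : AddSubgroup F) [Fintype E]

lemma isMonicOfDegree_vanishingPoly : IsMonicOfDegree (vanishingPoly E) (Nat.card E) := by
  refine ⟨?_, monic_prod_of_monic _ _ fun c _ => monic_X_sub_C (c : F)⟩
  rw [vanishingPoly, natDegree_prod_of_monic _ _ fun c _ => monic_X_sub_C _]
  simp [Nat.card_eq_fintype_card]

lemma eval_vanishingPoly_eq_zero_iff {x : F} : (vanishingPoly E).eval x = 0 ↔ x ∈ E := by
  simp [vanishingPoly, eval_prod, Finset.prod_eq_zero_iff, sub_eq_zero]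

lemma coeff_one_vanishingPoly_ne_zero : (vanishingPoly E).coeff 1 ≠ 0 := by
  classical
  rw [vanishingPoly, ← Finset.mul_prod_erase _ _ (Finset.mem_univ 0), AddSubgroup.coe_zero,
    map_zero, sub_zero, coeff_X_mul, coeff_zero_eq_eval_zero, eval_prod]
  refine Finset.prod_ne_zero_iff.mpr fun c hc => ?_
  simpa using (Finset.mem_erase.mp hc).1

variable {E} in
lemma eq_vanishingPoly {P : F[X]} (hP : IsMonicOfDegree P (Nat.card E))
    (hroots : ∀ x ∈ E, P.eval x = 0) : P = vanishingPoly E := by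
  refine sub_eq_zero.mp (eq_zero_of_natDegree_lt_card_of_eval_eq_zero _ Subtype.val_injective
    (fun x : E => ?_) ?_)
  · simp [hroots x x.2, (eval_vanishingPoly_eq_zero_iff E).mpr x.2]
  · rw [← Nat.card_eq_fintype_card]
    exact hP.natDegree_sub_lt Nat.card_pos.ne' (isMonicOfDegree_vanishingPoly E)

lemma vanishingPoly_eq_X_pow_sub_C_mul_X (hE : 1 < Nat.card E) {c : F}
    (h : ∀ x ∈ E, x ^ Nat.card E = c * x) : vanishingPoly E = X ^ Nat.card E - C c * X :=
  (eq_vanishingPoly (isMonicOfDegree_X_pow_sub_C_mul_X hE c) fun x hx => by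
    simp only [eval_sub, eval_pow, eval_X, eval_mul, eval_C, h x hx, sub_self]).symm

lemma vanishingPoly_map_mulLeft_subfield {α : F} (hα : α ≠ 0) (K : Subfield F) [Finite K]
    [Fintype (K.toAddSubgroup.map (AddMonoidHom.mulLeft α))] :
    vanishingPoly (K.toAddSubgroup.map (AddMonoidHom.mulLeft α)) =
      X ^ Nat.card K - C (α ^ (Nat.card K - 1)) * X := by
  have hcard : Nat.card (K.toAddSubgroup.map (AddMonoidHom.mulLeft α)) = Nat.card K :=
    AddSubgroup.card_map_of_injective (mul_right_injective₀ hα)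
  rw [← hcard]
  refine vanishingPoly_eq_X_pow_sub_C_mul_X _ (hcard ▸ Finite.one_lt_card) ?_
  rintro _ ⟨x, hx, rfl⟩
  have : Fintype K := Fintype.ofFinite K
  have hxq : x ^ Nat.card K = x := by
    simpa [Nat.card_eq_fintype_card] using
      congrArg Subtype.val (FiniteField.pow_card (⟨x, hx⟩ : K))
  rw [hcard, AddMonoidHom.coe_mulLeft, mul_pow, hxq, ← pow_sub_one_mul Nat.card_pos.ne' α]
  ring

lemma ker_le_and_card_ker_of_vanishingPoly_eq_comp {V : AddSubgroup F} [Fintype V] {g h : F[X]}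
    {φ : F →+ F} (hφ : ∀ x, φ x = g.eval x) (hcomp : vanishingPoly V = h.comp g) :
    φ.ker ≤ V ∧ Nat.card φ.ker = g.natDegree := by
  have hdeg : Nat.card V = h.natDegree * g.natDegree := by
    rw [← natDegree_comp, ← hcomp, (isMonicOfDegree_vanishingPoly V).natDegree_eq]
  have hpos : 0 < h.natDegree * g.natDegree := hdeg ▸ Nat.card_pos
  have hh : h ≠ 0 := by rintro rfl; simp at hpos
  have hg : g ≠ 0 := by rintro rfl; simp at hpos
  obtain ⟨hfin, hker⟩ := finite_and_card_le_natDegree hg (S := φ.ker) fun x hx => hφ x ▸ hx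
  -- `φ` maps `V` into the roots of `h`, so its kernel on `V` is large.
  have hmap : Nat.card (V.map φ) ≤ h.natDegree := by
    refine (finite_and_card_le_natDegree hh ?_).2
    rintro _ ⟨x, hx, rfl⟩
    rw [hφ, ← eval_comp, ← hcomp, eval_vanishingPoly_eq_zero_iff]
    exact hx
  have hge : g.natDegree ≤ Nat.card (φ.ker ⊓ V : AddSubgroup F) := by
    refine Nat.le_of_mul_le_mul_right ?_ (Nat.pos_of_mul_pos_right hpos)
    calc g.natDegree * h.natDegree = Nat.card V := by rw [hdeg, mul_comm]
      _ = _ := (AddSubgroup.card_ker_inf_mul_card_map φ V).symm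
      _ ≤ _ := Nat.mul_le_mul_left _ hmap
  have : Finite φ.ker := hfin.to_subtype
  have heq := AddSubgroup.eq_of_le_of_card_ge inf_le_left (hker.trans hge)
  exact ⟨inf_eq_left.mp heq, le_antisymm hker (heq ▸ hge)⟩

end VanishingPoly

section CharP

variable {F : Type*} [Field F] {p : ℕ} [Fact p.Prime] [CharP F p]

lemma exists_vanishingPoly_eq_comp {V W : AddSubgroup F} [Fintype V] [Fintype W] (hWV : W ≤ V)
    (hW : vanishingPoly W ∈ additivePolynomials p) :
    ∃ (V' : AddSubgroup F) (_ : Fintype V'), Nat.card V' * Nat.card W = Nat.card V ∧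
      vanishingPoly V = (vanishingPoly V').comp (vanishingPoly W) := by
  let φ : F →+ F :=
    AddMonoidHom.mk' (vanishingPoly W).eval (eval_add_of_mem_additivePolynomials hW)
  have hker : φ.ker ⊓ V = W := by
    ext x
    simp only [AddSubgroup.mem_inf, AddMonoidHom.mem_ker, φ, AddMonoidHom.mk'_apply,
      eval_vanishingPoly_eq_zero_iff]
    exact ⟨And.left, fun h => ⟨h, hWV h⟩⟩
  have hcard : Nat.card (V.map φ) * Nat.card W = Nat.card V := by
    rw [mul_comm, ← hker, AddSubgroup.card_ker_inf_mul_card_map]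
  have : Fintype (V.map φ) := Fintype.ofFinite _
  refine ⟨V.map φ, inferInstance, hcard, (eq_vanishingPoly ?_ fun x hx => ?_).symm⟩
  · rw [← hcard]
    exact (isMonicOfDegree_vanishingPoly _).comp Nat.card_pos.ne' (isMonicOfDegree_vanishingPoly W)
  · rw [eval_comp, eval_vanishingPoly_eq_zero_iff]
    exact AddSubgroup.mem_map_of_mem φ hx

variable (p) in
lemma card_zmultiples_of_ne_zero {c : F} (hc : c ≠ 0) :
    Nat.card (AddSubgroup.zmultiples c) = p := by
  rw [Nat.card_zmultiples, addOrderOf_eq_prime (p := p) _ hc]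
  rw [nsmul_eq_mul, CharP.cast_eq_zero, zero_mul]

lemma vanishingPoly_zmultiples {c : F} (hc : c ≠ 0) [Fintype (AddSubgroup.zmultiples c)] :
    vanishingPoly (AddSubgroup.zmultiples c) = X ^ p - C (c ^ (p - 1)) * X := by
  have hcard := card_zmultiples_of_ne_zero p hc
  have hp := (Fact.out : p.Prime)
  rw [← hcard]
  refine vanishingPoly_eq_X_pow_sub_C_mul_X _ (hcard ▸ hp.one_lt) ?_
  rintro _ ⟨k, rfl⟩
  simp only [hcard, zsmul_eq_mul, mul_pow, ← frobenius_def p (k : F), map_intCast]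
  rw [← pow_sub_one_mul hp.ne_zero c]
  ring

variable (p) in
theorem vanishingPoly_mem_additivePolynomials (E : AddSubgroup F) [Fintype E] :
    vanishingPoly E ∈ additivePolynomials p := by
  induction hn : Nat.card E using Nat.strong_induction_on generalizing E with
  | _ n ih =>
  obtain rfl | ⟨c, hcE, hc⟩ := E.bot_or_exists_ne_zero
  · have hX : vanishingPoly (⊥ : AddSubgroup F) = X :=
      (eq_vanishingPoly (by rw [AddSubgroup.card_bot]; exact isMonicOfDegree_X F) (by simp)).symm
    simpa [hX] using X_pow_mem_additivePolynomials (F := F) (p := p) 0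
  have : Finite (AddSubgroup.zmultiples c) :=
    Nat.finite_of_card_ne_zero (by rw [card_zmultiples_of_ne_zero p hc]; exact NeZero.ne p)
  have : Fintype (AddSubgroup.zmultiples c) := Fintype.ofFinite _
  have hW : vanishingPoly (AddSubgroup.zmultiples c) ∈ additivePolynomials p := by
    simpa [vanishingPoly_zmultiples hc] using
      X_pow_sub_C_mul_X_mem_additivePolynomials 1 (c ^ (p - 1))
  obtain ⟨E', _, hcard, hcomp⟩ :=
    exists_vanishingPoly_eq_comp (AddSubgroup.zmultiples_le.mpr hcE) hW
  rw [hcomp]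
  refine comp_mem_additivePolynomials (ih _ ?_ E' rfl) hW
  rw [← hn, ← hcard, card_zmultiples_of_ne_zero p hc]
  exact lt_mul_right Nat.card_pos (Fact.out : p.Prime).one_lt

variable (p) in
lemma vanishingPoly_eq_of_card_eq_prime (E : AddSubgroup F) [Fintype E] (hE : Nat.card E = p) :
    vanishingPoly E = X ^ p + C ((vanishingPoly E).coeff 1) * X := by
  have hdeg := isMonicOfDegree_vanishingPoly E
  rw [hE] at hdeg
  conv_lhs => rw [eq_sum_of_mem_additivePolynomials (Fact.out : p.Prime).one_lt
    (vanishingPoly_mem_additivePolynomials p E) (r := 1) (by rw [hdeg.natDegree_eq, pow_one])]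
  simp [Finset.sum_range_succ, ← hdeg.natDegree_eq, hdeg.monic.coeff_natDegree, add_comm]

lemma exists_vanishingPoly_eq_comp_of_smul_subfield_le {V : AddSubgroup F} [Fintype V] {n : ℕ}
    (hV : Nat.card V = p ^ (n + 1)) {α : F} (hα : α ≠ 0) {K : Subfield F}
    (hK : Nat.card K = p ^ n) (hKV : ∀ x ∈ K, α * x ∈ V) :
    ∃ d : F, vanishingPoly V = (X ^ p + C d * X).comp (X ^ p ^ n - C (α ^ (p ^ n - 1)) * X) := by
  have : Finite K := Nat.finite_of_card_ne_zero (by rw [hK]; exact pow_ne_zero _ (NeZero.ne p))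
  set W := K.toAddSubgroup.map (AddMonoidHom.mulLeft α)
  have : Fintype W := Fintype.ofFinite _
  have hW := vanishingPoly_map_mulLeft_subfield hα K
  rw [hK] at hW
  have hWV : W ≤ V := AddSubgroup.map_le_iff_le_comap.mpr hKV
  obtain ⟨V', _, hcard, hcomp⟩ :=
    exists_vanishingPoly_eq_comp hWV (hW ▸ X_pow_sub_C_mul_X_mem_additivePolynomials n _)
  have hV' : Nat.card V' = p := by
    have hWcard : Nat.card W = p ^ n :=
      (AddSubgroup.card_map_of_injective (mul_right_injective₀ hα)).trans hK
    rw [hWcard, hV, pow_succ'] at hcard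
    exact Nat.eq_of_mul_eq_mul_right (pow_pos (Fact.out : p.Prime).pos n) hcard
  exact ⟨_, by rw [hcomp, hW, vanishingPoly_eq_of_card_eq_prime p V' hV']⟩

lemma exists_smul_subfield_le_of_vanishingPoly_eq_comp {V : AddSubgroup F} [Fintype V] {n : ℕ}
    (hn : n ≠ 0) {A : F} (hA : A ≠ 0) {h : F[X]}
    (hcomp : vanishingPoly V = h.comp (X ^ p ^ n - C A * X)) :
    ∃ α : F, α ≠ 0 ∧ ∃ K : Subfield F, Nat.card K = p ^ n ∧ ∀ x ∈ K, α * x ∈ V := by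
  have hq : 1 < p ^ n := Nat.one_lt_pow hn (Fact.out : p.Prime).one_lt
  let φ : F →+ F := AddMonoidHom.mk' (X ^ p ^ n - C A * X).eval
    (eval_add_of_mem_additivePolynomials (X_pow_sub_C_mul_X_mem_additivePolynomials n A))
  obtain ⟨hle, hcard⟩ :=
    ker_le_and_card_ker_of_vanishingPoly_eq_comp (φ := φ) (fun _ => rfl) hcomp
  rw [(isMonicOfDegree_X_pow_sub_C_mul_X hq A).natDegree_eq] at hcard
  obtain ⟨α, hαker, hα⟩ : ∃ α ∈ φ.ker, α ≠ 0 := φ.ker.bot_or_exists_ne_zero.resolve_left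
    fun hbot => by rw [hbot, AddSubgroup.card_bot] at hcard; omega
  have hαq : α ^ p ^ n = A * α := by simpa [φ, sub_eq_zero] using hαker
  have hmem : ∀ x, α * x ∈ φ.ker ↔ x ∈ (iterateFrobenius F p n).eqLocusField (RingHom.id F) := by
    intro x
    simp [φ, RingHom.mem_eqLocusField, iterateFrobenius_def, mul_pow, hαq, sub_eq_zero, mul_assoc,
      hA, hα]
  refine ⟨α, hα, _, ?_, fun x hx => hle ((hmem x).mpr hx)⟩
  rw [← hcard]
  exact Nat.card_congr (Equiv.subtypeEquiv (Equiv.mulLeft₀ α hα) fun x => (hmem x).symm)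

lemma exists_vanishingPoly_eq_comp_iff_dCoef {V : AddSubgroup F} [Fintype V] {s : ℕ}
    (hs : 1 < s) (hV : Nat.card V = p ^ (s + 1)) :
    (∃ d A : F, A ≠ 0 ∧ vanishingPoly V = (X ^ p + C d * X).comp (X ^ p ^ s - C A * X)) ↔
      ((∀ i, 1 < i → i < s → dCoef p (s + 1) i V = 0) ∧
        dCoef p (s + 1) 1 V ^ p * dCoef p (s + 1) s V = dCoef p (s + 1) (s + 1) V ^ p) := by
  have hp := (Fact.out : p.Prime)
  simp_rw [dCoef_eq_coeff_vanishingPoly]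
  obtain ⟨t, rfl⟩ : ∃ t, s = t + 2 := ⟨s - 2, by omega⟩
  constructor
  · rintro ⟨d, A, -, h⟩
    simp only [h, X_pow_add_C_mul_X_comp, coeff_add, coeff_sub, coeff_C_mul, coeff_X_pow, coeff_X,
      Nat.pow_right_inj hp.one_lt, Nat.pow_eq_self_iff hp.one_lt, eq_comm (a := 1), Nat.pow_eq_one,
      hp.ne_one, false_or]
    refine ⟨fun i hi hi' => ?_, ?_⟩
    · split_ifs <;> first | omega | simp
    · have hsign : -(d ^ p * A ^ p) = (-(d * A)) ^ p := by
        rw [neg_pow, neg_one_pow_char, mul_pow, neg_one_mul]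
      simpa using hsign
  · rintro ⟨hmid, hrel⟩
    have hdeg := isMonicOfDegree_vanishingPoly V
    rw [hV] at hdeg
    have hmid' : ∀ k, 2 ≤ k → k ≤ t + 1 → (vanishingPoly V).coeff (p ^ k) = 0 := fun k hk hk' => by
      simpa [show t + 2 + 1 - (t + 3 - k) = k by omega] using hmid (t + 3 - k) (by omega) (by omega)
    rw [eq_of_coeff_pow_eq_zero_of_mem_additivePolynomials hp.one_lt
      (vanishingPoly_mem_additivePolynomials p V) hdeg hmid']
    obtain ⟨A, hA, hcomp⟩ := exists_eq_X_pow_add_C_mul_X_comp (coeff_one_vanishingPoly_ne_zero V)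
      (by simpa using hrel) (t + 2)
    exact ⟨_, A, hA, hcomp⟩

end CharP

/-- For `s > 1` and a finite subgroup `V` of rank `s + 1`, the partition
of `V` is `(s,1)` — i.e. `V` contains a dilation `α • K` of a subfield `K` with `p ^ s`
elements — iff `d_{i,s+1}(V) = 0` for `1 < i < s` and
`d_{1,s+1}(V)^p * d_{s,s+1}(V) = d_{s+1,s+1}(V)^p`. -/
theorem statement4 {F : Type*} [Field F] {p : ℕ} [Fact p.Prime] [CharP F p]
    (s : ℕ) (hs : 1 < s) (V : AddSubgroup F) [Fintype V]
    (hV : Fintype.card V = p ^ (s + 1)) :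
    (∃ α : F, α ≠ 0 ∧ ∃ K : Subfield F, Nat.card K = p ^ s ∧ ∀ x ∈ K, α * x ∈ V) ↔
      ((∀ i, 1 < i → i < s → dCoef p (s + 1) i V = 0) ∧
        dCoef p (s + 1) 1 V ^ p * dCoef p (s + 1) s V = dCoef p (s + 1) (s + 1) V ^ p) := by
  have hVcard : Nat.card V = p ^ (s + 1) := Nat.card_eq_fintype_card.trans hV
  rw [← exists_vanishingPoly_eq_comp_iff_dCoef hs hVcard]
  constructor
  · rintro ⟨α, hα, K, hK, hKV⟩
    obtain ⟨d, hd⟩ := exists_vanishingPoly_eq_comp_of_smul_subfield_le hVcard hα hK hKV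
    exact ⟨d, _, pow_ne_zero _ hα, hd⟩
  · rintro ⟨d, A, hA, hd⟩
    exact exists_smul_subfield_le_of_vanishingPoly_eq_comp (by omega) hA hd
end

section
/- Suppose F is algebraically closed and E, E' are finite subgroups of (F, +), both of rank r. Suppose that for every tuple (a_1, …, a_r) of nonnegative integers satisfying Σ_{i=1}^{r-1} a_i p^{r-i}(p^i − 1) = a_r (p^r − 1), one has (∏_{i=1}^{r-1} d_{i,r}(E)^{a_i}) · d_{r,r}(E')^{a_r} = (∏_{i=1}^{r-1} d_{i,r}(E')^{a_i}) · d_{r,r}(E)^{a_r}. Then E' = α•E for some α ∈ F^×. -/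
/-!
The polynomial `F_E = ∏_{c ∈ E} (X - c)` is invariant under translation by `E`. Comparing Hasse
derivatives at the `p ^ r` points of `E` shows that `C(n, k) • coeff n = 0` for `0 < k < n`, so by
Lucas' theorem `F_E` is supported on the powers of `p`: `F_E = ∑ᵢ d_{i,r}(E) X ^ p ^ (r - i)`.
Hence `E' = α • E` as soon as `d_{i,r}(E') = α ^ wᵢ d_{i,r}(E)` for `wᵢ = p ^ r - p ^ (r - i)`,
since then `F_{E'}` is `F_E` with its roots scaled by `α`.

To find `α`, note first that the hypothesis forces `d_{i,r}(E)` and `d_{i,r}(E')` to vanish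
together. On the common support, the ratios `uᵢ = d_{i,r}(E') / d_{i,r}(E)` satisfy
`∏ uᵢ ^ aᵢ = 1` for every integer vector `a` of weight `∑ aᵢ wᵢ = 0`: adding to `a` a suitable
weight-zero vector makes it nonnegative away from `r`, where the hypothesis applies.
A Bézout relation `∑ mᵢ wᵢ = d = gcd wᵢ` then gives `uᵢ = α ^ wᵢ` for any `d`-th root `α` of
`∏ uᵢ ^ mᵢ`, which exists because `F` is algebraically closed.
-/

open Polynomial Pointwise

namespace Polynomial

variable {R : Type*} [CommRing R] [IsDomain R] {f : R[X]} {s : Finset R}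

theorem hasseDeriv_eq_C_coeff_of_forall_taylor_eq {k : ℕ} (hs : f.natDegree - k < s.card)
    (hf : ∀ a ∈ s, taylor a f = f) : hasseDeriv k f = C (f.coeff k) := by
  refine eq_of_natDegree_lt_card_of_eval_eq' _ _ s (fun a ha => ?_) ?_
  · rw [← taylor_coeff, hf a ha, eval_C]
  · rw [natDegree_C, Nat.max_zero]
    exact (natDegree_hasseDeriv_le f k).trans_lt hs

theorem choose_mul_coeff_eq_zero_of_forall_taylor_eq {k n : ℕ} (hs : f.natDegree - k < s.card)
    (hf : ∀ a ∈ s, taylor a f = f) (hkn : k < n) : (n.choose k : R) * f.coeff n = 0 := by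
  have h := congrArg (coeff · (n - k)) (hasseDeriv_eq_C_coeff_of_forall_taylor_eq hs hf)
  simpa [hasseDeriv_coeff, coeff_C, Nat.sub_add_cancel hkn.le, (Nat.sub_pos_of_lt hkn).ne']
    using h

theorem coeff_eq_zero_of_forall_taylor_eq (p : ℕ) [Fact p.Prime] [CharP R p]
    (hs : f.natDegree ≤ s.card) (hf : ∀ a ∈ s, taylor a f = f) {n : ℕ} (hn0 : n ≠ 0)
    (hn : ∀ k, n ≠ p ^ k) : f.coeff n = 0 := by
  by_contra hcoeff
  have hnf : n ≤ f.natDegree := le_natDegree_of_ne_zero hcoeff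
  refine hn (multiplicity p n) (Choose.eq_pow_multiplicity_of_choose_modEq_zero_nat
    (Nat.pos_of_ne_zero hn0) fun i hi => ?_)
  rw [Finset.mem_Icc] at hi
  have h := choose_mul_coeff_eq_zero_of_forall_taylor_eq (k := i) (by omega) hf
    (by omega : i < n)
  rw [Nat.modEq_zero_iff_dvd, ← CharP.cast_eq_zero_iff R p]
  exact (mul_eq_zero.mp h).resolve_right hcoeff

end Polynomial

namespace AddSubgroup

variable {F : Type*} [Field F] (E : AddSubgroup F) [Fintype E]

noncomputable def vanishingPoly : F[X] := ∏ c : E, (X - C (c : F))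

theorem monic_vanishingPoly : E.vanishingPoly.Monic :=
  monic_prod_X_sub_C _ _

theorem natDegree_vanishingPoly : E.vanishingPoly.natDegree = Fintype.card E := by
  rw [vanishingPoly, natDegree_prod_of_monic _ _ fun c _ => monic_X_sub_C _]
  simp

theorem coeff_vanishingPoly_card : E.vanishingPoly.coeff (Fintype.card E) = 1 := by
  rw [← natDegree_vanishingPoly]
  exact E.monic_vanishingPoly.coeff_natDegree

theorem eval_vanishingPoly_eq_zero_iff {z : F} : E.vanishingPoly.eval z = 0 ↔ z ∈ E := by
  simp [vanishingPoly, eval_prod, Finset.prod_eq_zero_iff, sub_eq_zero]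

theorem taylor_vanishingPoly {a : F} (ha : a ∈ E) :
    taylor a E.vanishingPoly = E.vanishingPoly := by
  rw [vanishingPoly, taylor_apply, prod_comp]
  refine Fintype.prod_equiv (Equiv.subRight ⟨a, ha⟩) _ _ fun c => ?_
  simp only [sub_comp, X_comp, C_comp, Equiv.subRight_apply, AddSubgroup.coe_sub, map_sub]
  ring

theorem coeff_vanishingPoly_zero : E.vanishingPoly.coeff 0 = 0 := by
  rw [coeff_zero_eq_eval_zero, eval_vanishingPoly_eq_zero_iff]
  exact E.zero_mem

theorem coeff_vanishingPoly_one_ne_zero : E.vanishingPoly.coeff 1 ≠ 0 := by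
  classical
  rw [vanishingPoly, ← Finset.mul_prod_erase _ _ (Finset.mem_univ 0)]
  simp [coeff_zero_eq_eval_zero, eval_prod, Finset.prod_eq_zero_iff]

theorem coeff_vanishingPoly_eq_zero_of_ne_pow (p : ℕ) [Fact p.Prime] [CharP F p] {n : ℕ}
    (hn : ∀ k, n ≠ p ^ k) : E.vanishingPoly.coeff n = 0 := by
  rcases eq_or_ne n 0 with rfl | hn0
  · exact E.coeff_vanishingPoly_zero
  · refine coeff_eq_zero_of_forall_taylor_eq p
      (s := (Finset.univ : Finset E).map (Function.Embedding.subtype (· ∈ E))) ?_ ?_ hn0 hn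
    · simp [natDegree_vanishingPoly]
    · simpa using fun a ha => E.taylor_vanishingPoly ha

theorem coe_eq_smul_of_vanishingPoly_eq_scaleRoots {E' : AddSubgroup F} [Fintype E'] {α : F}
    (hα : α ≠ 0) (h : E'.vanishingPoly = E.vanishingPoly.scaleRoots α) :
    (E' : Set F) = α • (E : Set F) := by
  ext z
  rw [Set.mem_smul_set_iff_inv_smul_mem₀ hα, SetLike.mem_coe, SetLike.mem_coe,
    ← eval_vanishingPoly_eq_zero_iff, ← eval_vanishingPoly_eq_zero_iff, h, smul_eq_mul]
  have h := scaleRoots_eval_mul E.vanishingPoly (α⁻¹ * z) α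
  rw [mul_inv_cancel_left₀ hα] at h
  simp [h, hα]

theorem _root_.dCoef_eq_coeff_vanishingPoly_s6 (p r i : ℕ) :
    dCoef p r i E = E.vanishingPoly.coeff (p ^ (r - i)) :=
  rfl

theorem vanishingPoly_eq_scaleRoots (p : ℕ) [Fact p.Prime] [CharP F p] {E' : AddSubgroup F}
    [Fintype E'] {r : ℕ} (hE : Fintype.card E = p ^ r) (hE' : Fintype.card E' = p ^ r) {α : F}
    (h : ∀ i ∈ Finset.Icc 1 r, dCoef p r i E' = α ^ (p ^ r - p ^ (r - i)) * dCoef p r i E) :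
    E'.vanishingPoly = E.vanishingPoly.scaleRoots α := by
  ext n
  rw [coeff_scaleRoots, natDegree_vanishingPoly, hE]
  by_cases hn : ∃ k, n = p ^ k
  · obtain ⟨k, rfl⟩ := hn
    rcases lt_trichotomy k r with hk | rfl | hk
    · have hi := h (r - k) (Finset.mem_Icc.mpr ⟨by omega, by omega⟩)
      rwa [dCoef_eq_coeff_vanishingPoly_s6, dCoef_eq_coeff_vanishingPoly_s6, Nat.sub_sub_self hk.le,
        mul_comm] at hi
    · rw [Nat.sub_self, pow_zero, mul_one, ← hE, coeff_vanishingPoly_card, hE, ← hE',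
        coeff_vanishingPoly_card]
    · have hlt : p ^ r < p ^ k := Nat.pow_lt_pow_right (Fact.out : p.Prime).one_lt hk
      rw [coeff_eq_zero_of_natDegree_lt (by rwa [natDegree_vanishingPoly, hE']),
        coeff_eq_zero_of_natDegree_lt (by rwa [natDegree_vanishingPoly, hE]), zero_mul]
  · simp only [not_exists] at hn
    rw [coeff_vanishingPoly_eq_zero_of_ne_pow E' p hn,
      coeff_vanishingPoly_eq_zero_of_ne_pow E p hn, zero_mul]

end AddSubgroup

section Weights

variable {ι : Type*}

theorem prod_zpow_eq_of_prod_pow_eq {G : Type*} [CommGroup G] {S : Finset ι} {r : ι}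
    {w : ι → ℕ} (hwr : 0 < w r) {u : ι → G}
    (h : ∀ n : ι → ℕ, ∑ j ∈ S, n j * w j = n r * w r → ∏ j ∈ S, u j ^ n j = u r ^ n r)
    {b : ι → ℤ} (hb : ∀ j ∈ S, 0 ≤ b j) (hbw : ∑ j ∈ S, b j * w j = b r * w r) :
    ∏ j ∈ S, u j ^ b j = u r ^ b r := by
  have hbr : 0 ≤ b r := by
    have : 0 ≤ b r * w r :=
      hbw ▸ Finset.sum_nonneg fun j hj => mul_nonneg (hb j hj) (Int.natCast_nonneg _)
    exact nonneg_of_mul_nonneg_left this (by exact_mod_cast hwr)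
  have hn := h (fun j => (b j).toNat) <| by
    have : ∑ j ∈ S, ((b j).toNat : ℤ) * w j = ((b r).toNat : ℤ) * w r := by
      rw [Finset.sum_congr rfl fun j hj => by rw [Int.toNat_of_nonneg (hb j hj)],
        Int.toNat_of_nonneg hbr, hbw]
    exact_mod_cast this
  calc ∏ j ∈ S, u j ^ b j = ∏ j ∈ S, u j ^ (b j).toNat :=
        Finset.prod_congr rfl fun j hj => by rw [← zpow_natCast, Int.toNat_of_nonneg (hb j hj)]
    _ = u r ^ b r := by rw [hn, ← zpow_natCast, Int.toNat_of_nonneg hbr]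

theorem prod_zpow_eq_one_of_prod_pow_eq {G : Type*} [CommGroup G] [DecidableEq ι]
    {S : Finset ι} {r : ι} (hr : r ∉ S) {w : ι → ℕ} (hwr : 0 < w r) {u : ι → G}
    (h : ∀ n : ι → ℕ, ∑ j ∈ S, n j * w j = n r * w r → ∏ j ∈ S, u j ^ n j = u r ^ n r)
    (a : ι → ℤ) (ha : ∑ j ∈ insert r S, a j * w j = 0) : ∏ j ∈ insert r S, u j ^ a j = 1 := by
  rw [Finset.sum_insert hr] at ha
  rw [Finset.prod_insert hr]
  have hS : ∀ j ∈ S, j ≠ r := fun j hj => ne_of_mem_of_not_mem hj hr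
  -- on `S`, `a = b - c` with `b` and `c` nonnegative there
  set t := ∑ j ∈ S, |a j| * w j
  have ht : ∑ j ∈ S, w r * |a j| * w j = t * w r := by
    rw [Finset.sum_mul]
    exact Finset.sum_congr rfl fun j _ => by ring
  have hc := prod_zpow_eq_of_prod_pow_eq (b := Function.update (fun j => w r * |a j|) r t) hwr h
    (fun j hj => by simp only [Function.update_of_ne (hS j hj)]; positivity) (by
      rw [Function.update_self, Finset.sum_congr rfl fun j hj => by
        rw [Function.update_of_ne (hS j hj)], ht])
  have hb := prod_zpow_eq_of_prod_pow_eq hwr h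
    (b := Function.update (fun j => a j + w r * |a j|) r (t - a r))
    (fun j hj => by
      simp only [Function.update_of_ne (hS j hj)]
      nlinarith [neg_abs_le (a j), abs_nonneg (a j), (by exact_mod_cast hwr : (1 : ℤ) ≤ w r)])
    (by
      rw [Function.update_self, Finset.sum_congr rfl fun j hj => by
        rw [Function.update_of_ne (hS j hj)]]
      simp only [add_mul, Finset.sum_add_distrib]
      linear_combination ha + ht)
  simp only [Function.update_self] at hb hc
  rw [Finset.prod_congr rfl fun j hj => by rw [Function.update_of_ne (hS j hj)]] at hb hc
  rw [Finset.prod_congr rfl fun j _ => zpow_add _ _ _, Finset.prod_mul_distrib, hc, zpow_sub,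
    mul_comm] at hb
  rw [mul_left_cancel hb, mul_inv_cancel]

theorem exists_pow_eq_of_prod_zpow_eq_one {F : Type*} [Field F] [IsAlgClosed F] (T : Finset ι)
    (w : ι → ℕ) (u : ι → Fˣ)
    (h : ∀ a : ι → ℤ, ∑ j ∈ T, a j * w j = 0 → ∏ j ∈ T, u j ^ a j = 1) :
    ∃ α : Fˣ, ∀ j ∈ T, u j = α ^ w j := by
  classical
  obtain ⟨m, hm⟩ := T.gcd_eq_sum_mul fun j => (w j : ℤ)
  obtain ⟨e, he⟩ := Int.eq_ofNat_of_zero_le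
    (Int.nonneg_of_normalize_eq_self (Finset.normalize_gcd (s := T) (f := fun j => (w j : ℤ))))
  have hsum : ∑ j ∈ T, m j * w j = e := by
    rw [← he, hm]
    exact Finset.sum_congr rfl fun j _ => mul_comm _ _
  set γ := ∏ j ∈ T, u j ^ m j
  obtain ⟨α, hα⟩ : ∃ α : Fˣ, α ^ e = γ := by
    rcases Nat.eq_zero_or_pos e with rfl | he0
    · refine ⟨1, ?_⟩
      rw [one_pow]
      exact (h m (by rw [hsum, Nat.cast_zero])).symm
    · obtain ⟨β, hβ⟩ := IsAlgClosed.exists_pow_nat_eq (γ : F) he0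
      have hβ0 : β ≠ 0 := by
        rintro rfl
        exact γ.ne_zero (by rw [← hβ, zero_pow he0.ne'])
      exact ⟨Units.mk0 β hβ0, Units.ext (by simpa using hβ)⟩
  refine ⟨α, fun j hjT => ?_⟩
  obtain ⟨q, hq⟩ := Finset.gcd_dvd (f := fun j => (w j : ℤ)) hjT
  rw [he] at hq
  have hj := h (fun i => m i * q - if i = j then 1 else 0) <| by
    simp only [sub_mul, Finset.sum_sub_distrib, ite_mul, one_mul, zero_mul, Finset.sum_ite_eq',
      if_pos hjT, mul_right_comm _ q, ← Finset.sum_mul]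
    rw [hsum, hq]
    ring
  have hδ : ∏ i ∈ T, u i ^ (if i = j then (1 : ℤ) else 0) = u j := by
    rw [Finset.prod_eq_single j (fun i _ hij => by simp [hij]) (absurd hjT)]
    simp
  rw [Finset.prod_congr rfl fun i _ => by rw [zpow_sub, zpow_mul], Finset.prod_mul_distrib,
    Finset.prod_inv_distrib, Finset.prod_zpow, hδ, mul_inv_eq_one] at hj
  rw [← zpow_natCast, hq, zpow_mul, zpow_natCast, hα, hj]

theorem exists_pow_mul_eq_of_prod_pow_mul_eq {F : Type*} [Field F] [IsAlgClosed F]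
    [DecidableEq ι] {S : Finset ι} {r : ι} (hr : r ∉ S) {w : ι → ℕ} (hwr : 0 < w r)
    {x y : ι → F}
    (hx : ∀ j ∈ insert r S, x j ≠ 0) (hy : ∀ j ∈ insert r S, y j ≠ 0)
    (h : ∀ n : ι → ℕ, ∑ j ∈ S, n j * w j = n r * w r →
      (∏ j ∈ S, x j ^ n j) * y r ^ n r = (∏ j ∈ S, y j ^ n j) * x r ^ n r) :
    ∃ α : F, α ≠ 0 ∧ ∀ j ∈ insert r S, y j = α ^ w j * x j := by
  classical
  let u : ι → Fˣ := fun j =>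
    if hj : x j ≠ 0 ∧ y j ≠ 0 then Units.mk0 (y j / x j) (div_ne_zero hj.2 hj.1) else 1
  have hu : ∀ j ∈ insert r S, (u j : F) = y j / x j := fun j hj => by
    simp [u, hx j hj, hy j hj]
  have hr' := Finset.mem_insert_self r S
  have hS : ∀ j ∈ S, j ∈ insert r S := fun j => Finset.mem_insert_of_mem
  have hu' : ∀ n : ι → ℕ, ∑ j ∈ S, n j * w j = n r * w r →
      ∏ j ∈ S, u j ^ n j = u r ^ n r := by
    intro n hn
    ext
    push_cast
    rw [Finset.prod_congr rfl fun j hj => by rw [hu j (hS j hj), div_pow],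
      Finset.prod_div_distrib, hu r hr', div_pow, div_eq_div_iff
        (Finset.prod_ne_zero_iff.mpr fun j hj => pow_ne_zero _ (hx j (hS j hj)))
        (pow_ne_zero _ (hx r hr'))]
    linear_combination -(h n hn)
  obtain ⟨α, hα⟩ := exists_pow_eq_of_prod_zpow_eq_one (insert r S) w u
    (prod_zpow_eq_one_of_prod_pow_eq hr hwr hu')
  refine ⟨α, α.ne_zero, fun j hj => ?_⟩
  have hαj := congrArg Units.val (hα j hj)
  rwa [hu j hj, Units.val_pow_eq_pow_val, div_eq_iff (hx j hj)] at hαj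

end Weights

section MonomialInvariants

variable {F : Type*} [Field F] {r : ℕ} {w : ℕ → ℕ} {x y : ℕ → F}

theorem eq_zero_iff_of_forall_monomial_eq (hwr : 0 < w r) (hx : x r ≠ 0) (hy : y r ≠ 0)
    (h : ∀ a : ℕ → ℕ, ∑ i ∈ Finset.Ico 1 r, a i * w i = a r * w r →
      (∏ i ∈ Finset.Ico 1 r, x i ^ a i) * y r ^ a r =
        (∏ i ∈ Finset.Ico 1 r, y i ^ a i) * x r ^ a r)
    {j : ℕ} (hj : j ∈ Finset.Ico 1 r) : x j = 0 ↔ y j = 0 := by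
  have hjr : j ≠ r := (Finset.mem_Ico.mp hj).2.ne
  set a : ℕ → ℕ := fun i => if i = r then w j else if i = j then w r else 0
  have hsingle : ∀ i ∈ Finset.Ico 1 r, i ≠ j → a i = 0 :=
    fun i hi hij => by simp [a, hij, (Finset.mem_Ico.mp hi).2.ne]
  have key := h a <| by
    rw [Finset.sum_eq_single j (fun i hi hij => by rw [hsingle i hi hij, zero_mul]) (absurd hj)]
    simp [a, hjr, mul_comm]
  have hprod (z : ℕ → F) : ∏ i ∈ Finset.Ico 1 r, z i ^ a i = z j ^ w r := by
    rw [Finset.prod_eq_single j (fun i hi hij => by rw [hsingle i hi hij, pow_zero]) (absurd hj)]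
    simp [a, hjr]
  rw [hprod x, hprod y] at key
  constructor <;> intro h0 <;> simp [a, h0, hwr.ne', hx, hy] at key <;> exact key

theorem exists_pow_mul_eq_of_forall_monomial_eq [IsAlgClosed F] (hwr : 0 < w r) (hx : x r ≠ 0)
    (hy : y r ≠ 0)
    (h : ∀ a : ℕ → ℕ, ∑ i ∈ Finset.Ico 1 r, a i * w i = a r * w r →
      (∏ i ∈ Finset.Ico 1 r, x i ^ a i) * y r ^ a r =
        (∏ i ∈ Finset.Ico 1 r, y i ^ a i) * x r ^ a r) :
    ∃ α : F, α ≠ 0 ∧ ∀ i ∈ Finset.Icc 1 r, y i = α ^ w i * x i := by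
  classical
  have hzero := fun j => eq_zero_iff_of_forall_monomial_eq hwr hx hy h (j := j)
  set S := (Finset.Ico 1 r).filter (x · ≠ 0)
  have hSx : ∀ j ∈ insert r S, x j ≠ 0 := by simp +contextual [S, hx]
  have hSy : ∀ j ∈ insert r S, y j ≠ 0 := by simp +contextual [S, hy, ← hzero]
  obtain ⟨α, hα0, hα⟩ := exists_pow_mul_eq_of_prod_pow_mul_eq (by simp [S]) hwr hSx hSy <| by
    intro n hn
    have key := h (fun j => if x j ≠ 0 then n j else 0) <| by
      rw [if_pos hx, ← hn, Finset.sum_filter]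
      exact Finset.sum_congr rfl fun j _ => by split_ifs <;> simp
    have hprod : ∀ z : ℕ → F,
        ∏ j ∈ S, z j ^ n j = ∏ j ∈ Finset.Ico 1 r, z j ^ (if x j ≠ 0 then n j else 0) := by
      intro z
      rw [Finset.prod_filter]
      exact Finset.prod_congr rfl fun j _ => by split_ifs <;> simp
    rw [hprod x, hprod y]
    rwa [if_pos hx] at key
  refine ⟨α, hα0, fun i hi => ?_⟩
  by_cases hiS : i ∈ insert r S
  · exact hα i hiS
  have hiIco : i ∈ Finset.Ico 1 r := by
    rw [Finset.mem_Icc] at hi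
    exact Finset.mem_Ico.mpr
      ⟨hi.1, lt_of_le_of_ne hi.2 fun hir => hiS (hir ▸ Finset.mem_insert_self r S)⟩
  have hxi : x i = 0 := by
    by_contra hxi
    exact hiS (Finset.mem_insert_of_mem (Finset.mem_filter.mpr ⟨hiIco, hxi⟩))
  rw [hxi, (hzero i hiIco).mp hxi, mul_zero]

end MonomialInvariants

/-- Over an algebraically closed `F`, if two finite subgroups `E, E'` of
rank `r` agree on all weight-zero monomial invariants in the Dickson coefficients,
then `E' = α • E` for some `α ≠ 0`. -/
theorem statement6 {F : Type*} [Field F] [IsAlgClosed F] {p : ℕ} [Fact p.Prime]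
    [CharP F p] (r : ℕ) (E E' : AddSubgroup F) [Fintype E] [Fintype E']
    (hE : Fintype.card E = p ^ r) (hE' : Fintype.card E' = p ^ r)
    (h : ∀ a : ℕ → ℕ,
      (∑ i ∈ Finset.Ico 1 r, a i * (p ^ (r - i) * (p ^ i - 1))) = a r * (p ^ r - 1) →
      (∏ i ∈ Finset.Ico 1 r, dCoef p r i E ^ a i) * dCoef p r r E' ^ a r =
        (∏ i ∈ Finset.Ico 1 r, dCoef p r i E' ^ a i) * dCoef p r r E ^ a r) :
    ∃ α : F, α ≠ 0 ∧ (E' : Set F) = α • (E : Set F) := by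
  rcases Nat.eq_zero_or_pos r with rfl | hr
  · exact ⟨1, one_ne_zero, E.coe_eq_smul_of_vanishingPoly_eq_scaleRoots one_ne_zero
      (E.vanishingPoly_eq_scaleRoots p hE hE' (by simp))⟩
  have hdr : ∀ G : AddSubgroup F, [Fintype G] → dCoef p r r G ≠ 0 := fun G _ => by
    rw [dCoef_eq_coeff_vanishingPoly_s6, Nat.sub_self, pow_zero]
    exact G.coeff_vanishingPoly_one_ne_zero
  obtain ⟨α, hα0, hα⟩ := exists_pow_mul_eq_of_forall_monomial_eq (r := r)
    (w := fun i => p ^ (r - i) * (p ^ i - 1)) (x := (dCoef p r · E)) (y := (dCoef p r · E'))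
    (by simpa using Nat.one_lt_pow hr.ne' (Fact.out : p.Prime).one_lt) (hdr E) (hdr E')
    fun a ha => h a (by simpa using ha)
  refine ⟨α, hα0, E.coe_eq_smul_of_vanishingPoly_eq_scaleRoots hα0
    (E.vanishingPoly_eq_scaleRoots p hE hE' fun i hi => ?_)⟩
  rw [hα i hi, Nat.mul_sub_one, ← pow_add, Nat.sub_add_cancel (Finset.mem_Icc.mp hi).2]
end

section
/- Suppose F is algebraically closed and E, E' are finite subgroups of (F, +), both of rank 4. Assume the following six equalities hold (each of the form M(E)·N(E') = M(E')·N(E)): (1) d_{1,4}(E)^{p^3+p^2+p+1} d_{4,4}(E')^{p^3} = d_{1,4}(E')^{p^3+p^2+p+1} d_{4,4}(E)^{p^3}; (2) d_{2,4}(E)^{p^2+1} d_{4,4}(E')^{p^2} = d_{2,4}(E')^{p^2+1} d_{4,4}(E)^{p^2}; (3) d_{3,4}(E)^{p^3+p^2+p+1} d_{4,4}(E')^{p^3+p^2+p} = d_{3,4}(E')^{p^3+p^2+p+1} d_{4,4}(E)^{p^3+p^2+p}; (4) d_{1,4}(E)^{p^2+p} d_{2,4}(E) d_{4,4}(E')^{p^2}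 = d_{1,4}(E')^{p^2+p} d_{2,4}(E') d_{4,4}(E)^{p^2}; (5) d_{1,4}(E)^{p} d_{3,4}(E) d_{4,4}(E')^{p} = d_{1,4}(E')^{p} d_{3,4}(E') d_{4,4}(E)^{p}; (6) d_{2,4}(E) d_{3,4}(E)^{p^3+p^2} d_{4,4}(E')^{p^3+p^2} = d_{2,4}(E') d_{3,4}(E')^{p^3+p^2} d_{4,4}(E)^{p^3+p^2}. Then E' = α•E for some α ∈ F^×. -/
open Polynomial Pointwise

/-!
The polynomial `P_E = ∏_{c ∈ E} (X - c)` is additive, so over a perfect infinite field it only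
has monomials `X ^ p ^ j`; it is separable with root `0`, so its coefficient `d_{r,r}(E)` of `X`
is nonzero. Since `P_{αE}(αX) = α ^ |E| • P_E(X)`, we get `E' = α • E` as soon as
`d_i(E') α ^ p ^ (4 - i) = α ^ p ^ 4 d_i(E)` for `1 ≤ i ≤ 4`, that is
`d_i(E') = β ^ w_i d_i(E)` with `β = α ^ (p - 1)` and `w_i = p ^ 3 + ⋯ + p ^ (4 - i)`.
The six hypotheses say that monomials of weight zero in the `d_i` agree, and `β` is read off the
first nonzero one among `d_1, d_3, d_2`: as the `p ^ 3`-th root of `d_1(E') / d_1(E)`; as the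
quotient of the ratios `d_4(E') / d_4(E)` and `d_3(E') / d_3(E)`, whose weights differ by one; as
a `(p + 1)`-th root of the quotient of the ratios for `d_4` and `d_2`; or else as any root of
`β ^ w_4 = d_4(E') / d_4(E)`.
-/

namespace Polynomial

theorem eval_mul_eq_of_coeff {R : Type*} [CommRing R] {P Q : R[X]} {α : R} {n : ℕ}
    (h : ∀ m, Q.coeff m * α ^ m = α ^ n * P.coeff m) (x : R) :
    Q.eval (α * x) = α ^ n * P.eval x := by
  have : Q.comp (C α * X) = C (α ^ n) * P := by ext m; rw [comp_C_mul_X_coeff, coeff_C_mul, h]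
  simpa using congrArg (eval x) this

variable {F : Type*} [Field F] [Infinite F] {f : F[X]}

theorem taylor_eq_add_C_of_eval_add (hf : ∀ x y, f.eval (x + y) = f.eval x + f.eval y) (y : F) :
    taylor y f = f + C (f.eval y) :=
  Polynomial.funext fun x => by rw [taylor_eval, eval_add, eval_C, hf]

theorem derivative_eq_C_of_eval_add (hf : ∀ x y, f.eval (x + y) = f.eval x + f.eval y) :
    derivative f = C (f.coeff 1) :=
  Polynomial.funext fun y => by
    rw [← taylor_coeff_one, taylor_eq_add_C_of_eval_add hf, coeff_add, coeff_C, eval_C,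
      if_neg one_ne_zero, add_zero]

theorem coeff_eq_zero_of_eval_add (p : ℕ) [hp : Fact p.Prime] [CharP F p] [PerfectRing F p]
    (hf : ∀ x y, f.eval (x + y) = f.eval x + f.eval y) {m : ℕ} (hm : ∀ i, m ≠ p ^ i) :
    f.coeff m = 0 := by
  induction hn : f.natDegree using Nat.strong_induction_on generalizing f m with
  | _ n ih =>
  obtain rfl | hm₀ := eq_or_ne m 0
  · simpa [coeff_zero_eq_eval_zero] using hf 0 0
  have hm₁ : m ≠ 1 := by simpa using hm 0
  obtain hnm | hmn := lt_or_ge n m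
  · exact coeff_eq_zero_of_natDegree_lt (hn ▸ hnm)
  -- `f - c X` has zero derivative, hence is `G (X ^ p)`, and `G` is again additive
  obtain ⟨G, hGg⟩ : ∃ G, expand F p G = f - C (f.coeff 1) * X :=
    ⟨_, expand_contract p (by simp [derivative_eq_C_of_eval_add hf]) hp.out.ne_zero⟩
  have hGf : ∀ x, G.eval (x ^ p) = f.eval x - f.coeff 1 * x := fun x => by
    rw [← expand_eval, hGg]; simp
  have hG : ∀ x y, G.eval (x + y) = G.eval x + G.eval y := by
    intro x y
    obtain ⟨x, rfl⟩ := surjective_frobenius F p x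
    obtain ⟨y, rfl⟩ := surjective_frobenius F p y
    simp only [frobenius_def, ← add_pow_char, hGf, hf]
    ring
  have hGn : G.natDegree < n := by
    have : G.natDegree * p ≤ n := by
      rw [← natDegree_expand, hGg, ← hn]
      exact natDegree_sub_le_of_le le_rfl ((natDegree_C_mul_le _ _).trans natDegree_X_le) |>.trans
        (by omega)
    nlinarith [hp.out.two_le, show 2 ≤ n by omega]
  have hfg : f.coeff m = (expand F p G).coeff m := by simp [hGg, coeff_X, hm₁.symm]
  rw [hfg, coeff_expand hp.out.pos]
  split_ifs with hpm
  · exact ih _ hGn hG (fun i hi => hm (i + 1) (by rw [pow_succ, ← hi, Nat.div_mul_cancel hpm])) rfl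
  · rfl

end Polynomial

section SubspacePoly

variable {F : Type*} [Field F] (E : AddSubgroup F) [Fintype E]

noncomputable def subspacePoly : F[X] := ∏ c : E, (X - C (c : F))

theorem dCoef_eq_coeff (p r i : ℕ) : dCoef p r i E = (subspacePoly E).coeff (p ^ (r - i)) := rfl

theorem subspacePoly_monic : (subspacePoly E).Monic :=
  monic_prod_of_monic _ _ fun _ _ => monic_X_sub_C _

theorem natDegree_subspacePoly : (subspacePoly E).natDegree = Fintype.card E := by
  simp [subspacePoly]

theorem coeff_card_subspacePoly : (subspacePoly E).coeff (Fintype.card E) = 1 := by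
  rw [← natDegree_subspacePoly, (subspacePoly_monic E).coeff_natDegree]

theorem eval_subspacePoly_eq_zero_iff {x : F} : (subspacePoly E).eval x = 0 ↔ x ∈ E := by
  simp [subspacePoly, eval_prod, Finset.prod_eq_zero_iff, sub_eq_zero]

theorem eval_subspacePoly_add_mem {e : F} (he : e ∈ E) (x : F) :
    (subspacePoly E).eval (x + e) = (subspacePoly E).eval x := by
  simp only [subspacePoly, eval_prod, eval_sub, eval_X, eval_C]
  exact Fintype.prod_equiv (Equiv.subRight ⟨e, he⟩) _ _ fun c => by simp; ring

theorem eval_subspacePoly_add (x y : F) :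
    (subspacePoly E).eval (x + y) = (subspacePoly E).eval x + (subspacePoly E).eval y := by
  -- `P(X + y) - P(X)` has degree `< |E|` and takes the value `P(y)` at every point of `E`
  suffices taylor y (subspacePoly E) = subspacePoly E + C ((subspacePoly E).eval y) by
    simpa [taylor_eval] using congrArg (eval x) this
  have hP := subspacePoly_monic E
  refine eq_of_degree_sub_lt_of_eval_finset_eq (Finset.univ.map (.subtype (· ∈ E))) ?_ ?_
  · have hdeg : degree (taylor y (subspacePoly E) - subspacePoly E) < degree (subspacePoly E) := by
      simpa using degree_sub_lt_left (degree_taylor _ y) (by simpa using hP.ne_zero)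
        (leadingCoeff_taylor y _)
    rw [Finset.card_map, Finset.card_univ, ← natDegree_subspacePoly,
      ← degree_eq_natDegree hP.ne_zero, ← sub_sub]
    refine (degree_sub_le _ _).trans_lt (max_lt hdeg (degree_C_le.trans_lt ?_))
    rw [degree_eq_natDegree hP.ne_zero, natDegree_subspacePoly]
    exact_mod_cast Fintype.card_pos_iff.2 ⟨0⟩
  · simp only [Finset.mem_map, Finset.mem_univ, true_and, Function.Embedding.coe_subtype,
      Subtype.exists, exists_prop, exists_eq_right, taylor_eval, eval_add, eval_C]
    intro e he
    rw [add_comm e, eval_subspacePoly_add_mem E he, (eval_subspacePoly_eq_zero_iff E).2 he,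
      zero_add]

theorem coeff_one_subspacePoly_ne_zero : (subspacePoly E).coeff 1 ≠ 0 := by
  have hsep : (subspacePoly E).Separable := separable_prod_X_sub_C_iff.2 Subtype.val_injective
  have h₀ : (subspacePoly E).eval 0 = 0 := (eval_subspacePoly_eq_zero_iff E).2 E.zero_mem
  rw [← taylor_zero (subspacePoly E), taylor_coeff_one]
  simpa using hsep.aeval_derivative_ne_zero (x := (0 : F)) (by simpa using h₀)

theorem dCoef_self_ne_zero (p r : ℕ) : dCoef p r r E ≠ 0 := by
  simpa [dCoef_eq_coeff] using coeff_one_subspacePoly_ne_zero E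

end SubspacePoly

section Dilation

variable {F : Type*} [Field F] {E E' : AddSubgroup F} [Fintype E] [Fintype E']

theorem coe_eq_smul_of_eval_subspacePoly {α : F} (hα : α ≠ 0) {n : ℕ}
    (h : ∀ x, (subspacePoly E').eval (α * x) = α ^ n * (subspacePoly E).eval x) :
    (E' : Set F) = α • (E : Set F) := by
  ext x
  rw [Set.mem_smul_set_iff_inv_smul_mem₀ hα, SetLike.mem_coe, SetLike.mem_coe,
    ← eval_subspacePoly_eq_zero_iff, ← eval_subspacePoly_eq_zero_iff, smul_eq_mul]
  have hx := h (α⁻¹ * x)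
  rw [mul_inv_cancel_left₀ hα] at hx
  rw [hx, mul_eq_zero, or_iff_right (pow_ne_zero _ hα)]

theorem coe_eq_smul_of_dCoef [Infinite F] {p : ℕ} [Fact p.Prime] [CharP F p] [PerfectRing F p]
    {r : ℕ} (hE : Fintype.card E = p ^ r) (hE' : Fintype.card E' = p ^ r) {α : F} (hα : α ≠ 0)
    (h : ∀ i, 1 ≤ i → i ≤ r → dCoef p r i E' * α ^ p ^ (r - i) = α ^ p ^ r * dCoef p r i E) :
    (E' : Set F) = α • (E : Set F) := by
  refine coe_eq_smul_of_eval_subspacePoly hα (n := p ^ r) (eval_mul_eq_of_coeff fun m => ?_)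
  by_cases hm : ∃ j, m = p ^ j
  · obtain ⟨j, rfl⟩ := hm
    obtain hjr | rfl | hrj := lt_trichotomy j r
    · simpa [dCoef_eq_coeff, Nat.sub_sub_self hjr.le] using h (r - j) (by omega) (by omega)
    · rw [← hE, coeff_card_subspacePoly, hE, ← hE', coeff_card_subspacePoly]
      ring
    · have hlt : p ^ r < p ^ j := Nat.pow_lt_pow_right (Fact.out : p.Prime).one_lt hrj
      rw [coeff_eq_zero_of_natDegree_lt (by rwa [natDegree_subspacePoly, hE']),
        coeff_eq_zero_of_natDegree_lt (by rwa [natDegree_subspacePoly, hE])]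
      ring
  · push Not at hm
    rw [coeff_eq_zero_of_eval_add p (eval_subspacePoly_add E) hm,
      coeff_eq_zero_of_eval_add p (eval_subspacePoly_add E') hm]
    ring

end Dilation

section WeightedScaling

variable {F : Type*} [Field F] {p : ℕ} {a₁ a₂ a₃ a₄ b₁ b₂ b₃ b₄ : F}

def IsWeightedScaling (p : ℕ) (β a₁ a₂ a₃ a₄ b₁ b₂ b₃ b₄ : F) : Prop :=
  b₁ = β ^ p ^ 3 * a₁ ∧ b₂ = β ^ (p ^ 3 + p ^ 2) * a₂ ∧ b₃ = β ^ (p ^ 3 + p ^ 2 + p) * a₃ ∧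
    b₄ = β ^ (p ^ 3 + p ^ 2 + p + 1) * a₄

theorem exists_isWeightedScaling_of_a₁_ne_zero [IsAlgClosed F] [Fact p.Prime] [CharP F p]
    (ha₁ : a₁ ≠ 0) (ha₄ : a₄ ≠ 0) (hb₄ : b₄ ≠ 0)
    (h1 : a₁ ^ (p ^ 3 + p ^ 2 + p + 1) * b₄ ^ p ^ 3 = b₁ ^ (p ^ 3 + p ^ 2 + p + 1) * a₄ ^ p ^ 3)
    (h4 : a₁ ^ (p ^ 2 + p) * a₂ * b₄ ^ p ^ 2 = b₁ ^ (p ^ 2 + p) * b₂ * a₄ ^ p ^ 2)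
    (h5 : a₁ ^ p * a₃ * b₄ ^ p = b₁ ^ p * b₃ * a₄ ^ p) :
    ∃ β, IsWeightedScaling p β a₁ a₂ a₃ a₄ b₁ b₂ b₃ b₄ := by
  obtain ⟨β, hβ⟩ := IsAlgClosed.exists_pow_nat_eq (b₁ / a₁) (pow_pos (Fact.out : p.Prime).pos 3)
  obtain rfl : b₁ = β ^ p ^ 3 * a₁ := by rw [hβ, div_mul_cancel₀ _ ha₁]
  obtain rfl : b₄ = β ^ (p ^ 3 + p ^ 2 + p + 1) * a₄ := by
    apply (iterateFrobenius F p 3).injective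
    simp only [iterateFrobenius_def]
    apply mul_left_cancel₀ (pow_ne_zero (p ^ 3 + p ^ 2 + p + 1) ha₁)
    linear_combination h1
  have hβ₀ : β ≠ 0 := by rintro rfl; simp at hb₄
  refine ⟨β, rfl, ?_, ?_, rfl⟩
  · apply mul_left_cancel₀ (a := β ^ (p ^ 5 + p ^ 4) * a₁ ^ (p ^ 2 + p) * a₄ ^ p ^ 2)
      (by simp [hβ₀, ha₁, ha₄])
    linear_combination -h4
  · apply mul_left_cancel₀ (a := β ^ p ^ 4 * a₁ ^ p * a₄ ^ p) (by simp [hβ₀, ha₁, ha₄])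
    linear_combination -h5

theorem exists_isWeightedScaling_of_b₃_ne_zero (hb₃ : b₃ ≠ 0) (ha₄ : a₄ ≠ 0)
    (ha₁ : a₁ = 0) (hb₁ : b₁ = 0)
    (h3 : a₃ ^ (p ^ 3 + p ^ 2 + p + 1) * b₄ ^ (p ^ 3 + p ^ 2 + p) =
      b₃ ^ (p ^ 3 + p ^ 2 + p + 1) * a₄ ^ (p ^ 3 + p ^ 2 + p))
    (h6 : a₂ * a₃ ^ (p ^ 3 + p ^ 2) * b₄ ^ (p ^ 3 + p ^ 2) =
      b₂ * b₃ ^ (p ^ 3 + p ^ 2) * a₄ ^ (p ^ 3 + p ^ 2)) :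
    ∃ β, IsWeightedScaling p β a₁ a₂ a₃ a₄ b₁ b₂ b₃ b₄ := by
  refine ⟨b₄ * a₃ / (a₄ * b₃), by simp [ha₁, hb₁], ?_, ?_, ?_⟩ <;>
    rw [div_pow, div_mul_eq_mul_div, eq_div_iff (by simp [ha₄, hb₃])]
  · linear_combination -h6
  · linear_combination -h3
  · linear_combination (-b₄ * a₄) * h3

theorem exists_isWeightedScaling_of_b₂_ne_zero [IsAlgClosed F] (hb₂ : b₂ ≠ 0) (ha₄ : a₄ ≠ 0)
    (ha₁ : a₁ = 0) (hb₁ : b₁ = 0) (ha₃ : a₃ = 0) (hb₃ : b₃ = 0)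
    (h2 : a₂ ^ (p ^ 2 + 1) * b₄ ^ p ^ 2 = b₂ ^ (p ^ 2 + 1) * a₄ ^ p ^ 2) :
    ∃ β, IsWeightedScaling p β a₁ a₂ a₃ a₄ b₁ b₂ b₃ b₄ := by
  obtain ⟨β, hβ⟩ := IsAlgClosed.exists_pow_nat_eq (b₄ * a₂ / (a₄ * b₂)) (n := p + 1) (by omega)
  refine ⟨β, by simp [ha₁, hb₁], ?_, by simp [ha₃, hb₃], ?_⟩
  · rw [show p ^ 3 + p ^ 2 = (p + 1) * p ^ 2 by ring, pow_mul, hβ, div_pow, div_mul_eq_mul_div,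
      eq_div_iff (by simp [ha₄, hb₂])]
    linear_combination -h2
  · rw [show p ^ 3 + p ^ 2 + p + 1 = (p + 1) * (p ^ 2 + 1) by ring, pow_mul, hβ, div_pow,
      div_mul_eq_mul_div, eq_div_iff (by simp [ha₄, hb₂])]
    linear_combination (-b₄ * a₄) * h2

theorem exists_isWeightedScaling_of_eq_zero [IsAlgClosed F] (ha₄ : a₄ ≠ 0)
    (ha₁ : a₁ = 0) (hb₁ : b₁ = 0) (ha₂ : a₂ = 0) (hb₂ : b₂ = 0) (ha₃ : a₃ = 0) (hb₃ : b₃ = 0) :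
    ∃ β, IsWeightedScaling p β a₁ a₂ a₃ a₄ b₁ b₂ b₃ b₄ := by
  obtain ⟨β, hβ⟩ := IsAlgClosed.exists_pow_nat_eq (b₄ / a₄) (n := p ^ 3 + p ^ 2 + p + 1) (by omega)
  exact ⟨β, by simp [*], by simp [*], by simp [*], by rw [hβ, div_mul_cancel₀ _ ha₄]⟩

theorem eq_zero_iff_of_pow_mul_eq {a b c d : F} {n : ℕ} (hn : n ≠ 0) (hc : c ≠ 0) (hd : d ≠ 0)
    (h : a ^ n * c = b ^ n * d) : a = 0 ↔ b = 0 := by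
  constructor <;> rintro rfl <;> simpa [hn, hc, hd, eq_comm] using h

theorem exists_isWeightedScaling [IsAlgClosed F] [Fact p.Prime] [CharP F p]
    (ha₄ : a₄ ≠ 0) (hb₄ : b₄ ≠ 0)
    (h1 : a₁ ^ (p ^ 3 + p ^ 2 + p + 1) * b₄ ^ p ^ 3 = b₁ ^ (p ^ 3 + p ^ 2 + p + 1) * a₄ ^ p ^ 3)
    (h2 : a₂ ^ (p ^ 2 + 1) * b₄ ^ p ^ 2 = b₂ ^ (p ^ 2 + 1) * a₄ ^ p ^ 2)
    (h3 : a₃ ^ (p ^ 3 + p ^ 2 + p + 1) * b₄ ^ (p ^ 3 + p ^ 2 + p) =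
      b₃ ^ (p ^ 3 + p ^ 2 + p + 1) * a₄ ^ (p ^ 3 + p ^ 2 + p))
    (h4 : a₁ ^ (p ^ 2 + p) * a₂ * b₄ ^ p ^ 2 = b₁ ^ (p ^ 2 + p) * b₂ * a₄ ^ p ^ 2)
    (h5 : a₁ ^ p * a₃ * b₄ ^ p = b₁ ^ p * b₃ * a₄ ^ p)
    (h6 : a₂ * a₃ ^ (p ^ 3 + p ^ 2) * b₄ ^ (p ^ 3 + p ^ 2) =
      b₂ * b₃ ^ (p ^ 3 + p ^ 2) * a₄ ^ (p ^ 3 + p ^ 2)) :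
    ∃ β, IsWeightedScaling p β a₁ a₂ a₃ a₄ b₁ b₂ b₃ b₄ := by
  have ha₄' : ∀ n, a₄ ^ n ≠ 0 := fun n => pow_ne_zero n ha₄
  have hb₄' : ∀ n, b₄ ^ n ≠ 0 := fun n => pow_ne_zero n hb₄
  have h₁ := eq_zero_iff_of_pow_mul_eq (by positivity) (hb₄' _) (ha₄' _) h1
  have h₂ := eq_zero_iff_of_pow_mul_eq (by positivity) (hb₄' _) (ha₄' _) h2
  have h₃ := eq_zero_iff_of_pow_mul_eq (by positivity) (hb₄' _) (ha₄' _) h3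
  obtain ha₁ | ha₁ := ne_or_eq a₁ 0
  · exact exists_isWeightedScaling_of_a₁_ne_zero ha₁ ha₄ hb₄ h1 h4 h5
  obtain ha₃ | ha₃ := ne_or_eq a₃ 0
  · exact exists_isWeightedScaling_of_b₃_ne_zero (mt h₃.2 ha₃) ha₄ ha₁ (h₁.1 ha₁) h3 h6
  obtain ha₂ | ha₂ := ne_or_eq a₂ 0
  · exact exists_isWeightedScaling_of_b₂_ne_zero (mt h₂.2 ha₂) ha₄ ha₁ (h₁.1 ha₁) ha₃ (h₃.1 ha₃)
      h2
  · exact exists_isWeightedScaling_of_eq_zero ha₄ ha₁ (h₁.1 ha₁) ha₂ (h₂.1 ha₂) ha₃ (h₃.1 ha₃)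

theorem exists_pow_mul_eq_of_isWeightedScaling [IsAlgClosed F] (hp : 1 < p) {β : F}
    (hb₄ : b₄ ≠ 0) (hβ : IsWeightedScaling p β a₁ a₂ a₃ a₄ b₁ b₂ b₃ b₄) :
    ∃ α ≠ 0, b₁ * α ^ p ^ 3 = α ^ p ^ 4 * a₁ ∧ b₂ * α ^ p ^ 2 = α ^ p ^ 4 * a₂ ∧
      b₃ * α ^ p = α ^ p ^ 4 * a₃ ∧ b₄ * α = α ^ p ^ 4 * a₄ := by
  obtain ⟨q, rfl⟩ : ∃ q, p = q + 1 := ⟨p - 1, by omega⟩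
  obtain ⟨α, rfl⟩ := IsAlgClosed.exists_pow_nat_eq β (n := q) (by omega)
  obtain ⟨rfl, rfl, rfl, rfl⟩ := hβ
  refine ⟨α, ?_, ?_, ?_, ?_, ?_⟩
  · rintro rfl
    simp [show q ≠ 0 by omega] at hb₄
  all_goals ring

end WeightedScaling

/-- Over an algebraically closed `F`, the six invariants
`v_1, v_2, v_3, v_{12}, v_{13}, v_{32}` separate the dilation classes of finite
subgroups of rank `4`. -/
theorem statement9 {F : Type*} [Field F] [IsAlgClosed F] {p : ℕ} [Fact p.Prime]
    [CharP F p] (E E' : AddSubgroup F) [Fintype E] [Fintype E']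
    (hE : Fintype.card E = p ^ 4) (hE' : Fintype.card E' = p ^ 4)
    (h1 : dCoef p 4 1 E ^ (p ^ 3 + p ^ 2 + p + 1) * dCoef p 4 4 E' ^ p ^ 3 =
      dCoef p 4 1 E' ^ (p ^ 3 + p ^ 2 + p + 1) * dCoef p 4 4 E ^ p ^ 3)
    (h2 : dCoef p 4 2 E ^ (p ^ 2 + 1) * dCoef p 4 4 E' ^ p ^ 2 =
      dCoef p 4 2 E' ^ (p ^ 2 + 1) * dCoef p 4 4 E ^ p ^ 2)
    (h3 : dCoef p 4 3 E ^ (p ^ 3 + p ^ 2 + p + 1) * dCoef p 4 4 E' ^ (p ^ 3 + p ^ 2 + p) =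
      dCoef p 4 3 E' ^ (p ^ 3 + p ^ 2 + p + 1) * dCoef p 4 4 E ^ (p ^ 3 + p ^ 2 + p))
    (h4 : dCoef p 4 1 E ^ (p ^ 2 + p) * dCoef p 4 2 E * dCoef p 4 4 E' ^ p ^ 2 =
      dCoef p 4 1 E' ^ (p ^ 2 + p) * dCoef p 4 2 E' * dCoef p 4 4 E ^ p ^ 2)
    (h5 : dCoef p 4 1 E ^ p * dCoef p 4 3 E * dCoef p 4 4 E' ^ p =
      dCoef p 4 1 E' ^ p * dCoef p 4 3 E' * dCoef p 4 4 E ^ p)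
    (h6 : dCoef p 4 2 E * dCoef p 4 3 E ^ (p ^ 3 + p ^ 2) * dCoef p 4 4 E' ^ (p ^ 3 + p ^ 2) =
      dCoef p 4 2 E' * dCoef p 4 3 E' ^ (p ^ 3 + p ^ 2) * dCoef p 4 4 E ^ (p ^ 3 + p ^ 2)) :
    ∃ α : F, α ≠ 0 ∧ (E' : Set F) = α • (E : Set F) := by
  have ha₄ := dCoef_self_ne_zero E p 4
  have hb₄ := dCoef_self_ne_zero E' p 4
  obtain ⟨β, hβ⟩ := exists_isWeightedScaling ha₄ hb₄ h1 h2 h3 h4 h5 h6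
  obtain ⟨α, hα, h₁, h₂, h₃, h₄⟩ :=
    exists_pow_mul_eq_of_isWeightedScaling (Fact.out : p.Prime).one_lt hb₄ hβ
  refine ⟨α, hα, coe_eq_smul_of_dCoef hE hE' hα fun i hi₁ hi₄ => ?_⟩
  interval_cases i
  exacts [h₁, h₂, by simpa using h₃, by simpa using h₄]
end

section
/- Let p be a prime and let i, j, r be positive integers with i < r and j < r such that gcd(r, i) divides j. Then there exist positive integers a and b such that p^{r-j}(p^j − 1) + a·p^{r-i}(p^i − 1) = b(p^r − 1). -/
/-!
Modulo `N = p^r - 1` we have `p^r ≡ 1`, so `p^(r-k) (p^k - 1) ≡ 1 - p^(r-k)` and it suffices that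
`p^(r-i) - 1` divides `p^(r-j) - 1` in `ZMod N`. In any commutative ring in which `x^r = 1`, modulo
`x^u - 1` the element `x` satisfies `x^gcd(r,u) = 1`; with `u = r - i` this gcd is `gcd(r, i)`, which
divides `r - j`.
-/

theorem pow_sub_one_dvd_pow_sub_one_of_gcd_dvd {R : Type*} [CommRing R] {x : R} {r u v : ℕ}
    (hx : x ^ r = 1) (h : Nat.gcd r u ∣ v) : x ^ u - 1 ∣ x ^ v - 1 := by
  set q := Ideal.Quotient.mk (Ideal.span {x ^ u - 1})
  have hu : q x ^ u = 1 := by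
    rw [← sub_eq_zero, ← map_pow, ← map_one q, ← map_sub, Ideal.Quotient.eq_zero_iff_dvd]
  have hr : q x ^ r = 1 := by rw [← map_pow, hx, map_one]
  obtain ⟨c, rfl⟩ := h
  rw [← Ideal.Quotient.eq_zero_iff_dvd, map_sub, map_pow, map_one, sub_eq_zero, pow_mul,
    pow_gcd_eq_one.mpr ⟨hr, hu⟩, one_pow]

theorem pow_sub_mul_pow_sub_one_of_pow_eq_one {R : Type*} [CommRing R] {x : R} {r k : ℕ}
    (hx : x ^ r = 1) (hk : k ≤ r) : x ^ (r - k) * (x ^ k - 1) = -(x ^ (r - k) - 1) := by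
  rw [mul_sub, pow_sub_mul_pow x hk, hx]
  ring

theorem exists_pos_dvd_add_mul_of_natCast_dvd {N y z : ℕ} (hN : N ≠ 0)
    (h : (z : ZMod N) ∣ y) : ∃ a, 0 < a ∧ N ∣ y + a * z := by
  have : NeZero N := ⟨hN⟩
  obtain ⟨c, hc⟩ := h
  refine ⟨(-c).val + N, by omega, ?_⟩
  rw [← ZMod.natCast_eq_zero_iff]
  push_cast
  rw [ZMod.natCast_zmod_val, ZMod.natCast_self, hc]
  ring

theorem statement10_general (p : ℕ) (hp : p.Prime) (i j r : ℕ)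
    (hj : 0 < j) (hir : i < r) (hjr : j < r)
    (hd : Nat.gcd r i ∣ j) :
    ∃ a b : ℕ, 0 < a ∧ 0 < b ∧
      p ^ (r - j) * (p ^ j - 1) + a * (p ^ (r - i) * (p ^ i - 1)) = b * (p ^ r - 1) := by
  set N := p ^ r - 1
  have hN : N ≠ 0 := (Nat.sub_pos_of_lt (Nat.one_lt_pow (by omega) hp.one_lt)).ne'
  have hpr : (p : ZMod N) ^ r = 1 := by
    have := ZMod.natCast_self N
    rwa [Nat.cast_sub (Nat.one_le_pow _ _ hp.pos), sub_eq_zero, Nat.cast_pow, Nat.cast_one] at this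
  have hgcd : Nat.gcd r (r - i) ∣ r - j := by
    rw [Nat.gcd_self_sub_right hir.le]
    exact Nat.dvd_sub (Nat.gcd_dvd_left r i) hd
  obtain ⟨a, ha, b, hb⟩ := exists_pos_dvd_add_mul_of_natCast_dvd hN
    (y := p ^ (r - j) * (p ^ j - 1)) (z := p ^ (r - i) * (p ^ i - 1)) (by
      push_cast [Nat.one_le_pow _ _ hp.pos]
      rw [pow_sub_mul_pow_sub_one_of_pow_eq_one hpr hjr.le,
        pow_sub_mul_pow_sub_one_of_pow_eq_one hpr hir.le, neg_dvd, dvd_neg]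
      exact pow_sub_one_dvd_pow_sub_one_of_gcd_dvd hpr hgcd)
  have hpos : 0 < p ^ (r - j) * (p ^ j - 1) :=
    Nat.mul_pos (pow_pos hp.pos _) (Nat.sub_pos_of_lt (Nat.one_lt_pow hj.ne' hp.one_lt))
  refine ⟨a, b, ha, Nat.pos_of_ne_zero ?_, hb.trans (mul_comm _ _)⟩
  rintro rfl
  omega

/-- If `gcd(r, i)` divides `j` (with `0 < i < r`, `0 < j < r`), then
there are positive integers `a, b` with
`p^{r-j}(p^j - 1) + a p^{r-i}(p^i - 1) = b (p^r - 1)`. -/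
theorem statement10 (p : ℕ) (hp : p.Prime) (i j r : ℕ)
    (hi : 0 < i) (hj : 0 < j) (hir : i < r) (hjr : j < r)
    (hd : Nat.gcd r i ∣ j) :
    ∃ a b : ℕ, 0 < a ∧ 0 < b ∧
      p ^ (r - j) * (p ^ j - 1) + a * (p ^ (r - i) * (p ^ i - 1)) = b * (p ^ r - 1) :=
  statement10_general p hp i j r hj hir hjr hd
end

section
/- Let p be a prime and let i, j, r be positive integers with i < r, j < r, gcd(r, i) = 2, and j odd. Then: (1) for all nonnegative integers a_j, a_i, a_r satisfying a_j·p^{r-j}(p^j − 1) + a_i·p^{r-i}(p^i − 1) = a_r(p^r − 1), the integer p + 1 divides a_j; and (2) there exist positive integers a and b such that (p+1)·p^{r-j}(p^j − 1) + a·p^{r-i}(p^i − 1) = b(p^r − 1). -/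
/-- If `gcd(r, i) = 2` and `j` is odd (with `0 < i < r`, `0 < j < r`),
then (1) in any nonnegative solution of
`a_j p^{r-j}(p^j-1) + a_i p^{r-i}(p^i-1) = a_r (p^r-1)` the integer `p + 1`
divides `a_j`, and (2) there are positive integers `a, b` with
`(p+1) p^{r-j}(p^j-1) + a p^{r-i}(p^i-1) = b (p^r-1)`. -/
theorem statement11 (p : ℕ) (hp : p.Prime) (i j r : ℕ)
    (hi : 0 < i) (hj : 0 < j) (hir : i < r) (hjr : j < r)
    (hg : Nat.gcd r i = 2) (hodd : Odd j) :
    (∀ aj ai ar : ℕ,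
      aj * (p ^ (r - j) * (p ^ j - 1)) + ai * (p ^ (r - i) * (p ^ i - 1)) =
        ar * (p ^ r - 1) → (p + 1) ∣ aj) ∧
    (∃ a b : ℕ, 0 < a ∧ 0 < b ∧
      (p + 1) * (p ^ (r - j) * (p ^ j - 1)) + a * (p ^ (r - i) * (p ^ i - 1)) =
        b * (p ^ r - 1)) := by
  have hp2 : 2 ≤ p := hp.two_le
  have h2r : 2 ∣ r := hg ▸ Nat.gcd_dvd_left r i
  have h2i : 2 ∣ i := hg ▸ Nat.gcd_dvd_right r i
  -- q = p^2 - 1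
  set q : ℕ := p ^ 2 - 1 with hq
  have hq_eq : q = (p - 1) * (p + 1) := by
    have h : p ^ 2 = (p - 1) * (p + 1) + 1 := by
      obtain ⟨k, rfl⟩ := Nat.exists_eq_add_of_le hp2
      have h1 : 2 + k - 1 = k + 1 := by omega
      rw [h1]; ring
    rw [hq, h, Nat.add_sub_cancel]
  have hqdvd : ∀ m : ℕ, 2 ∣ m → q ∣ p ^ m - 1 := by
    intro m hm
    obtain ⟨t, rfl⟩ := hm
    have h := Nat.sub_dvd_pow_sub_pow (p ^ 2) 1 t
    simpa [← pow_mul, one_pow] using h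
  have hcopq : Nat.Coprime p q := by
    have h1 : Nat.Coprime (q + 1) q := by
      rw [add_comm]
      exact Nat.coprime_add_self_left.mpr (Nat.coprime_one_left q)
    have hq1 : q + 1 = p ^ 2 := by
      have : 1 ≤ p ^ 2 := Nat.one_le_pow _ _ (by omega)
      omega
    rw [hq1] at h1
    exact Nat.Coprime.coprime_dvd_left (dvd_pow_self p two_ne_zero) h1
  -- geometric quotient: p^j - 1 = (p-1) * s,  coprime (p+1) s
  obtain ⟨s, hs⟩ : (p - 1) ∣ p ^ j - 1 := by
    simpa using Nat.sub_dvd_pow_sub_pow p 1 j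
  have hpj1 : 2 ≤ p ^ j := by
    calc 2 ≤ p := hp2
    _ = p ^ 1 := (pow_one p).symm
    _ ≤ p ^ j := Nat.pow_le_pow_right (by omega) hj
  have hcops : Nat.Coprime (p + 1) s := by
    have hd : (p - 1) * (p + 1) ∣ (p - 1) * (s - 1) := by
      have he : (p - 1) * (s - 1) = p * (p ^ (j - 1) - 1) := by
        have h1 : (p - 1) * (s - 1) = (p - 1) * s - (p - 1) := by
          rw [Nat.mul_sub, mul_one]
        have h2 : p * (p ^ (j - 1) - 1) = p ^ j - p := by
          rw [Nat.mul_sub, mul_one, ← pow_succ']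
          congr 2
          omega
        have hpj : p ≤ p ^ j := by
          calc p = p ^ 1 := (pow_one p).symm
          _ ≤ p ^ j := Nat.pow_le_pow_right (by omega) hj
        rw [h1, ← hs, h2]
        omega
      rw [he, ← hq_eq]
      exact Dvd.dvd.mul_left (hqdvd (j - 1) (Nat.Odd.sub_odd hodd odd_one).two_dvd) p
    have hd2 : (p + 1) ∣ s - 1 :=
      (Nat.mul_dvd_mul_iff_left (show 0 < p - 1 by omega)).mp hd
    obtain ⟨t, ht⟩ := hd2
    rw [mul_comm] at ht
    have hspos : 0 < s := by
      rcases Nat.eq_zero_or_pos s with h0 | h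
      · exfalso; rw [h0, mul_zero] at hs; omega
      · exact h
    have hseq : s = 1 + t * (p + 1) := by omega
    rw [hseq]
    exact (Nat.coprime_add_mul_right_right (p + 1) 1 t).mpr (Nat.coprime_one_right _)
  constructor
  · -- Part 1
    intro aj ai ar h
    have hB : q ∣ ai * (p ^ (r - i) * (p ^ i - 1)) :=
      Dvd.dvd.mul_left (Dvd.dvd.mul_left (hqdvd i h2i) _) ai
    have hC : q ∣ ar * (p ^ r - 1) := Dvd.dvd.mul_left (hqdvd r h2r) ar
    have hA : q ∣ aj * (p ^ (r - j) * (p ^ j - 1)) := by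
      have heq : aj * (p ^ (r - j) * (p ^ j - 1)) =
          ar * (p ^ r - 1) - ai * (p ^ (r - i) * (p ^ i - 1)) := by omega
      rw [heq]
      exact Nat.dvd_sub hC hB
    have hA2 : q ∣ p ^ (r - j) * (aj * (p ^ j - 1)) := by
      have he : p ^ (r - j) * (aj * (p ^ j - 1)) = aj * (p ^ (r - j) * (p ^ j - 1)) := by
        ring
      rw [he]; exact hA
    have hA3 : q ∣ aj * (p ^ j - 1) :=
      (Nat.Coprime.pow_left (r - j) hcopq).symm.dvd_of_dvd_mul_left hA2
    have hA4 : (p - 1) * (p + 1) ∣ (p - 1) * (aj * s) := by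
      rw [← hq_eq]
      have he : (p - 1) * (aj * s) = aj * (p ^ j - 1) := by rw [hs]; ring
      rw [he]; exact hA3
    have hA5 : (p + 1) ∣ aj * s :=
      (Nat.mul_dvd_mul_iff_left (show 0 < p - 1 by omega)).mp hA4
    exact hcops.dvd_of_dvd_mul_right hA5
  · -- Part 2
    have hri2 : 2 ≤ r - i := by omega
    -- Bezout on exponents
    obtain ⟨u, v, hu, huv⟩ : ∃ u v : ℕ, 0 < u ∧ u * (r - i) = 2 + v * r := by
      have hb := Nat.gcd_eq_gcd_ab r i
      rw [hg] at hb
      set A := Nat.gcdA r i with hA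
      set B := Nat.gcdB r i with hB
      set k : ℤ := B.natAbs + 1 with hk
      set B' : ℤ := -B + k * r with hB'
      set A' : ℤ := (A + B) - k * ((r - i : ℕ) : ℤ) with hA'
      have hri : (i : ℤ) = (r : ℤ) - ((r - i : ℕ) : ℤ) := by
        push_cast [Nat.cast_sub hir.le]; ring
      have h2 : (2 : ℤ) = (r : ℤ) * A' + ((r - i : ℕ) : ℤ) * B' := by
        rw [hA', hB']
        have : (2 : ℤ) = (r : ℤ) * A + (i : ℤ) * B := by exact_mod_cast hb
        rw [hri] at this
        linarith [this]
      have hrpos : (1 : ℤ) ≤ r := by exact_mod_cast (show 1 ≤ r by omega)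
      have hBabs : (B : ℤ) ≤ (B.natAbs : ℤ) := Int.le_natAbs
      have hkpos : (1 : ℤ) ≤ k := by rw [hk]; omega
      have hB'pos : 1 ≤ B' := by
        have : k ≤ k * r := le_mul_of_one_le_right (by linarith) hrpos
        rw [hB']
        omega
      have hri2' : (2 : ℤ) ≤ ((r - i : ℕ) : ℤ) := by exact_mod_cast hri2
      have hA'np : A' ≤ 0 := by nlinarith
      refine ⟨B'.toNat, (-A').toNat, ?_, ?_⟩
      · omega
      · have hBt : (B'.toNat : ℤ) = B' := Int.toNat_of_nonneg (by omega)
        have hAt : ((-A').toNat : ℤ) = -A' := Int.toNat_of_nonneg (by omega)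
        have : (B'.toNat : ℤ) * ((r - i : ℕ) : ℤ) = 2 + ((-A').toNat : ℤ) * (r : ℤ) := by
          rw [hBt, hAt]; linarith [h2]
        exact_mod_cast this
    set n : ℕ := p ^ r - 1 with hn
    have hpr : 4 ≤ p ^ r := by
      calc (4 : ℕ) = 2 ^ 2 := by norm_num
      _ ≤ p ^ 2 := Nat.pow_le_pow_left hp2 2
      _ ≤ p ^ r := Nat.pow_le_pow_right (by omega) (by omega)
    have hnpos : 0 < n := by omega
    haveI : NeZero n := ⟨by omega⟩
    set Q : ZMod n := (p : ZMod n) with hQ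
    have hQr : Q ^ r = 1 := by
      have h1 : ((p ^ r : ℕ) : ZMod n) = ((n + 1 : ℕ) : ZMod n) := by
        congr 1; omega
      rw [Nat.cast_add, Nat.cast_one, ZMod.natCast_self, zero_add] at h1
      rw [hQ, ← Nat.cast_pow, h1]
    -- c with 1 - Q^2 = (1 - Q^(r-i)) * c
    obtain ⟨c, hc⟩ : ∃ c : ZMod n, 1 - Q ^ 2 = (1 - Q ^ (r - i)) * c := by
      have hdvd : (1 - Q ^ (r - i)) ∣ (1 - (Q ^ (r - i)) ^ u) := by
        simpa using sub_dvd_pow_sub_pow (1 : ZMod n) (Q ^ (r - i)) u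
      have he : (Q ^ (r - i)) ^ u = Q ^ 2 := by
        rw [← pow_mul, mul_comm (r - i) u, huv, pow_add, mul_comm v r, pow_mul, hQr,
          one_pow, mul_one]
      rw [he] at hdvd
      exact hdvd
    -- r - j is odd
    obtain ⟨m, hm⟩ : Odd (r - j) :=
      Nat.Even.sub_odd hjr.le (even_iff_two_dvd.mpr h2r) hodd
    obtain ⟨g, hgm⟩ : ∃ g : ZMod n, (Q ^ 2) ^ m - 1 = (Q ^ 2 - 1) * g := by
      have hdvd : (Q ^ 2 - 1) ∣ ((Q ^ 2) ^ m - 1) := by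
        simpa using sub_dvd_pow_sub_pow (Q ^ 2) (1 : ZMod n) m
      exact hdvd
    set x : ZMod n := -c * ((Q + 1) * Q * g + 1) with hx_def
    have hQrj : Q ^ (r - j) = (Q ^ 2) ^ m * Q := by
      rw [← pow_mul, ← pow_succ, hm]
    have hx : (1 - Q ^ (r - i)) * x = (Q + 1) * (Q ^ (r - j) - 1) := by
      rw [hQrj, hx_def]
      linear_combination ((Q + 1) * Q * g + 1) * hc - (Q + 1) * Q * hgm
    set a : ℕ := x.val + n with ha_def
    have ha0 : 0 < a := by omega
    have hacast : ((a : ℕ) : ZMod n) = x := by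
      rw [ha_def, Nat.cast_add, ZMod.natCast_self, add_zero, ZMod.natCast_zmod_val]
    have hdvd : n ∣ (p + 1) * (p ^ (r - j) * (p ^ j - 1)) + a * (p ^ (r - i) * (p ^ i - 1)) := by
      rw [← ZMod.natCast_eq_zero_iff]
      have h1j : 1 ≤ p ^ j := by omega
      have h1i : 1 ≤ p ^ i := Nat.one_le_pow _ _ (by omega)
      push_cast [Nat.cast_sub h1j, Nat.cast_sub h1i]
      rw [hacast]
      have e1 : Q ^ (r - j) * (Q ^ j - 1) = 1 - Q ^ (r - j) := by
        rw [mul_sub, mul_one, ← pow_add, Nat.sub_add_cancel hjr.le, hQr]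
      have e2 : Q ^ (r - i) * (Q ^ i - 1) = 1 - Q ^ (r - i) := by
        rw [mul_sub, mul_one, ← pow_add, Nat.sub_add_cancel hir.le, hQr]
      rw [← hQ, e1, e2]
      linear_combination hx
    obtain ⟨b, hb⟩ := hdvd
    refine ⟨a, b, ha0, ?_, ?_⟩
    · have hT : 0 < (p + 1) * (p ^ (r - j) * (p ^ j - 1)) := by
        have h1 : 1 ≤ p ^ (r - j) := Nat.one_le_pow _ _ (by omega)
        have h2 : 1 ≤ p ^ j - 1 := by omega
        positivity
      rcases Nat.eq_zero_or_pos b with h0 | h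
      · exfalso; rw [h0, mul_zero] at hb; omega
      · exact h
    · rw [hb, mul_comm]
end

section
/- Let V be a finite subgroup of (F, +) of rank 3. Then: (i) there exist α ∈ F^× and a subfield K ⊆ F with p^2 elements such that α•K ⊆ V (i.e., the partition λ(V) equals (2,1)) if and only if d_{1,3}(V)^p · d_{2,3}(V) = d_{3,3}(V)^p; and (ii) V = α•K for some α ∈ F^× and some subfield K ⊆ F with p^3 elements (i.e., λ(V) = (3)) if and only if d_{1,3}(V) = 0 and d_{2,3}(V) = 0. -/
/-!
For `γ ≠ 0` in a finite subgroup `W` of `F`, the additive map `x ↦ x ^ p - γ ^ (p - 1) * x` has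
kernel exactly `𝔽_p γ` (it has at most `p` roots), so it maps `W` onto a subgroup of index `p`.
Three such maps in succession kill `V`; since `∏_{c ∈ V} (X - c)` is the only monic polynomial of
degree `p ^ 3` vanishing on `V`, it is their composite `X^{p³} + d₁ X^{p²} + d₂ X^p + d₃ X`, and
`d₃ ≠ 0`.

A dilation `α • K` of a field with `p ^ n` elements lies in the kernel of
`x ↦ x ^ p ^ n - α ^ (p ^ n - 1) * x`, which has at most `p ^ n` elements; conversely, a kernel of
`x ↦ x ^ p ^ n - a * x` with `p ^ n` elements is `α • K` for any of its nonzero elements `α`, with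
`K` the fixed field of the `n`-th power of Frobenius. For (ii), `V` is such a kernel exactly when
`d₁ = d₂ = 0`. For (i), `V ⊇ α • K` with `|K| = p²` exactly when the polynomial of `V` factors as
`(Y ^ p - b Y) ∘ (X ^ p ^ 2 - a X)`, and comparing coefficients, such `a`, `b` exist exactly when
`d₁ ^ p * d₂ = d₃ ^ p` (take `a = -d₃ / d₁`, `b = -d₁`).
-/

open Polynomial Pointwise

theorem AddSubgroup.natCard_eq_natCard_inf_ker_mul_natCard_map {G H : Type*} [AddGroup G]
    [AddGroup H] (ψ : G →+ H) (V : AddSubgroup G) :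
    Nat.card V = Nat.card (V ⊓ ψ.ker : AddSubgroup G) * Nat.card (V.map ψ) := by
  rw [← AddSubgroup.card_mul_index (ψ.domRestrict V).ker, AddSubgroup.index_ker,
    AddMonoidHom.ker_domRestrict, AddMonoidHom.domRestrict_range,
    ← AddSubgroup.inf_addSubgroupOf_left,
    Nat.card_congr (AddSubgroup.addSubgroupOfEquivOfLe inf_le_left).toEquiv]

theorem AddSubgroup.exists_mem_ne_zero_of_one_lt_natCard {G : Type*} [AddGroup G]
    {H : AddSubgroup G} (h : 1 < Nat.card H) : ∃ x ∈ H, x ≠ 0 :=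
  H.bot_or_exists_ne_zero.resolve_left (by rintro rfl; simp at h)

theorem Polynomial.prod_X_sub_C_eq_of_monic {K ι : Type*} [Field K] [Fintype ι] {f : ι → K}
    (hf : Function.Injective f) {P : K[X]} (hP : P.Monic) (hdeg : P.natDegree ≤ Fintype.card ι)
    (hroot : ∀ i, P.IsRoot (f i)) : ∏ i, (X - C (f i)) = P := by
  refine (eq_of_monic_of_dvd_of_natDegree_le
    (monic_prod_of_monic _ _ fun i _ ↦ monic_X_sub_C _) hP ?_ ?_).symm
  · exact Finset.prod_dvd_of_coprime ((pairwise_coprime_X_sub_C hf).set_pairwise _)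
      fun i _ ↦ dvd_iff_isRoot.mpr (hroot i)
  · simpa [natDegree_prod _ _ fun i _ ↦ X_sub_C_ne_zero (f i)] using hdeg

theorem Polynomial.eval_prod_X_sub_C_eq_zero_iff {R S : Type*} [CommRing R] [IsDomain R]
    [SetLike S R] (V : S) [Fintype V] (x : R) :
    (∏ c : V, (X - C (c : R))).eval x = 0 ↔ x ∈ V := by
  simp [eval_prod, Finset.prod_eq_zero_iff, sub_eq_zero]

theorem Polynomial.monic_X_pow_sub_C_mul_X {R : Type*} [Ring R] [Nontrivial R] {q : ℕ}
    (hq : 1 < q) (a : R) : (X ^ q - C a * X).Monic ∧ (X ^ q - C a * X).natDegree = q := by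
  have hlt : (C a * X).natDegree < (X ^ q : R[X]).natDegree := by
    rw [natDegree_X_pow]
    exact (natDegree_C_mul_le a X).trans_lt (natDegree_X_le.trans_lt hq)
  refine ⟨monic_X_pow_sub (degree_lt_degree hlt |>.trans_eq (degree_X_pow q)), ?_⟩
  rw [natDegree_sub_eq_left_of_natDegree_lt hlt, natDegree_X_pow]

theorem Set.natCard_smul_set_of_ne_zero {G₀ : Type*} [GroupWithZero G₀] {a : G₀} (ha : a ≠ 0)
    (s : Set G₀) : Nat.card ↥(a • s) = Nat.card s := by
  simpa [Units.smul_def] using Set.natCard_smul_set (Units.mk0 a ha) s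

theorem Subfield.pow_natCard_eq_self {F : Type*} [Field F] {K : Subfield F} [Finite K] {x : F}
    (hx : x ∈ K) : x ^ Nat.card K = x := by
  have := Fintype.ofFinite K
  rw [Nat.card_eq_fintype_card]
  exact congrArg Subtype.val (FiniteField.pow_card (⟨x, hx⟩ : K))

namespace FieldDecomposition

theorem one_lt_prime_pow (p n : ℕ) [Fact p.Prime] [NeZero n] : 1 < p ^ n :=
  Nat.one_lt_pow (NeZero.ne n) (Fact.out : p.Prime).one_lt

section FrobSubMul

variable {F : Type*} [Field F] {p : ℕ} [hp : Fact p.Prime] [CharP F p]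

variable (p) in
def frobSubMul (n : ℕ) (a : F) : F →+ F :=
  (iterateFrobenius F p n).toAddMonoidHom - AddMonoidHom.mulLeft a

@[simp]
theorem frobSubMul_apply (n : ℕ) (a x : F) : frobSubMul p n a x = x ^ p ^ n - a * x := by
  simp [frobSubMul, iterateFrobenius_def]

theorem mem_ker_frobSubMul {n : ℕ} {a x : F} :
    x ∈ (frobSubMul p n a).ker ↔ x ^ p ^ n = a * x := by
  simp [sub_eq_zero]

theorem coe_ker_frobSubMul (n : ℕ) [NeZero n] (a : F) :
    ((frobSubMul p n a).ker : Set F) = (X ^ p ^ n - C a * X).rootSet F := by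
  ext x
  simp [(monic_X_pow_sub_C_mul_X (one_lt_prime_pow p n) a).1.mem_rootSet, sub_eq_zero]

instance {n : ℕ} [NeZero n] (a : F) : Finite (frobSubMul p n a).ker := by
  rw [← SetLike.coe_sort_coe, coe_ker_frobSubMul]
  exact (rootSet_finite _ F).to_subtype

theorem natCard_ker_frobSubMul_le (n : ℕ) [NeZero n] (a : F) :
    Nat.card (frobSubMul p n a).ker ≤ p ^ n := by
  rw [← SetLike.coe_sort_coe, coe_ker_frobSubMul, Nat.card_coe_set_eq]
  exact (ncard_rootSet_le _ F).trans (monic_X_pow_sub_C_mul_X (one_lt_prime_pow p n) a).2.le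

theorem exists_natCard_map_frobSubMul_eq (V : AddSubgroup F) {k : ℕ}
    (hV : Nat.card V = p ^ (k + 1)) : ∃ a ≠ 0, Nat.card (V.map (frobSubMul p 1 a)) = p ^ k := by
  obtain ⟨γ, hγV, hγ⟩ :=
    AddSubgroup.exists_mem_ne_zero_of_one_lt_natCard (hV ▸ one_lt_prime_pow p (k + 1))
  set φ := frobSubMul p 1 (γ ^ (p - 1))
  have hγφ : γ ∈ φ.ker := by
    rw [mem_ker_frobSubMul, pow_one, ← pow_succ, Nat.sub_add_cancel hp.out.one_le]
  have hγp : Nat.card (AddSubgroup.zmultiples γ) = p := by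
    rw [Nat.card_zmultiples, addOrderOf_eq_prime (p := p) _ hγ]
    simp [nsmul_eq_mul]
  have hker : Nat.card (V ⊓ φ.ker : AddSubgroup F) = p := by
    refine le_antisymm ((AddSubgroup.card_le_of_le inf_le_right).trans ?_) ?_
    · exact (natCard_ker_frobSubMul_le 1 _).trans_eq (pow_one p)
    · have : Finite V := Nat.finite_of_card_ne_zero (by simp [hV, hp.out.ne_zero])
      have : Finite (V ⊓ φ.ker : AddSubgroup F) :=
        Finite.of_injective _ (AddSubgroup.inclusion_injective inf_le_left)
      rw [← hγp]
      exact AddSubgroup.card_le_of_le (AddSubgroup.zmultiples_le.mpr ⟨hγV, hγφ⟩)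
  refine ⟨γ ^ (p - 1), pow_ne_zero _ hγ, ?_⟩
  have h := AddSubgroup.natCard_eq_natCard_inf_ker_mul_natCard_map φ V
  rw [hV, hker, pow_succ'] at h
  exact (Nat.eq_of_mul_eq_mul_left hp.out.pos h).symm

theorem exists_le_ker_frobSubMul (W : AddSubgroup F) (hW : Nat.card W = p) :
    ∃ b ≠ 0, W ≤ (frobSubMul p 1 b).ker := by
  obtain ⟨b, hb, h⟩ := exists_natCard_map_frobSubMul_eq W (k := 0) (by rw [hW, zero_add, pow_one])
  exact ⟨b, hb, (W.map_eq_bot_iff).mp (AddSubgroup.card_eq_one.mp (h.trans (pow_zero p)))⟩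

variable (F p) in
def fixedSubfield (n : ℕ) : Subfield F :=
  (iterateFrobenius F p n).eqLocusField (RingHom.id F)

theorem mem_fixedSubfield {n : ℕ} {x : F} : x ∈ fixedSubfield F p n ↔ x ^ p ^ n = x := by
  simp [fixedSubfield, RingHom.mem_eqLocusField, iterateFrobenius_def]

theorem smul_subfield_subset_ker {n : ℕ} {K : Subfield F} (hK : Nat.card K = p ^ n) (α : F) :
    α • (K : Set F) ⊆ (frobSubMul p n (α ^ (p ^ n - 1))).ker := by
  have : Finite K := Nat.finite_of_card_ne_zero (by simp [hK, hp.out.ne_zero])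
  rintro _ ⟨x, hx, rfl⟩
  dsimp only
  rw [SetLike.mem_coe, mem_ker_frobSubMul, smul_eq_mul, mul_pow, ← hK, K.pow_natCard_eq_self hx,
    hK, ← mul_assoc, ← pow_succ, Nat.sub_add_cancel (Nat.one_le_pow _ _ hp.out.pos)]

theorem coe_ker_frobSubMul_eq_smul_fixedSubfield {n : ℕ} {a α : F} (hα : α ≠ 0)
    (hαa : α ∈ (frobSubMul p n a).ker) :
    ((frobSubMul p n a).ker : Set F) = α • (fixedSubfield F p n : Set F) := by
  rw [mem_ker_frobSubMul] at hαa
  have ha : a ≠ 0 := left_ne_zero_of_mul (hαa ▸ pow_ne_zero _ hα)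
  ext y
  rw [Set.mem_smul_set_iff_inv_smul_mem₀ hα, SetLike.mem_coe, SetLike.mem_coe, mem_ker_frobSubMul,
    mem_fixedSubfield, smul_eq_mul, mul_pow, inv_pow, hαa]
  field_simp

theorem exists_smul_subfield_eq_ker {n : ℕ} [NeZero n] {a : F}
    (h : Nat.card (frobSubMul p n a).ker = p ^ n) :
    ∃ α : F, α ≠ 0 ∧ ∃ K : Subfield F, Nat.card K = p ^ n ∧
      ((frobSubMul p n a).ker : Set F) = α • (K : Set F) := by
  obtain ⟨α, hαa, hα⟩ :=
    AddSubgroup.exists_mem_ne_zero_of_one_lt_natCard (h ▸ one_lt_prime_pow p n)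
  have hK := coe_ker_frobSubMul_eq_smul_fixedSubfield hα hαa
  refine ⟨α, hα, fixedSubfield F p n, ?_, hK⟩
  rw [← h, ← SetLike.coe_sort_coe (frobSubMul p n a).ker, hK, Set.natCard_smul_set_of_ne_zero hα]
  rfl

end FrobSubMul

section AdditivePoly

variable {F : Type*} [Field F] {p : ℕ}

variable (p) in
noncomputable def additivePoly (d₁ d₂ d₃ : F) : F[X] :=
  X ^ p ^ 3 + C d₁ * X ^ p ^ 2 + C d₂ * X ^ p + C d₃ * X

@[simp]
theorem eval_additivePoly (d₁ d₂ d₃ x : F) :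
    (additivePoly p d₁ d₂ d₃).eval x = x ^ p ^ 3 + d₁ * x ^ p ^ 2 + d₂ * x ^ p + d₃ * x := by
  simp [additivePoly]

variable [hp : Fact p.Prime]

theorem one_lt_lt_pow_two_lt_pow_three : 1 < p ∧ p < p ^ 2 ∧ p ^ 2 < p ^ 3 := by
  have h := hp.out.one_lt
  exact ⟨h, by nlinarith, Nat.pow_lt_pow_right h (by norm_num)⟩

theorem coeff_additivePoly (d₁ d₂ d₃ : F) :
    (additivePoly p d₁ d₂ d₃).coeff (p ^ 3) = 1 ∧ (additivePoly p d₁ d₂ d₃).coeff (p ^ 2) = d₁ ∧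
      (additivePoly p d₁ d₂ d₃).coeff p = d₂ ∧ (additivePoly p d₁ d₂ d₃).coeff 1 = d₃ := by
  obtain ⟨h1, h2, h3⟩ := one_lt_lt_pow_two_lt_pow_three (p := p)
  simp only [additivePoly, coeff_add, coeff_C_mul, coeff_X_pow, coeff_X]
  refine ⟨?_, ?_, ?_, ?_⟩ <;> split_ifs <;> first | omega | simp

theorem additivePoly_monic_natDegree (d₁ d₂ d₃ : F) :
    (additivePoly p d₁ d₂ d₃).Monic ∧ (additivePoly p d₁ d₂ d₃).natDegree = p ^ 3 := by
  obtain ⟨h1, h2, h3⟩ := one_lt_lt_pow_two_lt_pow_three (p := p)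
  have hle : (additivePoly p d₁ d₂ d₃).natDegree ≤ p ^ 3 := by
    unfold additivePoly
    compute_degree
    all_goals omega
  have hdeg := natDegree_eq_of_le_of_coeff_ne_zero hle (by simp [(coeff_additivePoly d₁ d₂ d₃).1])
  exact ⟨by rw [Monic, leadingCoeff, hdeg, (coeff_additivePoly d₁ d₂ d₃).1], hdeg⟩

variable [CharP F p]

theorem frobSubMul_one_comp_three (a b c x : F) :
    frobSubMul p 1 c (frobSubMul p 1 b (frobSubMul p 1 a x)) =
      (additivePoly p (-((a ^ p + b) ^ p + c)) ((a * b) ^ p + c * (a ^ p + b))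
        (-(a * b * c))).eval x := by
  simp only [frobSubMul_apply, eval_additivePoly, pow_one, sub_pow_char, add_pow_char, mul_pow,
    ← pow_mul]
  ring

theorem frobSubMul_one_comp_two (a b x : F) :
    frobSubMul p 1 b (frobSubMul p 2 a x) = (additivePoly p (-b) (-a ^ p) (a * b)).eval x := by
  simp only [frobSubMul_apply, eval_additivePoly, pow_one, sub_pow_char, mul_pow, ← pow_mul]
  ring

theorem frobSubMul_one_comp_two_of_relation {d₁ d₂ d₃ : F} (hd₁ : d₁ ≠ 0)
    (h : d₁ ^ p * d₂ = d₃ ^ p) (x : F) :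
    frobSubMul p 1 (-d₁) (frobSubMul p 2 (-d₃ / d₁) x) = (additivePoly p d₁ d₂ d₃).eval x := by
  have hd₂ : -(-d₃ / d₁) ^ p = d₂ := by
    rw [div_pow, neg_pow d₃, neg_one_pow_char, ← h]
    field_simp
  have hd₃ : -d₃ / d₁ * -d₁ = d₃ := by
    field_simp
  rw [frobSubMul_one_comp_two, neg_neg, hd₂, hd₃]

end AdditivePoly

section SubspacePolynomial

variable {F : Type*} [Field F] {p : ℕ} [hp : Fact p.Prime]

theorem prod_X_sub_C_eq_additivePoly (V : AddSubgroup F) [Fintype V] (hV : Nat.card V = p ^ 3)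
    {d₁ d₂ d₃ : F} (h : ∀ x ∈ V, (additivePoly p d₁ d₂ d₃).eval x = 0) :
    ∏ c : V, (X - C (c : F)) = additivePoly p d₁ d₂ d₃ := by
  obtain ⟨hmonic, hdeg⟩ := additivePoly_monic_natDegree (p := p) d₁ d₂ d₃
  exact prod_X_sub_C_eq_of_monic Subtype.val_injective hmonic
    (by rw [hdeg, ← hV, Nat.card_eq_fintype_card]) fun c ↦ h c c.2

theorem dCoef_eq_of_forall_eval_additivePoly (V : AddSubgroup F) [Fintype V]
    (hV : Nat.card V = p ^ 3) {d₁ d₂ d₃ : F}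
    (h : ∀ x ∈ V, (additivePoly p d₁ d₂ d₃).eval x = 0) :
    dCoef p 3 1 V = d₁ ∧ dCoef p 3 2 V = d₂ ∧ dCoef p 3 3 V = d₃ := by
  obtain ⟨-, h₁, h₂, h₃⟩ := coeff_additivePoly (p := p) d₁ d₂ d₃
  simp only [dCoef, prod_X_sub_C_eq_additivePoly V hV h]
  exact ⟨h₁, by simpa using h₂, by simpa using h₃⟩

variable [CharP F p]

theorem exists_forall_eval_additivePoly_eq_zero (V : AddSubgroup F) (hV : Nat.card V = p ^ 3) :
    ∃ d₁ d₂ d₃ : F, d₃ ≠ 0 ∧ ∀ x ∈ V, (additivePoly p d₁ d₂ d₃).eval x = 0 := by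
  obtain ⟨a, ha, hV₁⟩ := exists_natCard_map_frobSubMul_eq V (k := 2) hV
  obtain ⟨b, hb, hV₂⟩ := exists_natCard_map_frobSubMul_eq _ (k := 1) hV₁
  obtain ⟨c, hc, hV₃⟩ := exists_le_ker_frobSubMul _ (hV₂.trans (pow_one p))
  refine ⟨_, _, _, neg_ne_zero.mpr (mul_ne_zero (mul_ne_zero ha hb) hc), fun x hx ↦
    (frobSubMul_one_comp_three a b c x).symm.trans (AddMonoidHom.mem_ker.mp ?_)⟩
  exact hV₃ (AddSubgroup.mem_map_of_mem _ (AddSubgroup.mem_map_of_mem _ hx))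

variable (V : AddSubgroup F) [Fintype V]

theorem prod_X_sub_C_eq_additivePoly_dCoef (hV : Nat.card V = p ^ 3) :
    ∏ c : V, (X - C (c : F)) =
      additivePoly p (dCoef p 3 1 V) (dCoef p 3 2 V) (dCoef p 3 3 V) := by
  obtain ⟨d₁, d₂, d₃, -, h⟩ := exists_forall_eval_additivePoly_eq_zero V hV
  obtain ⟨h₁, h₂, h₃⟩ := dCoef_eq_of_forall_eval_additivePoly V hV h
  rw [h₁, h₂, h₃, prod_X_sub_C_eq_additivePoly V hV h]

theorem dCoef_three_ne_zero (hV : Nat.card V = p ^ 3) : dCoef p 3 3 V ≠ 0 := by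
  obtain ⟨d₁, d₂, d₃, hd₃, h⟩ := exists_forall_eval_additivePoly_eq_zero V hV
  rwa [(dCoef_eq_of_forall_eval_additivePoly V hV h).2.2]

theorem mem_iff_eval_additivePoly_dCoef (hV : Nat.card V = p ^ 3) (x : F) :
    x ∈ V ↔ (additivePoly p (dCoef p 3 1 V) (dCoef p 3 2 V) (dCoef p 3 3 V)).eval x = 0 := by
  rw [← prod_X_sub_C_eq_additivePoly_dCoef V hV, eval_prod_X_sub_C_eq_zero_iff]

theorem dCoef_relation_of_smul_subfield_subset (hV : Nat.card V = p ^ 3) {α : F} (hα : α ≠ 0)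
    {K : Subfield F} (hK : Nat.card K = p ^ 2) (hKV : ∀ x ∈ K, α * x ∈ V) :
    dCoef p 3 1 V ^ p * dCoef p 3 2 V = dCoef p 3 3 V ^ p := by
  set a := α ^ (p ^ 2 - 1)
  set ψ := frobSubMul p 2 a
  have hαK : α • (K : Set F) ⊆ (V ⊓ ψ.ker : AddSubgroup F) := by
    rintro _ ⟨x, hx, rfl⟩
    exact ⟨hKV x hx, smul_subfield_subset_ker hK α ⟨x, hx, rfl⟩⟩
  have hker : Nat.card (V ⊓ ψ.ker : AddSubgroup F) = p ^ 2 := by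
    refine le_antisymm
      ((AddSubgroup.card_le_of_le inf_le_right).trans (natCard_ker_frobSubMul_le 2 a)) ?_
    calc p ^ 2 = Nat.card ↥(α • (K : Set F)) := by
          rw [Set.natCard_smul_set_of_ne_zero hα, ← hK]
          rfl
      _ ≤ _ := Nat.card_mono ((V : Set F).toFinite.subset inf_le_left) hαK
  have hmap : Nat.card (V.map ψ) = p := by
    have h := AddSubgroup.natCard_eq_natCard_inf_ker_mul_natCard_map ψ V
    rw [hV, hker, pow_succ] at h
    exact (Nat.eq_of_mul_eq_mul_left (pow_pos hp.out.pos 2) h).symm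
  obtain ⟨b, -, hb⟩ := exists_le_ker_frobSubMul _ hmap
  obtain ⟨h₁, h₂, h₃⟩ := dCoef_eq_of_forall_eval_additivePoly V hV fun x hx ↦
    (frobSubMul_one_comp_two a b x).symm.trans (hb (AddSubgroup.mem_map_of_mem ψ hx))
  rw [h₁, h₂, h₃, neg_pow, neg_one_pow_char, mul_pow]
  ring

theorem exists_smul_subfield_subset_of_dCoef_relation (hV : Nat.card V = p ^ 3)
    (h : dCoef p 3 1 V ^ p * dCoef p 3 2 V = dCoef p 3 3 V ^ p) :
    ∃ α : F, α ≠ 0 ∧ ∃ K : Subfield F, Nat.card K = p ^ 2 ∧ ∀ x ∈ K, α * x ∈ V := by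
  set d₁ := dCoef p 3 1 V
  set d₃ := dCoef p 3 3 V
  have hd₁ : d₁ ≠ 0 := by
    rintro h₀
    rw [h₀, zero_pow hp.out.ne_zero, zero_mul, eq_comm, pow_eq_zero_iff hp.out.ne_zero] at h
    exact dCoef_three_ne_zero V hV h
  set a := -d₃ / d₁
  set ψ := frobSubMul p 2 a
  have hmem (x : F) : x ∈ V ↔ frobSubMul p 1 (-d₁) (ψ x) = 0 := by
    rw [mem_iff_eval_additivePoly_dCoef V hV, frobSubMul_one_comp_two_of_relation hd₁ h]
  have hkerV : ψ.ker ≤ V := fun x hx ↦ (hmem x).mpr (by rw [AddMonoidHom.mem_ker.mp hx, map_zero])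
  have hmapV : V.map ψ ≤ (frobSubMul p 1 (-d₁)).ker := by
    rintro _ ⟨x, hx, rfl⟩
    exact (hmem x).mp hx
  have hker : Nat.card ψ.ker = p ^ 2 := by
    refine le_antisymm (natCard_ker_frobSubMul_le 2 a) (Nat.le_of_mul_le_mul_right ?_ hp.out.pos)
    calc p ^ 2 * p = Nat.card ψ.ker * Nat.card (V.map ψ) := by
          rw [← inf_eq_right.mpr hkerV, ← AddSubgroup.natCard_eq_natCard_inf_ker_mul_natCard_map,
            hV]
          ring
      _ ≤ Nat.card ψ.ker * p := Nat.mul_le_mul_left _ ((AddSubgroup.card_le_of_le hmapV).trans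
          ((natCard_ker_frobSubMul_le 1 _).trans_eq (pow_one p)))
  obtain ⟨α, hα, K, hK, hKψ⟩ := exists_smul_subfield_eq_ker hker
  refine ⟨α, hα, K, hK, fun x hx ↦ hkerV ?_⟩
  rw [← SetLike.mem_coe, hKψ]
  exact Set.smul_mem_smul_set hx

theorem dCoef_eq_zero_of_eq_smul_subfield (hV : Nat.card V = p ^ 3) {α : F} {K : Subfield F}
    (hK : Nat.card K = p ^ 3) (hVK : (V : Set F) = α • (K : Set F)) :
    dCoef p 3 1 V = 0 ∧ dCoef p 3 2 V = 0 := by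
  obtain ⟨h₁, h₂, -⟩ := dCoef_eq_of_forall_eval_additivePoly V hV
    (d₁ := 0) (d₂ := 0) (d₃ := -α ^ (p ^ 3 - 1)) fun x hx ↦ by
      have hx' : x ^ p ^ 3 = _ * x :=
        mem_ker_frobSubMul.mp (smul_subfield_subset_ker hK α (hVK ▸ hx))
      rw [eval_additivePoly, hx']
      ring
  exact ⟨h₁, h₂⟩

theorem exists_eq_smul_subfield_of_dCoef_eq_zero (hV : Nat.card V = p ^ 3)
    (h₁ : dCoef p 3 1 V = 0) (h₂ : dCoef p 3 2 V = 0) :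
    ∃ α : F, α ≠ 0 ∧ ∃ K : Subfield F, Nat.card K = p ^ 3 ∧ (V : Set F) = α • (K : Set F) := by
  have hVker : V = (frobSubMul p 3 (-dCoef p 3 3 V)).ker := by
    ext x
    rw [mem_iff_eval_additivePoly_dCoef V hV, h₁, h₂, eval_additivePoly, mem_ker_frobSubMul]
    constructor <;> intro hx <;> linear_combination hx
  have hker : Nat.card (frobSubMul p 3 (-dCoef p 3 3 V)).ker = p ^ 3 := by
    rw [← hVker, hV]
  obtain ⟨α, hα, K, hK, hKV⟩ := exists_smul_subfield_eq_ker hker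
  exact ⟨α, hα, K, hK, (congrArg _ hVker).trans hKV⟩

end SubspacePolynomial

end FieldDecomposition

/-- For a finite subgroup `V` of rank `3`:
(i) `V` contains a dilation of a subfield with `p²` elements (i.e. `λ(V) = (2,1)`)
iff `d_{1,3}(V)^p d_{2,3}(V) = d_{3,3}(V)^p`; and
(ii) `V` is a dilation of a subfield with `p³` elements (i.e. `λ(V) = (3)`) iff
`d_{1,3}(V) = 0` and `d_{2,3}(V) = 0`. -/
theorem statement13 {F : Type*} [Field F] {p : ℕ} [Fact p.Prime] [CharP F p]
    (V : AddSubgroup F) [Fintype V] (hV : Fintype.card V = p ^ 3) :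
    ((∃ α : F, α ≠ 0 ∧ ∃ K : Subfield F, Nat.card K = p ^ 2 ∧ ∀ x ∈ K, α * x ∈ V) ↔
      dCoef p 3 1 V ^ p * dCoef p 3 2 V = dCoef p 3 3 V ^ p) ∧
    ((∃ α : F, α ≠ 0 ∧ ∃ K : Subfield F, Nat.card K = p ^ 3 ∧
        (V : Set F) = α • (K : Set F)) ↔
      (dCoef p 3 1 V = 0 ∧ dCoef p 3 2 V = 0)) := by
  have hV' : Nat.card V = p ^ 3 := Nat.card_eq_fintype_card.trans hV
  refine ⟨⟨?_, FieldDecomposition.exists_smul_subfield_subset_of_dCoef_relation V hV'⟩, ⟨?_, ?_⟩⟩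
  · rintro ⟨α, hα, K, hK, hKV⟩
    exact FieldDecomposition.dCoef_relation_of_smul_subfield_subset V hV' hα hK hKV
  · rintro ⟨α, -, K, hK, hVK⟩
    exact FieldDecomposition.dCoef_eq_zero_of_eq_smul_subfield V hV' hK hVK
  · rintro ⟨h₁, h₂⟩
    exact FieldDecomposition.exists_eq_smul_subfield_of_dCoef_eq_zero V hV' h₁ h₂
end

section
/- Let p be a prime. A 4-tuple (a_1, a_2, a_3, a_4) of nonnegative integers satisfying a_1(p^4 − p^3) + a_2(p^4 − p^2) + a_3(p^4 − p) = a_4(p^4 − 1) is a nonzero primitive solution if and only if it belongs to the set S consisting of: the tuple (p^3+p^2+p+1, 0, 0, p^3); the tuples ((p+1)j, p^2+1−jp, 0, p^2) for integers 0 ≤ j ≤ p; and the tuples (i, j, p^3 + (1−i)p^2 + (1−i−j)(p+1), p^3 + (1−i)p^2 + (1−i−j)p) for integers 0 ≤ i ≤ p and 0 ≤ j ≤ p^2 − ip. In particular, every nonnegative integer solution of the equation is a finite sum of elements of S. -/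
/-- A nonnegative-integer solution of
`a₁(p⁴ - p³) + a₂(p⁴ - p²) + a₃(p⁴ - p) = a₄(p⁴ - 1)` (stated over `ℤ` with
nonnegativity constraints). -/
def Sol4 (p : ℕ) (a : ℤ × ℤ × ℤ × ℤ) : Prop :=
  0 ≤ a.1 ∧ 0 ≤ a.2.1 ∧ 0 ≤ a.2.2.1 ∧ 0 ≤ a.2.2.2 ∧
    a.1 * ((p : ℤ) ^ 4 - p ^ 3) + a.2.1 * ((p : ℤ) ^ 4 - p ^ 2) +
      a.2.2.1 * ((p : ℤ) ^ 4 - p) = a.2.2.2 * ((p : ℤ) ^ 4 - 1)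

namespace S14

/-- the special generator `u`. -/
def uT (p : ℕ) : ℤ × ℤ × ℤ × ℤ := ((p : ℤ) ^ 3 + (p:ℤ) ^ 2 + (p:ℤ) + 1, 0, 0, (p : ℤ) ^ 3)
/-- the generators `s j`. -/
def sT (p : ℕ) (j : ℤ) : ℤ × ℤ × ℤ × ℤ :=
  (((p : ℤ) + 1) * j, (p : ℤ) ^ 2 + 1 - j * (p:ℤ), 0, (p : ℤ) ^ 2)
/-- the generators `t i j`. -/
def tT (p : ℕ) (i j : ℤ) : ℤ × ℤ × ℤ × ℤ :=
  (i, j, (p : ℤ) ^ 3 + (1 - i) * (p:ℤ) ^ 2 + (1 - i - j) * ((p : ℤ) + 1),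
    (p : ℤ) ^ 3 + (1 - i) * (p:ℤ) ^ 2 + (1 - i - j) * (p:ℤ))

variable {p : ℕ}

lemma sol_def {a1 a2 a3 a4 : ℤ} :
    Sol4 p (a1, a2, a3, a4) ↔
      0 ≤ a1 ∧ 0 ≤ a2 ∧ 0 ≤ a3 ∧ 0 ≤ a4 ∧
        a1 * ((p : ℤ) ^ 4 - (p:ℤ) ^ 3) + a2 * ((p : ℤ) ^ 4 - (p:ℤ) ^ 2) +
          a3 * ((p : ℤ) ^ 4 - (p:ℤ)) = a4 * ((p : ℤ) ^ 4 - 1) := Iff.rfl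

lemma kN_eq (hp2 : 2 ≤ (p:ℤ)) {a1 a2 a3 a4 : ℤ} (h : Sol4 p (a1, a2, a3, a4)) :
    (a1 + a2 + a3 - a4) * ((p:ℤ)^3 + (p:ℤ)^2 + (p:ℤ) + 1)
      = a1 * ((p:ℤ)^2 + (p:ℤ) + 1) + a2 * ((p:ℤ) + 1) + a3 := by
  obtain ⟨-, -, -, -, heq⟩ := sol_def.mp h
  have hne : ((p:ℤ) - 1) ≠ 0 := by intro h'; linarith [sub_eq_zero.mp h']
  refine mul_left_cancel₀ hne ?_
  linear_combination heq

lemma a4_eq (hp2 : 2 ≤ (p:ℤ)) {a1 a2 a3 a4 : ℤ} (h : Sol4 p (a1, a2, a3, a4)) :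
    a4 = (p:ℤ) * ((a1 + a2 + a3 - a4) * ((p:ℤ)^2 + (p:ℤ) + 1) - a1 * ((p:ℤ) + 1) - a2) := by
  obtain ⟨-, -, -, -, heq⟩ := sol_def.mp h
  have hne : ((p:ℤ) - 1) ≠ 0 := by intro h'; linarith [sub_eq_zero.mp h']
  refine mul_left_cancel₀ hne ?_
  linear_combination -heq

lemma eq_zero_of_a4 (hp2 : 2 ≤ (p:ℤ)) {a1 a2 a3 a4 : ℤ} (h : Sol4 p (a1, a2, a3, a4))
    (h4 : a4 = 0) : a1 = 0 ∧ a2 = 0 ∧ a3 = 0 := by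
  obtain ⟨h1, h2, h3, -, heq⟩ := sol_def.mp h
  rw [h4, zero_mul] at heq
  have hp0 : (0:ℤ) < (p:ℤ) := by linarith
  have hq3 := mul_pos (pow_pos hp0 3) (show (0:ℤ) < (p:ℤ) - 1 by linarith)
  have hq2 := mul_pos (mul_pos (pow_pos hp0 2) (show (0:ℤ) < (p:ℤ) - 1 by linarith)) (show (0:ℤ) < (p:ℤ) + 1 by linarith)
  have hq1 := mul_pos hp0 (show (0:ℤ) < (p:ℤ)^3 - 1 by nlinarith [pow_pos hp0 3, pow_pos hp0 2])
  have c1 : (0:ℤ) < (p:ℤ)^4 - (p:ℤ)^3 := by nlinarith [hq3]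
  have c2 : (0:ℤ) < (p:ℤ)^4 - (p:ℤ)^2 := by nlinarith [hq2]
  have c3 : (0:ℤ) < (p:ℤ)^4 - (p:ℤ) := by nlinarith [hq1]
  have t1 : 0 ≤ a1 * ((p:ℤ)^4 - (p:ℤ)^3) := mul_nonneg h1 c1.le
  have t2 : 0 ≤ a2 * ((p:ℤ)^4 - (p:ℤ)^2) := mul_nonneg h2 c2.le
  have t3 : 0 ≤ a3 * ((p:ℤ)^4 - (p:ℤ)) := mul_nonneg h3 c3.le
  have e1 : a1 * ((p:ℤ)^4 - (p:ℤ)^3) = 0 := by linarith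
  have e2 : a2 * ((p:ℤ)^4 - (p:ℤ)^2) = 0 := by linarith
  have e3 : a3 * ((p:ℤ)^4 - (p:ℤ)) = 0 := by linarith
  exact ⟨(mul_eq_zero.mp e1).resolve_right c1.ne',
    (mul_eq_zero.mp e2).resolve_right c2.ne',
    (mul_eq_zero.mp e3).resolve_right c3.ne'⟩

lemma eq_zero_of_K (hp2 : 2 ≤ (p:ℤ)) {a1 a2 a3 a4 : ℤ} (h : Sol4 p (a1, a2, a3, a4))
    (hk : a1 + a2 + a3 - a4 ≤ 0) : a1 = 0 ∧ a2 = 0 ∧ a3 = 0 ∧ a4 = 0 := by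
  obtain ⟨h1, h2, h3, h4, -⟩ := sol_def.mp h
  have hk1 := kN_eq hp2 h
  have hN : (0:ℤ) < (p:ℤ)^3 + (p:ℤ)^2 + (p:ℤ) + 1 := by positivity
  have hc1 : (1:ℤ) ≤ (p:ℤ)^2 + (p:ℤ) + 1 := by nlinarith
  have hc2 : (1:ℤ) ≤ (p:ℤ) + 1 := by linarith
  have t1 : 0 ≤ a1 * ((p:ℤ)^2 + (p:ℤ) + 1) := mul_nonneg h1 (by linarith)
  have t2 : 0 ≤ a2 * ((p:ℤ) + 1) := mul_nonneg h2 (by linarith)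
  have hkN : (a1 + a2 + a3 - a4) * ((p:ℤ)^3 + (p:ℤ)^2 + (p:ℤ) + 1) ≤ 0 :=
    mul_nonpos_of_nonpos_of_nonneg hk hN.le
  have hz1 : a1 * ((p:ℤ)^2 + (p:ℤ) + 1) = 0 := by linarith
  have hz2 : a2 * ((p:ℤ) + 1) = 0 := by linarith
  have ha1 : a1 = 0 := (mul_eq_zero.mp hz1).resolve_right (by linarith)
  have ha2 : a2 = 0 := (mul_eq_zero.mp hz2).resolve_right (by linarith)
  have ha3 : a3 = 0 := by linarith
  refine ⟨ha1, ha2, ha3, ?_⟩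
  obtain ⟨-, -, -, -, heq⟩ := sol_def.mp h
  rw [ha1, ha2, ha3] at heq
  simp only [zero_mul, zero_add] at heq
  have : ((p:ℤ)^4 - 1) ≠ 0 := by nlinarith [pow_pos (show (0:ℤ) < (p:ℤ) by linarith) 4, pow_le_pow_left₀ (show (0:ℤ) ≤ 2 by norm_num) hp2 4]
  have := mul_eq_zero.mp heq.symm
  rcases this with h' | h'
  · exact h'
  · exact absurd h' this

lemma K_pos (hp2 : 2 ≤ (p:ℤ)) {a1 a2 a3 a4 : ℤ} (h : Sol4 p (a1, a2, a3, a4))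
    (h0 : ¬(a1 = 0 ∧ a2 = 0 ∧ a3 = 0 ∧ a4 = 0)) : 1 ≤ a1 + a2 + a3 - a4 := by
  by_contra hc
  push_neg at hc
  exact h0 (eq_zero_of_K hp2 h (by linarith))

lemma dvd_a3a1 (hp2 : 2 ≤ (p:ℤ)) {a1 a2 a3 a4 : ℤ} (h : Sol4 p (a1, a2, a3, a4)) :
    ((p:ℤ) + 1) ∣ a3 + a1 := by
  refine ⟨(a1 + a2 + a3 - a4) * ((p:ℤ)^2 + 1) - a1 * (p:ℤ) - a2, ?_⟩
  linear_combination -(kN_eq hp2 h)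

lemma sol_of_parts {a1 a2 a3 a4 g1 g2 g3 g4 : ℤ} (ha : Sol4 p (a1, a2, a3, a4))
    (hg : Sol4 p (g1, g2, g3, g4)) (h1 : g1 ≤ a1) (h2 : g2 ≤ a2) (h3 : g3 ≤ a3)
    (h4 : g4 ≤ a4) : Sol4 p (a1 - g1, a2 - g2, a3 - g3, a4 - g4) := by
  obtain ⟨-, -, -, -, hae⟩ := sol_def.mp ha
  obtain ⟨-, -, -, -, hge⟩ := sol_def.mp hg
  exact sol_def.mpr ⟨by linarith, by linarith, by linarith, by linarith,
    by linear_combination hae - hge⟩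


lemma sol_uT (hp2 : 2 ≤ (p:ℤ)) : Sol4 p (uT p) := by
  refine sol_def.mpr ⟨by positivity, le_refl _, le_refl _, by positivity, by ring⟩

lemma sol_sT (hp2 : 2 ≤ (p:ℤ)) {j : ℤ} (hj0 : 0 ≤ j) (hjp : j ≤ (p:ℤ)) :
    Sol4 p (sT p j) := by
  refine sol_def.mpr ⟨?_, ?_, le_refl _, by positivity, by ring⟩
  · have : (0:ℤ) ≤ (p:ℤ) + 1 := by linarith
    exact mul_nonneg this hj0
  · nlinarith [mul_le_mul_of_nonneg_left hjp (show (0:ℤ) ≤ (p:ℤ) by linarith)]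

lemma tT_ineqs (hp2 : 2 ≤ (p:ℤ)) {i j : ℤ} (hi0 : 0 ≤ i) (hip : i ≤ (p:ℤ))
    (hj0 : 0 ≤ j) (hjp : j ≤ (p:ℤ)^2 - i * (p:ℤ)) :
    (p:ℤ) + 1 - i ≤ (p:ℤ)^3 + (1 - i) * (p:ℤ)^2 + (1 - i - j) * ((p:ℤ) + 1) ∧
      (p:ℤ) * ((p:ℤ) + 1 - i) ≤ (p:ℤ)^3 + (1 - i) * (p:ℤ)^2 + (1 - i - j) * (p:ℤ) := by
  have h1 : (0:ℤ) ≤ ((p:ℤ)^2 - i * (p:ℤ) - j) * ((p:ℤ) + 1) :=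
    mul_nonneg (by linarith) (by linarith)
  have h2 : (0:ℤ) ≤ ((p:ℤ)^2 - i * (p:ℤ) - j) * (p:ℤ) :=
    mul_nonneg (by linarith) (by linarith)
  constructor
  · nlinarith [h1]
  · nlinarith [h2]

lemma sol_tT (hp2 : 2 ≤ (p:ℤ)) {i j : ℤ} (hi0 : 0 ≤ i) (hip : i ≤ (p:ℤ))
    (hj0 : 0 ≤ j) (hjp : j ≤ (p:ℤ)^2 - i * (p:ℤ)) : Sol4 p (tT p i j) := by
  obtain ⟨h1, h2⟩ := tT_ineqs hp2 hi0 hip hj0 hjp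
  have hP : (0:ℤ) ≤ (p:ℤ) := by linarith
  refine sol_def.mpr ⟨hi0, hj0, by linarith, ?_, by ring⟩
  have : (0:ℤ) ≤ (p:ℤ) * ((p:ℤ) + 1 - i) := mul_nonneg hP (by linarith)
  linarith

/-- every nonzero solution with `a3 = 0` has `a4 ≥ p²`. -/
lemma a4_big (hp2 : 2 ≤ (p:ℤ)) {b1 b2 b4 : ℤ} (h : Sol4 p (b1, b2, 0, b4))
    (h0 : ¬(b1 = 0 ∧ b2 = 0 ∧ b4 = 0)) : (p:ℤ)^2 ≤ b4 := by
  obtain ⟨hb1, hb2, -, hb4, heq⟩ := sol_def.mp h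
  have hpos : 1 ≤ b4 := by
    rcases lt_or_eq_of_le hb4 with h' | h'
    · linarith
    · obtain ⟨z1, z2, z3⟩ := eq_zero_of_a4 hp2 h h'.symm
      exact absurd ⟨z1, z2, h'.symm⟩ h0
  have hdvd : (p:ℤ)^2 ∣ b4 :=
    ⟨b1 * (p:ℤ) + b2 - (b1 + b2 - b4) * (p:ℤ)^2, by linear_combination heq⟩
  exact Int.le_of_dvd (by linarith) hdvd

/-- every nonzero solution with `a2 = a3 = 0` has `a1 ≥ p³+p²+p+1`. -/
lemma a1_big (hp2 : 2 ≤ (p:ℤ)) {b1 b4 : ℤ} (h : Sol4 p (b1, 0, 0, b4))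
    (h0 : ¬(b1 = 0 ∧ b4 = 0)) : (p:ℤ)^3 + (p:ℤ)^2 + (p:ℤ) + 1 ≤ b1 := by
  obtain ⟨hb1, -, -, hb4, heq⟩ := sol_def.mp h
  have hk := kN_eq hp2 h
  have hN : (0:ℤ) < (p:ℤ)^3 + (p:ℤ)^2 + (p:ℤ) + 1 := by positivity
  have hpos : 1 ≤ b1 := by
    rcases lt_or_eq_of_le hb1 with h' | h'
    · linarith
    · exfalso
      rw [← h'] at hk
      have hb40 : b4 = 0 := by
        have : (0 + 0 + 0 - b4) * ((p:ℤ)^3 + (p:ℤ)^2 + (p:ℤ) + 1) = 0 := by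
          rw [hk]; ring
        rcases mul_eq_zero.mp this with h'' | h''
        · linarith
        · linarith
      exact h0 ⟨h'.symm, hb40⟩
  have hdvd : ((p:ℤ)^3 + (p:ℤ)^2 + (p:ℤ) + 1) ∣ b1 :=
    ⟨b1 - (p:ℤ) * (b1 - b4), by linear_combination (p:ℤ) * hk⟩
  exact Int.le_of_dvd (by linarith) hdvd


lemma prim_u (hp2 : 2 ≤ (p:ℤ)) :
    ¬∃ b c : ℤ × ℤ × ℤ × ℤ, b ≠ 0 ∧ c ≠ 0 ∧ Sol4 p b ∧ Sol4 p c ∧ uT p = b + c := by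
  rintro ⟨⟨b1, b2, b3, b4⟩, ⟨c1, c2, c3, c4⟩, hb0, hc0, hb, hc, heq⟩
  have hcomp : (p:ℤ)^3 + (p:ℤ)^2 + (p:ℤ) + 1 = b1 + c1 ∧ (0:ℤ) = b2 + c2 ∧
      (0:ℤ) = b3 + c3 ∧ (p:ℤ)^3 = b4 + c4 := by
    simpa [uT, Prod.ext_iff] using heq
  obtain ⟨e1, e2, e3, e4⟩ := hcomp
  obtain ⟨hb1, hb2, hb3, hb4, -⟩ := sol_def.mp hb
  obtain ⟨hc1, hc2, hc3, hc4, -⟩ := sol_def.mp hc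
  have hb2z : b2 = 0 := by linarith
  have hb3z : b3 = 0 := by linarith
  have hc2z : c2 = 0 := by linarith
  have hc3z : c3 = 0 := by linarith
  rw [hb2z, hb3z] at hb
  rw [hc2z, hc3z] at hc
  have hbig1 : (p:ℤ)^3 + (p:ℤ)^2 + (p:ℤ) + 1 ≤ b1 := by
    refine a1_big hp2 hb ?_
    rintro ⟨z1, z4⟩
    exact hb0 (by simp [Prod.ext_iff, z1, z4, hb2z, hb3z])
  have hbig2 : (p:ℤ)^3 + (p:ℤ)^2 + (p:ℤ) + 1 ≤ c1 := by
    refine a1_big hp2 hc ?_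
    rintro ⟨z1, z4⟩
    exact hc0 (by simp [Prod.ext_iff, z1, z4, hc2z, hc3z])
  have : (0:ℤ) < (p:ℤ)^2 + (p:ℤ) + 1 := by positivity
  linarith

lemma prim_s (hp2 : 2 ≤ (p:ℤ)) {j : ℤ} (hj0 : 0 ≤ j) (hjp : j ≤ (p:ℤ)) :
    ¬∃ b c : ℤ × ℤ × ℤ × ℤ, b ≠ 0 ∧ c ≠ 0 ∧ Sol4 p b ∧ Sol4 p c ∧ sT p j = b + c := by
  rintro ⟨⟨b1, b2, b3, b4⟩, ⟨c1, c2, c3, c4⟩, hb0, hc0, hb, hc, heq⟩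
  have hcomp : ((p:ℤ) + 1) * j = b1 + c1 ∧ (p:ℤ)^2 + 1 - j * (p:ℤ) = b2 + c2 ∧
      (0:ℤ) = b3 + c3 ∧ (p:ℤ)^2 = b4 + c4 := by
    simpa [sT, Prod.ext_iff] using heq
  obtain ⟨e1, e2, e3, e4⟩ := hcomp
  obtain ⟨hb1, hb2, hb3, hb4, -⟩ := sol_def.mp hb
  obtain ⟨hc1, hc2, hc3, hc4, -⟩ := sol_def.mp hc
  have hb3z : b3 = 0 := by linarith
  have hc3z : c3 = 0 := by linarith
  rw [hb3z] at hb
  rw [hc3z] at hc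
  have hbig1 : (p:ℤ)^2 ≤ b4 := by
    refine a4_big hp2 hb ?_
    rintro ⟨z1, z2, z4⟩
    exact hb0 (by simp [Prod.ext_iff, z1, z2, z4, hb3z])
  have hbig2 : (p:ℤ)^2 ≤ c4 := by
    refine a4_big hp2 hc ?_
    rintro ⟨z1, z2, z4⟩
    exact hc0 (by simp [Prod.ext_iff, z1, z2, z4, hc3z])
  have : (0:ℤ) < (p:ℤ)^2 := by positivity
  linarith

lemma prim_t (hp2 : 2 ≤ (p:ℤ)) {i j : ℤ} :
    ¬∃ b c : ℤ × ℤ × ℤ × ℤ, b ≠ 0 ∧ c ≠ 0 ∧ Sol4 p b ∧ Sol4 p c ∧ tT p i j = b + c := by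
  rintro ⟨⟨b1, b2, b3, b4⟩, ⟨c1, c2, c3, c4⟩, hb0, hc0, hb, hc, heq⟩
  have hcomp : i = b1 + c1 ∧ j = b2 + c2 ∧
      (p:ℤ)^3 + (1 - i) * (p:ℤ)^2 + (1 - i - j) * ((p:ℤ) + 1) = b3 + c3 ∧
      (p:ℤ)^3 + (1 - i) * (p:ℤ)^2 + (1 - i - j) * (p:ℤ) = b4 + c4 := by
    simpa [tT, Prod.ext_iff] using heq
  obtain ⟨e1, e2, e3, e4⟩ := hcomp
  have hKb : 1 ≤ b1 + b2 + b3 - b4 := by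
    refine K_pos hp2 hb ?_
    rintro ⟨z1, z2, z3, z4⟩
    exact hb0 (by simp [Prod.ext_iff, z1, z2, z3, z4])
  have hKc : 1 ≤ c1 + c2 + c3 - c4 := by
    refine K_pos hp2 hc ?_
    rintro ⟨z1, z2, z3, z4⟩
    exact hc0 (by simp [Prod.ext_iff, z1, z2, z3, z4])
  have hKt : (b3 + c3) - (b4 + c4) = 1 - i - j := by rw [← e3, ← e4]; ring
  rw [e1, e2] at hKt
  linarith


set_option maxHeartbeats 2000000 in
lemma step (hp2 : 2 ≤ (p:ℤ)) {S : Set (ℤ × ℤ × ℤ × ℤ)}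
    (huS : uT p ∈ S)
    (hsS : ∀ j : ℤ, 0 ≤ j → j ≤ (p:ℤ) → sT p j ∈ S)
    (htS : ∀ i j : ℤ, 0 ≤ i → i ≤ (p:ℤ) → 0 ≤ j → j ≤ (p:ℤ)^2 - i * (p:ℤ) → tT p i j ∈ S)
    {a1 a2 a3 a4 : ℤ} (h : Sol4 p (a1, a2, a3, a4))
    (hne : ¬(a1 = 0 ∧ a2 = 0 ∧ a3 = 0 ∧ a4 = 0)) :
    ∃ g1 g2 g3 g4 : ℤ, (g1, g2, g3, g4) ∈ S ∧ Sol4 p (g1, g2, g3, g4) ∧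
      g1 ≤ a1 ∧ g2 ≤ a2 ∧ g3 ≤ a3 ∧ g4 ≤ a4 ∧ 1 ≤ g1 + g2 + g3 - g4 := by
  obtain ⟨h1, h2, h3, h4, heq⟩ := sol_def.mp h
  have hk := kN_eq hp2 h
  have hK1 : 1 ≤ a1 + a2 + a3 - a4 := K_pos hp2 h hne
  have hP0 : (0:ℤ) < (p:ℤ) := by linarith
  have hN : (0:ℤ) < (p:ℤ)^3 + (p:ℤ)^2 + (p:ℤ) + 1 := by positivity
  rcases eq_or_lt_of_le h3 with h3z | h3p
  · -- case a3 = 0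
    have h3z' : a3 = 0 := h3z.symm
    subst h3z'
    obtain ⟨m, hm⟩ : ((p:ℤ)+1) ∣ a1 := by simpa using dvd_a3a1 hp2 h
    have hm0 : 0 ≤ m := by
      by_contra hc
      push_neg at hc
      have : ((p:ℤ)+1) * m < 0 := mul_neg_of_pos_of_neg (by linarith) hc
      rw [← hm] at this
      linarith
    obtain ⟨w, hw4, hwval⟩ : ∃ w : ℤ, a4 = (p:ℤ)^2 * w ∧
        w = a1 * (p:ℤ) + a2 - (a1 + a2 - a4) * (p:ℤ)^2 :=
      ⟨_, by linear_combination heq, rfl⟩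
    have hw_eq : w = (a1 + a2 - a4) - m := by
      refine mul_left_cancel₀ (show ((p:ℤ)+1) ≠ 0 by positivity) ?_
      rw [hwval]
      linear_combination -hk - hm
    have ha4pos : 1 ≤ a4 := by
      rcases lt_or_eq_of_le h4 with h' | h'
      · linarith
      · obtain ⟨z1, z2, z3⟩ := eq_zero_of_a4 hp2 h h'.symm
        exact absurd ⟨z1, z2, rfl, h'.symm⟩ hne
    have hw1 : 1 ≤ w := by
      by_contra hc
      push_neg at hc
      have hPW : (p:ℤ)^2 * w ≤ 0 := mul_nonpos_of_nonneg_of_nonpos (by positivity) (by linarith)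
      rw [← hw4] at hPW
      linarith
    have ha2 : a2 = w * ((p:ℤ)^2 + 1) - m * (p:ℤ) := by
      linear_combination hw4 - hw_eq - hm
    rcases le_or_gt m (w * (p:ℤ)) with hmw | hmw
    · -- subtract sT (min m p)
      have hj0 : 0 ≤ min m (p:ℤ) := le_min hm0 (by linarith)
      have hjp : min m (p:ℤ) ≤ (p:ℤ) := min_le_right _ _
      refine ⟨((p:ℤ) + 1) * (min m (p:ℤ)), (p:ℤ)^2 + 1 - (min m (p:ℤ)) * (p:ℤ), 0, (p:ℤ)^2,
        hsS _ hj0 hjp, sol_sT hp2 hj0 hjp, ?_, ?_, le_refl _, ?_, ?_⟩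
      · rw [hm]
        exact mul_le_mul_of_nonneg_left (min_le_left _ _) (by linarith)
      · rcases le_total m (p:ℤ) with hmp | hmp
        · rw [min_eq_left hmp, ha2]
          have := mul_nonneg (show (0:ℤ) ≤ w - 1 by linarith)
            (show (0:ℤ) ≤ (p:ℤ)^2 + 1 by positivity)
          linarith [this]
        · rw [min_eq_right hmp]
          have e1 : (m - (p:ℤ)) * (p:ℤ) ≤ ((w - 1) * (p:ℤ)) * (p:ℤ) :=
            mul_le_mul_of_nonneg_right (by linarith) (le_of_lt hP0)
          nlinarith [e1, ha2, hw1]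
      · have := mul_nonneg (show (0:ℤ) ≤ (p:ℤ)^2 by positivity) (show (0:ℤ) ≤ w - 1 by linarith)
        linarith [hw4, this]
      · linarith [hj0]
    · -- subtract uT
      have hPw : (p:ℤ) ≤ w := by
        have e1 : (w * (p:ℤ) + 1) * (p:ℤ) ≤ m * (p:ℤ) :=
          mul_le_mul_of_nonneg_right (by linarith) hP0.le
        nlinarith [e1, ha2, h2]
      have hm2 : (p:ℤ)^2 + 1 ≤ m := by
        have := mul_le_mul_of_nonneg_right hPw hP0.le
        nlinarith [this]
      refine ⟨(p:ℤ)^3 + (p:ℤ)^2 + (p:ℤ) + 1, 0, 0, (p:ℤ)^3,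
        huS, sol_uT hp2, ?_, h2, le_refl _, ?_, ?_⟩
      · have := mul_le_mul_of_nonneg_left hm2 (show (0:ℤ) ≤ (p:ℤ) + 1 by linarith)
        nlinarith [hm, this]
      · have := mul_le_mul_of_nonneg_left hPw (show (0:ℤ) ≤ (p:ℤ)^2 by positivity)
        nlinarith [hw4, this]
      · nlinarith [pow_nonneg hP0.le 2]
  · -- case 0 < a3
    have ha4pos : 1 ≤ a4 := by
      rcases lt_or_eq_of_le h4 with h' | h'
      · linarith
      · obtain ⟨z1, z2, z3⟩ := eq_zero_of_a4 hp2 h h'.symm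
        exact absurd z3 (by linarith)
    obtain ⟨q, hq4, hqval⟩ : ∃ q : ℤ, a4 = (p:ℤ) * q ∧
        q = (a1 + a2 + a3 - a4) * ((p:ℤ)^2 + (p:ℤ) + 1) - a1 * ((p:ℤ) + 1) - a2 :=
      ⟨_, a4_eq hp2 h, rfl⟩
    have hq1 : 1 ≤ q := by
      by_contra hc
      push_neg at hc
      have hPq : (p:ℤ) * q ≤ 0 := mul_nonpos_of_nonneg_of_nonpos (le_of_lt hP0) (by linarith)
      rw [← hq4] at hPq
      linarith
    rcases le_or_gt (p:ℤ) a1 with hPa1 | ha1P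
    · -- subtract tT p p 0
      have hc1 : (0:ℤ) ≤ (p:ℤ) := le_of_lt hP0
      have hc2 : (0:ℤ) ≤ (p:ℤ)^2 - (p:ℤ) * (p:ℤ) := by nlinarith
      refine ⟨(p:ℤ), 0,
        (p:ℤ)^3 + (1 - (p:ℤ)) * (p:ℤ)^2 + (1 - (p:ℤ) - 0) * ((p:ℤ) + 1),
        (p:ℤ)^3 + (1 - (p:ℤ)) * (p:ℤ)^2 + (1 - (p:ℤ) - 0) * (p:ℤ),
        htS (p:ℤ) 0 hc1 (le_refl _) (le_refl _) hc2,
        sol_tT hp2 hc1 (le_refl _) (le_refl _) hc2, hPa1, h2, ?_, ?_, ?_⟩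
      · have e3 : (p:ℤ)^3 + (1 - (p:ℤ)) * (p:ℤ)^2 + (1 - (p:ℤ) - 0) * ((p:ℤ) + 1) = 1 := by
          ring
        rw [e3]
        linarith
      · have e4 : (p:ℤ)^3 + (1 - (p:ℤ)) * (p:ℤ)^2 + (1 - (p:ℤ) - 0) * (p:ℤ) = (p:ℤ) := by
          ring
        rw [e4, hq4]
        nlinarith
      · nlinarith
    · rcases le_or_gt a2 ((p:ℤ)^2 - a1 * (p:ℤ)) with ha2le | ha2gt
      · -- subtract tT p a1 a2
        refine ⟨a1, a2,
          (p:ℤ)^3 + (1 - a1) * (p:ℤ)^2 + (1 - a1 - a2) * ((p:ℤ) + 1),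
          (p:ℤ)^3 + (1 - a1) * (p:ℤ)^2 + (1 - a1 - a2) * (p:ℤ),
          htS a1 a2 h1 (by linarith) h2 ha2le,
          sol_tT hp2 h1 (by linarith) h2 ha2le, le_refl _, le_refl _, ?_, ?_, ?_⟩
        · have e3 : (p:ℤ)^3 + (1 - a1) * (p:ℤ)^2 + (1 - a1 - a2) * ((p:ℤ) + 1)
              = a3 - ((a1 + a2 + a3 - a4) - 1) * ((p:ℤ)^3 + (p:ℤ)^2 + (p:ℤ) + 1) := by
            linear_combination hk
          rw [e3]
          have := mul_nonneg (show (0:ℤ) ≤ (a1 + a2 + a3 - a4) - 1 by linarith) hN.le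
          linarith
        · have e4 : (p:ℤ)^3 + (1 - a1) * (p:ℤ)^2 + (1 - a1 - a2) * (p:ℤ)
              = a4 - ((a1 + a2 + a3 - a4) - 1) * ((p:ℤ) * ((p:ℤ)^2 + (p:ℤ) + 1)) := by
            linear_combination -(a4_eq hp2 h)
          rw [e4]
          have := mul_nonneg (show (0:ℤ) ≤ (a1 + a2 + a3 - a4) - 1 by linarith)
            (show (0:ℤ) ≤ (p:ℤ) * ((p:ℤ)^2 + (p:ℤ) + 1) by positivity)
          linarith
        · nlinarith
      · -- subtract tT p a1 (p^2 - a1*p)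
        have hj00 : (0:ℤ) ≤ (p:ℤ)^2 - a1 * (p:ℤ) := by
          nlinarith [mul_le_mul_of_nonneg_right (show a1 ≤ (p:ℤ) - 1 by linarith) (le_of_lt hP0)]
        refine ⟨a1, (p:ℤ)^2 - a1 * (p:ℤ),
          (p:ℤ)^3 + (1 - a1) * (p:ℤ)^2 + (1 - a1 - ((p:ℤ)^2 - a1 * (p:ℤ))) * ((p:ℤ) + 1),
          (p:ℤ)^3 + (1 - a1) * (p:ℤ)^2 + (1 - a1 - ((p:ℤ)^2 - a1 * (p:ℤ))) * (p:ℤ),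
          htS a1 _ h1 (by linarith) hj00 (le_refl _),
          sol_tT hp2 h1 (by linarith) hj00 (le_refl _), le_refl _, le_of_lt ha2gt, ?_, ?_, ?_⟩
        · have e3 : (p:ℤ)^3 + (1 - a1) * (p:ℤ)^2 + (1 - a1 - ((p:ℤ)^2 - a1 * (p:ℤ))) * ((p:ℤ) + 1)
              = (p:ℤ) + 1 - a1 := by ring
          rw [e3]
          have hdvd := dvd_a3a1 hp2 h
          have := Int.le_of_dvd (show (0:ℤ) < a3 + a1 by linarith) hdvd
          linarith
        · have e4 : (p:ℤ)^3 + (1 - a1) * (p:ℤ)^2 + (1 - a1 - ((p:ℤ)^2 - a1 * (p:ℤ))) * (p:ℤ)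
              = (p:ℤ) * ((p:ℤ) + 1 - a1) := by ring
          have hprod : ((p:ℤ)^2 - a1 * (p:ℤ) + 1) * ((p:ℤ) + 1) ≤ a2 * ((p:ℤ) + 1) :=
            mul_le_mul_of_nonneg_right (by linarith) (by linarith)
          have hk2 : 2 ≤ a1 + a2 + a3 - a4 := by
            by_contra hc
            push_neg at hc
            have hkle : (a1 + a2 + a3 - a4) * ((p:ℤ)^3 + (p:ℤ)^2 + (p:ℤ) + 1)
                ≤ 1 * ((p:ℤ)^3 + (p:ℤ)^2 + (p:ℤ) + 1) :=
              mul_le_mul_of_nonneg_right (by linarith) hN.le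
            rw [hk] at hkle
            nlinarith [hprod]
          have hqQ : q * ((p:ℤ) + 1)
              = (a1 + a2 + a3 - a4) * ((p:ℤ) * ((p:ℤ) + 1)) - a1 * (p:ℤ) + a3 := by
            rw [hqval]
            linear_combination hk
          have hq_ge : (p:ℤ) + 1 - a1 ≤ q := by
            by_contra hc
            push_neg at hc
            have h5 : q * ((p:ℤ) + 1) ≤ ((p:ℤ) - a1) * ((p:ℤ) + 1) :=
              mul_le_mul_of_nonneg_right (by linarith) (by linarith)
            have h6 : 0 ≤ ((a1 + a2 + a3 - a4) - 2) * ((p:ℤ) * ((p:ℤ) + 1)) :=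
              mul_nonneg (by linarith) (by positivity)
            nlinarith [hqQ, h5, h6]
          rw [e4, hq4]
          exact mul_le_mul_of_nonneg_left hq_ge hP0.le
        · nlinarith

end S14


set_option maxHeartbeats 1000000 in
/-- The nonzero primitive solutions of
`a₁(p⁴-p³) + a₂(p⁴-p²) + a₃(p⁴-p) = a₄(p⁴-1)` are exactly the tuples in `S`, and
every solution is a finite sum of elements of `S`. -/
theorem statement14 (p : ℕ) (hp : p.Prime) (S : Set (ℤ × ℤ × ℤ × ℤ))
    (hS : S = {((p : ℤ) ^ 3 + p ^ 2 + p + 1, 0, 0, (p : ℤ) ^ 3)} ∪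
      {x | ∃ j : ℤ, 0 ≤ j ∧ j ≤ (p : ℤ) ∧
        x = (((p : ℤ) + 1) * j, (p : ℤ) ^ 2 + 1 - j * p, 0, (p : ℤ) ^ 2)} ∪
      {x | ∃ i j : ℤ, 0 ≤ i ∧ i ≤ (p : ℤ) ∧ 0 ≤ j ∧ j ≤ (p : ℤ) ^ 2 - i * p ∧
        x = (i, j, (p : ℤ) ^ 3 + (1 - i) * p ^ 2 + (1 - i - j) * ((p : ℤ) + 1),
          (p : ℤ) ^ 3 + (1 - i) * p ^ 2 + (1 - i - j) * p)}) :
    (∀ a : ℤ × ℤ × ℤ × ℤ,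
      (a ≠ 0 ∧ Sol4 p a ∧
        ¬∃ b c : ℤ × ℤ × ℤ × ℤ, b ≠ 0 ∧ c ≠ 0 ∧ Sol4 p b ∧ Sol4 p c ∧ a = b + c) ↔
      a ∈ S) ∧
    (∀ a : ℤ × ℤ × ℤ × ℤ, Sol4 p a → a ∈ AddSubmonoid.closure S) := by
  have hp2 : (2:ℤ) ≤ (p:ℤ) := by exact_mod_cast hp.two_le
  have hP0 : (0:ℤ) < (p:ℤ) := by linarith
  have huS : S14.uT p ∈ S := by
    rw [hS]; exact Set.mem_union_left _ (Set.mem_union_left _ rfl)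
  have hsS : ∀ j : ℤ, 0 ≤ j → j ≤ (p:ℤ) → S14.sT p j ∈ S := by
    intro j h1 h2
    rw [hS]
    exact Set.mem_union_left _ (Set.mem_union_right _ ⟨j, h1, h2, rfl⟩)
  have htS : ∀ i j : ℤ, 0 ≤ i → i ≤ (p:ℤ) → 0 ≤ j → j ≤ (p:ℤ)^2 - i * (p:ℤ) →
      S14.tT p i j ∈ S := by
    intro i j h1 h2 h3 h4
    rw [hS]
    exact Set.mem_union_right _ ⟨i, j, h1, h2, h3, h4, rfl⟩
  have hSc : ∀ x, x ∈ S → x = S14.uT p ∨ (∃ j : ℤ, 0 ≤ j ∧ j ≤ (p:ℤ) ∧ x = S14.sT p j) ∨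
      (∃ i j : ℤ, 0 ≤ i ∧ i ≤ (p:ℤ) ∧ 0 ≤ j ∧ j ≤ (p:ℤ)^2 - i * (p:ℤ) ∧ x = S14.tT p i j) := by
    rw [hS]
    rintro x ((hx | hx) | hx)
    · exact Or.inl hx
    · obtain ⟨j, h1, h2, h3⟩ := hx
      exact Or.inr (Or.inl ⟨j, h1, h2, h3⟩)
    · obtain ⟨i, j, h1, h2, h3, h4, h5⟩ := hx
      exact Or.inr (Or.inr ⟨i, j, h1, h2, h3, h4, h5⟩)
  constructor
  · intro a
    constructor
    · rintro ⟨h0, hsol, hnd⟩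
      obtain ⟨a1, a2, a3, a4⟩ := a
      have hne : ¬(a1 = 0 ∧ a2 = 0 ∧ a3 = 0 ∧ a4 = 0) := by
        rintro ⟨z1, z2, z3, z4⟩
        exact h0 (by simp [Prod.ext_iff, z1, z2, z3, z4])
      obtain ⟨g1, g2, g3, g4, hgS, hgsol, hle1, hle2, hle3, hle4, hK⟩ :=
        S14.step hp2 huS hsS htS hsol hne
      by_cases hrz : a1 - g1 = 0 ∧ a2 - g2 = 0 ∧ a3 - g3 = 0 ∧ a4 - g4 = 0
      · have e1 : a1 = g1 := by linarith [hrz.1]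
        have e2 : a2 = g2 := by linarith [hrz.2.1]
        have e3 : a3 = g3 := by linarith [hrz.2.2.1]
        have e4 : a4 = g4 := by linarith [hrz.2.2.2]
        rw [e1, e2, e3, e4]
        exact hgS
      · exfalso
        apply hnd
        refine ⟨(g1, g2, g3, g4), (a1 - g1, a2 - g2, a3 - g3, a4 - g4), ?_, ?_, hgsol,
          S14.sol_of_parts hsol hgsol hle1 hle2 hle3 hle4, ?_⟩
        · intro hg0
          simp only [Prod.mk.injEq, Prod.mk_eq_zero] at hg0
          obtain ⟨z1, z2, z3, z4⟩ := hg0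
          linarith
        · intro hr0
          simp only [Prod.mk.injEq, Prod.mk_eq_zero] at hr0
          exact hrz hr0
        · simp only [Prod.mk_add_mk, Prod.mk.injEq]
          exact ⟨by ring, by ring, by ring, by ring⟩
    · intro haS
      rcases hSc a haS with h' | ⟨j, hj1, hj2, h'⟩ | ⟨i, j, hi1, hi2, hj1, hj2, h'⟩ <;> subst h'
      · refine ⟨?_, S14.sol_uT hp2, S14.prim_u hp2⟩
        intro h0
        simp only [S14.uT, Prod.mk.injEq, Prod.mk_eq_zero] at h0
        nlinarith [h0.1]
      · refine ⟨?_, S14.sol_sT hp2 hj1 hj2, S14.prim_s hp2 hj1 hj2⟩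
        intro h0
        simp only [S14.sT, Prod.mk.injEq, Prod.mk_eq_zero] at h0
        nlinarith [h0.2.2.2]
      · refine ⟨?_, S14.sol_tT hp2 hi1 hi2 hj1 hj2, S14.prim_t hp2⟩
        intro h0
        simp only [S14.tT, Prod.mk.injEq, Prod.mk_eq_zero] at h0
        obtain ⟨he1, he2⟩ := S14.tT_ineqs hp2 hi1 hi2 hj1 hj2
        nlinarith [h0.2.2.2, he2, mul_nonneg hP0.le (show (0:ℤ) ≤ (p:ℤ) + 1 - i by linarith)]
  · have main : ∀ n : ℕ, ∀ a1 a2 a3 a4 : ℤ, Sol4 p (a1, a2, a3, a4) →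
        (a1 + a2 + a3 - a4).toNat ≤ n → (a1, a2, a3, a4) ∈ AddSubmonoid.closure S := by
      intro n
      induction n with
      | zero =>
        intro a1 a2 a3 a4 hsol hn
        have hK0 : a1 + a2 + a3 - a4 ≤ 0 := by omega
        obtain ⟨z1, z2, z3, z4⟩ := S14.eq_zero_of_K hp2 hsol hK0
        have : (a1, a2, a3, a4) = (0 : ℤ × ℤ × ℤ × ℤ) := by
          simp [Prod.ext_iff, z1, z2, z3, z4]
        rw [this]
        exact zero_mem _
      | succ n ih =>
        intro a1 a2 a3 a4 hsol hn
        by_cases hz : a1 = 0 ∧ a2 = 0 ∧ a3 = 0 ∧ a4 = 0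
        · have : (a1, a2, a3, a4) = (0 : ℤ × ℤ × ℤ × ℤ) := by
            simp [Prod.ext_iff, hz.1, hz.2.1, hz.2.2.1, hz.2.2.2]
          rw [this]
          exact zero_mem _
        · obtain ⟨g1, g2, g3, g4, hgS, hgsol, hle1, hle2, hle3, hle4, hK⟩ :=
            S14.step hp2 huS hsS htS hsol hz
          have hrsol := S14.sol_of_parts hsol hgsol hle1 hle2 hle3 hle4
          have hKr : 0 ≤ (a1 - g1) + (a2 - g2) + (a3 - g3) - (a4 - g4) := by
            by_contra hc
            push_neg at hc
            obtain ⟨z1, z2, z3, z4⟩ := S14.eq_zero_of_K hp2 hrsol (le_of_lt hc)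
            omega
          have heq2 : (a1, a2, a3, a4) = ((g1, g2, g3, g4) : ℤ × ℤ × ℤ × ℤ)
              + (a1 - g1, a2 - g2, a3 - g3, a4 - g4) := by
            simp only [Prod.mk_add_mk, Prod.mk.injEq]
            exact ⟨by ring, by ring, by ring, by ring⟩
          rw [heq2]
          exact add_mem (AddSubmonoid.subset_closure hgS) (ih _ _ _ _ hrsol (by omega))
    intro a hsol
    obtain ⟨a1, a2, a3, a4⟩ := a
    exact main (a1 + a2 + a3 - a4).toNat a1 a2 a3 a4 hsol le_rfl
end

section
/- Let p be a prime. The nonnegative integer solutions (a_1, a_2, a_3, a_4, a_5) of the equation a_1 p^4 + a_2 p^3(p+1) + a_3 p^2(p^2+p+1) + a_4 p(p^3+p^2+p+1) = a_5(p^4+p^3+p^2+p+1) that satisfy a_1 + a_2 + a_3 + a_4 − a_5 = 1 (height one) and p·a_4 ≥ a_5 are precisely the tuples u_{ijk} = (i, j, k, c_{ijk} + 1 − i − j − k, c_{ijk}), where c_{ijk} := p^4 + (1−i)p^3 + (1−i−j)p^2 + (1−i−j−k)p, for integers i, j, k with 0 ≤ i ≤ p, 0 ≤ j ≤ p^2 −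 ip, and 0 ≤ k ≤ p^3 − ip^2 − jp. -/
/-- A nonnegative-integer solution of
`a₁p⁴ + a₂p³(p+1) + a₃p²(p²+p+1) + a₄p(p³+p²+p+1) = a₅(p⁴+p³+p²+p+1)`
(stated over `ℤ` with nonnegativity constraints). -/
def Sol5 (p : ℕ) (a : ℤ × ℤ × ℤ × ℤ × ℤ) : Prop :=
  0 ≤ a.1 ∧ 0 ≤ a.2.1 ∧ 0 ≤ a.2.2.1 ∧ 0 ≤ a.2.2.2.1 ∧ 0 ≤ a.2.2.2.2 ∧
    a.1 * (p : ℤ) ^ 4 + a.2.1 * ((p : ℤ) ^ 3 * ((p : ℤ) + 1)) +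
        a.2.2.1 * ((p : ℤ) ^ 2 * ((p : ℤ) ^ 2 + p + 1)) +
        a.2.2.2.1 * ((p : ℤ) * ((p : ℤ) ^ 3 + p ^ 2 + p + 1)) =
      a.2.2.2.2 * ((p : ℤ) ^ 4 + p ^ 3 + p ^ 2 + p + 1)

/-- the solutions of height one with `p a₄ ≥ a₅` are precisely the
tuples `u_{ijk} = (i, j, k, c_{ijk} + 1 - i - j - k, c_{ijk})` with
`c_{ijk} = p⁴ + (1-i)p³ + (1-i-j)p² + (1-i-j-k)p`, for `0 ≤ i ≤ p`,
`0 ≤ j ≤ p² - ip` and `0 ≤ k ≤ p³ - ip² - jp`. -/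
theorem statement18 (p : ℕ) (hp : p.Prime) (a : ℤ × ℤ × ℤ × ℤ × ℤ) :
    (Sol5 p a ∧ a.1 + a.2.1 + a.2.2.1 + a.2.2.2.1 - a.2.2.2.2 = 1 ∧
      (p : ℤ) * a.2.2.2.1 ≥ a.2.2.2.2) ↔
    ∃ i j k : ℤ, 0 ≤ i ∧ i ≤ (p : ℤ) ∧ 0 ≤ j ∧ j ≤ (p : ℤ) ^ 2 - i * p ∧
      0 ≤ k ∧ k ≤ (p : ℤ) ^ 3 - i * p ^ 2 - j * p ∧
      a = (i, j, k,
        ((p : ℤ) ^ 4 + (1 - i) * p ^ 3 + (1 - i - j) * p ^ 2 + (1 - i - j - k) * p) +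
          1 - i - j - k,
        (p : ℤ) ^ 4 + (1 - i) * p ^ 3 + (1 - i - j) * p ^ 2 + (1 - i - j - k) * p) := by
  obtain ⟨i, j, k, m, n⟩ := a
  have hq : (2 : ℤ) ≤ (p : ℤ) := by exact_mod_cast hp.two_le
  set q : ℤ := (p : ℤ) with hqdef
  constructor
  · rintro ⟨⟨hi, hj, hk, hm, hn, heq⟩, hH, hge⟩
    simp only at hi hj hk hm hn heq hH hge
    -- n is forced
    have hn' : n = q ^ 4 + (1 - i) * q ^ 3 + (1 - i - j) * q ^ 2 + (1 - i - j - k) * q := by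
      linear_combination (q * (q ^ 3 + q ^ 2 + q + 1)) * hH - heq
    have hm' : m = (q ^ 4 + (1 - i) * q ^ 3 + (1 - i - j) * q ^ 2 + (1 - i - j - k) * q)
        + 1 - i - j - k := by linarith
    -- q*m - n = q^2 * C
    have hC : 0 ≤ q ^ 3 - i * q ^ 2 - j * q - k := by
      have h1 : q ^ 2 * (q ^ 3 - i * q ^ 2 - j * q - k) = q * m - n := by
        rw [hm', hn']; ring
      nlinarith [hge, sq_nonneg q]
    have hB : 0 ≤ q ^ 2 - i * q - j := by nlinarith [hk, hC]
    have hA : 0 ≤ q - i := by nlinarith [hj, hB]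
    exact ⟨i, j, k, hi, by linarith, hj, by linarith, hk, by linarith,
      by rw [hm', hn']⟩
  · rintro ⟨x, y, z, hi, hA, hj, hB, hk, hC, h⟩
    simp only [Prod.mk.injEq] at h
    obtain ⟨rfl, rfl, rfl, rfl, rfl⟩ := h
    have hCq : 0 ≤ q ^ 3 - i * q ^ 2 - j * q - k := by linarith
    have hBq : 0 ≤ q ^ 2 - i * q - j := by linarith
    have hAq : 0 ≤ q - i := by linarith
    refine ⟨⟨hi, hj, hk, ?_, ?_, by ring⟩, by ring, ?_⟩
    · simp only
      nlinarith [mul_nonneg hCq (by linarith : (0:ℤ) ≤ q + 1)]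
    · simp only
      nlinarith [mul_nonneg hAq (by linarith : (0:ℤ) ≤ q),
        mul_nonneg hBq (by linarith : (0:ℤ) ≤ q),
        mul_nonneg hCq (by linarith : (0:ℤ) ≤ q)]
    · simp only
      nlinarith [mul_nonneg (mul_nonneg hCq (by linarith : (0:ℤ) ≤ q)) (by linarith : (0:ℤ) ≤ q)]
end
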